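/- arXiv:0712.4088 — 13 statements merged into one kernel-verified Lean document; each statement's English description precedes it below -/
import Mathlib

section
/- Let (λ_k)_{k≥1} be a nondecreasing sequence of nonnegative real numbers with λ_k → ∞, and for ρ ≥ 0 let R_ρ(z) = Σ_k (z−λ_k)_+^ρ (with R_0(z) the counting function #{k : λ_k ≤ z}). Then for every ρ ≥ 0, every δ > 0, every θ > 0, and every z > 0: R_ρ(z) ≤ [Γ(ρ+1)·Γ(δ+1)/Γ(ρ+δ+1)] · R_{ρ+δ}((1+θ)z) / (θz)^δ. -/
open MeasureTheory Real Filter Set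


lemma real_beta_identity {ρ δ : ℝ} (hρ : 0 ≤ ρ) (hδ : 0 < δ) :
    Gamma (ρ + 1) * Gamma (δ + 1) =
      Gamma (ρ + δ + 2) * ∫ t in (0:ℝ)..1, t ^ ρ * (1 - t) ^ δ := by
  have h := Complex.Gamma_mul_Gamma_eq_betaIntegral
    (s := (ρ:ℂ) + 1) (t := (δ:ℂ) + 1) (by simp; linarith) (by simp; linarith)
  have hbeta : Complex.betaIntegral ((ρ:ℂ) + 1) ((δ:ℂ) + 1)
      = ((∫ t in (0:ℝ)..1, t ^ ρ * (1 - t) ^ δ : ℝ) : ℂ) := by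
    rw [Complex.betaIntegral, ← intervalIntegral.integral_ofReal]
    apply intervalIntegral.integral_congr
    intro x hx
    rw [Set.uIcc_of_le (by norm_num : (0:ℝ) ≤ 1)] at hx
    obtain ⟨hx0, hx1⟩ := hx
    simp only []
    rw [Complex.ofReal_mul, Complex.ofReal_cpow hx0,
      Complex.ofReal_cpow (by linarith : (0:ℝ) ≤ 1 - x), Complex.ofReal_sub,
      Complex.ofReal_one, add_sub_cancel_right, add_sub_cancel_right]
  rw [hbeta] at h
  have h2 : (ρ:ℂ) + 1 + ((δ:ℂ) + 1) = ((ρ + δ + 2 : ℝ) : ℂ) := by push_cast; ring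
  rw [h2] at h
  have := h
  rw [show ((ρ:ℂ) + 1) = ((ρ + 1 : ℝ) : ℂ) by push_cast; ring,
      show ((δ:ℂ) + 1) = ((δ + 1 : ℝ) : ℂ) by push_cast; ring,
      Complex.Gamma_ofReal, Complex.Gamma_ofReal, Complex.Gamma_ofReal,
      ← Complex.ofReal_mul, ← Complex.ofReal_mul] at this
  exact_mod_cast this


lemma beta_cont {ρ δ : ℝ} (hρ : 0 ≤ ρ) (hδ : 0 ≤ δ) :
    Continuous (fun t : ℝ => t ^ ρ * (1 - t) ^ δ) :=
  (Real.continuous_rpow_const hρ).mul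
    ((Real.continuous_rpow_const hδ).comp (continuous_const.sub continuous_id))

lemma beta_integral_ge {ρ δ : ℝ} (hρ : 0 ≤ ρ) (hδ : 0 < δ) {c : ℝ}
    (hc0 : 0 < c) (hc1 : c < 1) :
    c ^ ρ * (1 - c) ^ δ / (ρ + δ + 1) ≤ ∫ t in (0:ℝ)..1, t ^ ρ * (1 - t) ^ δ := by
  set s := ρ + δ with hs
  have hspos : 0 < s := by positivity
  set M := c ^ ρ * (1 - c) ^ δ with hM
  have hMpos : 0 < M := by
    apply mul_pos (Real.rpow_pos_of_pos hc0 _) (Real.rpow_pos_of_pos (by linarith) _)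
  have hf := beta_cont hρ hδ.le
  have h1c : (0:ℝ) < 1 - c := by linarith
  -- lower bound on [0, c]
  have hA : M * c / (s + 1) ≤ ∫ t in (0:ℝ)..c, t ^ ρ * (1 - t) ^ δ := by
    have hpow1 : c ^ (s + 1) = c ^ s * c := by
      rw [Real.rpow_add hc0 s 1, Real.rpow_one]
    have hcs : c ^ s ≠ 0 := by positivity
    have hcalc : (∫ t in (0:ℝ)..c, M / c ^ s * t ^ s) = M * c / (s + 1) := by
      rw [intervalIntegral.integral_const_mul, integral_rpow (Or.inl (by linarith))]
      rw [Real.zero_rpow (by positivity), hpow1]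
      field_simp
      ring
    rw [← hcalc]
    apply intervalIntegral.integral_mono_on hc0.le
    · exact ((continuous_const.mul (Real.continuous_rpow_const hspos.le))).intervalIntegrable _ _
    · exact hf.intervalIntegrable _ _
    · intro t ht
      obtain ⟨ht0, htc⟩ := ht
      rcases eq_or_lt_of_le ht0 with h | htpos
      · rw [← h, Real.zero_rpow hspos.ne', mul_zero]
        positivity
      · have hexp : M / c ^ s * t ^ s = t ^ ρ * ((1 - c) * t / c) ^ δ := by
          rw [Real.div_rpow (by positivity) hc0.le,
            Real.mul_rpow (by linarith) htpos.le, hM,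
            show c ^ s = c ^ ρ * c ^ δ from Real.rpow_add hc0 ρ δ,
            show t ^ s = t ^ ρ * t ^ δ from Real.rpow_add htpos ρ δ]
          have h1 : c ^ ρ ≠ 0 := by positivity
          have h2 : c ^ δ ≠ 0 := by positivity
          field_simp
        rw [hexp]
        apply mul_le_mul_of_nonneg_left _ (by positivity)
        apply Real.rpow_le_rpow (by positivity) _ hδ.le
        rw [div_le_iff₀ hc0]
        nlinarith
  -- lower bound on [c, 1]
  have hB : M * (1 - c) / (s + 1) ≤ ∫ t in c..(1:ℝ), t ^ ρ * (1 - t) ^ δ := by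
    have hpow1 : (1 - c) ^ (s + 1) = (1 - c) ^ s * (1 - c) := by
      rw [Real.rpow_add h1c s 1, Real.rpow_one]
    have hcs : (1 - c) ^ s ≠ 0 := by positivity
    have hcalc : (∫ t in c..(1:ℝ), M / (1 - c) ^ s * (1 - t) ^ s)
        = M * (1 - c) / (s + 1) := by
      rw [intervalIntegral.integral_const_mul,
        intervalIntegral.integral_comp_sub_left (fun u => u ^ s) 1]
      norm_num
      rw [integral_rpow (Or.inl (by linarith))]
      rw [Real.zero_rpow (by positivity), hpow1]
      field_simp
      ring
    rw [← hcalc]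
    apply intervalIntegral.integral_mono_on hc1.le
    · exact (continuous_const.mul ((Real.continuous_rpow_const hspos.le).comp
        (continuous_const.sub continuous_id))).intervalIntegrable _ _
    · exact hf.intervalIntegrable _ _
    · intro t ht
      obtain ⟨htc, ht1⟩ := ht
      have htpos : 0 < t := lt_of_lt_of_le hc0 htc
      rcases eq_or_lt_of_le ht1 with h | htlt
      · rw [h, sub_self, Real.zero_rpow hspos.ne', mul_zero]
        positivity
      · have h1t : 0 < 1 - t := by linarith
        have hexp : M / (1 - c) ^ s * (1 - t) ^ s
            = (c * (1 - t) / (1 - c)) ^ ρ * (1 - t) ^ δ := by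
          rw [Real.div_rpow (by positivity) h1c.le,
            Real.mul_rpow hc0.le h1t.le, hM,
            show (1 - c) ^ s = (1 - c) ^ ρ * (1 - c) ^ δ from Real.rpow_add h1c ρ δ,
            show (1 - t) ^ s = (1 - t) ^ ρ * (1 - t) ^ δ from Real.rpow_add h1t ρ δ]
          have h1 : (1 - c) ^ ρ ≠ 0 := by positivity
          have h2 : (1 - c) ^ δ ≠ 0 := by positivity
          field_simp
        rw [hexp]
        apply mul_le_mul_of_nonneg_right _ (by positivity)
        apply Real.rpow_le_rpow (by positivity) _ hρ
        rw [div_le_iff₀ h1c]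
        nlinarith
  have hsplit : (∫ t in (0:ℝ)..1, t ^ ρ * (1 - t) ^ δ)
      = (∫ t in (0:ℝ)..c, t ^ ρ * (1 - t) ^ δ) + ∫ t in c..(1:ℝ), t ^ ρ * (1 - t) ^ δ :=
    (intervalIntegral.integral_add_adjacent_intervals (hf.intervalIntegrable _ _)
      (hf.intervalIntegrable _ _)).symm
  rw [hsplit]
  calc M / (s + 1) = M * c / (s + 1) + M * (1 - c) / (s + 1) := by ring
    _ ≤ _ := add_le_add hA hB



lemma key_pointwise {ρ δ : ℝ} (hρ : 0 ≤ ρ) (hδ : 0 < δ) {a b : ℝ}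
    (ha : 0 ≤ a) (hb : 0 < b) :
    a ^ ρ * b ^ δ * Gamma (ρ + δ + 1) ≤
      Gamma (ρ + 1) * Gamma (δ + 1) * (a + b) ^ (ρ + δ) := by
  have hGpos : 0 < Gamma (ρ + δ + 1) := Real.Gamma_pos_of_pos (by positivity)
  rcases eq_or_lt_of_le ha with rfl | ha'
  · rcases eq_or_lt_of_le hρ with rfl | hρ'
    · simp only [Real.rpow_zero, one_mul, zero_add, Real.Gamma_one]
      norm_num [mul_comm]
    · rw [Real.zero_rpow hρ'.ne', zero_mul, zero_mul]
      have h1 : 0 < Gamma (ρ + 1) := Real.Gamma_pos_of_pos (by linarith)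
      have h2 : 0 < Gamma (δ + 1) := Real.Gamma_pos_of_pos (by linarith)
      positivity
  · have hab : 0 < a + b := by linarith
    have hc0 : 0 < a / (a + b) := by positivity
    have hc1 : a / (a + b) < 1 := (div_lt_one hab).mpr (by linarith)
    have h1c : 1 - a / (a + b) = b / (a + b) := by field_simp; ring
    have hI := beta_integral_ge hρ hδ hc0 hc1
    rw [h1c] at hI
    rw [div_le_iff₀ (by positivity : (0:ℝ) < ρ + δ + 1)] at hI
    have hBe := real_beta_identity hρ hδ
    have hG2 : Gamma (ρ + δ + 2) = (ρ + δ + 1) * Gamma (ρ + δ + 1) := by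
      rw [show ρ + δ + 2 = (ρ + δ + 1) + 1 by ring,
        Real.Gamma_add_one (by positivity)]
    -- M * Γ(ρ+δ+1) ≤ Γ(ρ+1)Γ(δ+1)
    have hMle : (a / (a + b)) ^ ρ * (b / (a + b)) ^ δ * Gamma (ρ + δ + 1) ≤
        Gamma (ρ + 1) * Gamma (δ + 1) := by
      rw [hBe, hG2]
      nlinarith [hGpos]
    have hM : (a / (a + b)) ^ ρ * (b / (a + b)) ^ δ * (a + b) ^ (ρ + δ) =
        a ^ ρ * b ^ δ := by
      rw [Real.div_rpow ha hab.le, Real.div_rpow hb.le hab.le,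
        Real.rpow_add hab]
      have h1 : (a + b) ^ ρ ≠ 0 := by positivity
      have h2 : (a + b) ^ δ ≠ 0 := by positivity
      field_simp
    calc a ^ ρ * b ^ δ * Gamma (ρ + δ + 1)
        = ((a / (a + b)) ^ ρ * (b / (a + b)) ^ δ * Gamma (ρ + δ + 1)) *
            (a + b) ^ (ρ + δ) := by rw [← hM]; ring
      _ ≤ Gamma (ρ + 1) * Gamma (δ + 1) * (a + b) ^ (ρ + δ) :=
          mul_le_mul_of_nonneg_right hMle (Real.rpow_nonneg hab.le _)

/-- The Riesz mean of order `p` of the sequence `lam`: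
`R_p(z) = Σ_k (z - λ_k)_+^p`, with the convention that for `p = 0` it is the
counting function `#{k : λ_k ≤ z}`. -/
noncomputable def rieszMean (lam : ℕ → ℝ) (p z : ℝ) : ℝ :=
  ∑' k, if lam k ≤ z then (z - lam k) ^ p else 0

/-- For `ρ ≥ 0`, `δ > 0`, `θ > 0` and `z > 0`:
`R_ρ(z) ≤ [Γ(ρ+1)Γ(δ+1)/Γ(ρ+δ+1)] · R_{ρ+δ}((1+θ)z) / (θz)^δ`. -/
theorem riesz_mean_upper_shift (lam : ℕ → ℝ) (hmono : Monotone lam)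
    (hnonneg : ∀ k, 0 ≤ lam k) (htend : Tendsto lam atTop atTop)
    (ρ δ θ z : ℝ) (hρ : 0 ≤ ρ) (hδ : 0 < δ) (hθ : 0 < θ) (hz : 0 < z) :
    rieszMean lam ρ z ≤
      Gamma (ρ + 1) * Gamma (δ + 1) / Gamma (ρ + δ + 1) *
        rieszMean lam (ρ + δ) ((1 + θ) * z) / (θ * z) ^ δ := by
  have hGpos : 0 < Gamma (ρ + δ + 1) := Real.Gamma_pos_of_pos (by positivity)
  have hG1 : 0 < Gamma (ρ + 1) := Real.Gamma_pos_of_pos (by linarith)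
  have hG2 : 0 < Gamma (δ + 1) := Real.Gamma_pos_of_pos (by linarith)
  set Z := (1 + θ) * z with hZ
  have hzZ : z ≤ Z := by nlinarith
  set C := Gamma (ρ + 1) * Gamma (δ + 1) / Gamma (ρ + δ + 1) with hC
  have hCpos : 0 < C := by positivity
  have hX : (0:ℝ) < (θ * z) ^ δ := Real.rpow_pos_of_pos (by positivity) _
  set f : ℕ → ℝ := fun k => if lam k ≤ z then (z - lam k) ^ ρ else 0 with hf
  set g : ℕ → ℝ := fun k => if lam k ≤ Z then (Z - lam k) ^ (ρ + δ) else 0 with hg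
  obtain ⟨N, hN⟩ := eventually_atTop.mp (htend.eventually (eventually_gt_atTop Z))
  have hfsum : Summable f := by
    apply summable_of_ne_finset_zero (s := Finset.range N)
    intro k hk
    have : Z < lam k := hN k (le_of_not_gt fun h => hk (Finset.mem_range.mpr h))
    simp only [hf, if_neg (by linarith : ¬ lam k ≤ z)]
  have hgsum : Summable g := by
    apply summable_of_ne_finset_zero (s := Finset.range N)
    intro k hk
    have : Z < lam k := hN k (le_of_not_gt fun h => hk (Finset.mem_range.mpr h))
    simp only [hg, if_neg (by linarith : ¬ lam k ≤ Z)]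
  have hpt : ∀ k, f k ≤ C / (θ * z) ^ δ * g k := by
    intro k
    simp only [hf, hg]
    by_cases hk : lam k ≤ z
    · rw [if_pos hk, if_pos (le_trans hk hzZ)]
      rw [div_mul_eq_mul_div, le_div_iff₀ hX, hC, div_mul_eq_mul_div,
        le_div_iff₀ hGpos]
      have := key_pointwise hρ hδ (a := z - lam k) (b := θ * z)
        (by linarith) (by positivity)
      refine le_trans this (le_of_eq ?_)
      rw [show z - lam k + θ * z = Z - lam k by rw [hZ]; ring]
    · rw [if_neg hk]
      by_cases hk2 : lam k ≤ Z
      · rw [if_pos hk2]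
        have : (0:ℝ) ≤ (Z - lam k) ^ (ρ + δ) := Real.rpow_nonneg (by linarith) _
        positivity
      · rw [if_neg hk2]; simp
  calc rieszMean lam ρ z = ∑' k, f k := rfl
    _ ≤ ∑' k, C / (θ * z) ^ δ * g k :=
        Summable.tsum_le_tsum hpt hfsum (hgsum.mul_left _)
    _ = C / (θ * z) ^ δ * ∑' k, g k := tsum_mul_left
    _ = C * rieszMean lam (ρ + δ) Z / (θ * z) ^ δ := by
        rw [div_mul_eq_mul_div]; rfl
end

section
/- Let d be a positive integer, let (λ_k)_{k≥1} be a nondecreasing sequence of nonnegative real numbers with λ_k → ∞, and for ρ ≥ 0 let R_ρ(z) = Σ_k (z−λ_k)_+^ρ (with R_0(z) the counting function). Suppose there is a constant C > 0 such that R_1(z) ≤ C·z^{1+d/2} for all z ≥ 0. Then for every ρ with 0 ≤ ρ < 1 and every z > 0: R_ρ(z) ≤ K_{ρ,d} · Γ(1+ρ) · Γ(2−ρ) · C · z^{ρ+d/2}, where K_{ρ,d} = (1−ρ)^{−(1−ρ)} · (1+d/2)^{1+d/2} / (ρ+d/2)^{ρ+d/2}. -/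
open MeasureTheory Real Filter Set

lemma beta1 {ρ : ℝ} (h0 : 0 ≤ ρ) (h1 : ρ < 1) :
    ∫ s in (0:ℝ)..1, s ^ (-ρ) * (1 - s) ^ ρ = Gamma (1 - ρ) * Gamma (1 + ρ) := by
  have h1ρ : (0:ℝ) < 1 - ρ := by linarith
  have h2ρ : (0:ℝ) < 1 + ρ := by linarith
  have key := Complex.Gamma_mul_Gamma_eq_betaIntegral
    (s := ((1 - ρ : ℝ) : ℂ)) (t := ((1 + ρ : ℝ) : ℂ))
    (by simpa using h1ρ) (by simpa using h2ρ)
  have hsum : ((1 - ρ : ℝ) : ℂ) + ((1 + ρ : ℝ) : ℂ) = ((2:ℝ) : ℂ) := by push_cast; ring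
  rw [hsum] at key
  have hG2 : Complex.Gamma ((2:ℝ) : ℂ) = 1 := by
    rw [Complex.Gamma_ofReal, Real.Gamma_two, Complex.ofReal_one]
  rw [hG2, one_mul] at key
  have hβ : Complex.betaIntegral ((1 - ρ : ℝ) : ℂ) ((1 + ρ : ℝ) : ℂ)
      = ((∫ s in (0:ℝ)..1, s ^ (-ρ) * (1 - s) ^ ρ : ℝ) : ℂ) := by
    rw [Complex.betaIntegral]
    rw [show (((∫ s in (0:ℝ)..1, s ^ (-ρ) * (1 - s) ^ ρ : ℝ)) : ℂ)
        = ∫ x in (0:ℝ)..1, ((x ^ (-ρ) * (1 - x) ^ ρ : ℝ) : ℂ) from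
      (RCLike.intervalIntegral_ofReal).symm]
    refine intervalIntegral.integral_congr fun x hx => ?_
    rw [uIcc_of_le (by norm_num : (0:ℝ) ≤ 1)] at hx
    obtain ⟨hx0, hx1⟩ := hx
    have e1 : ((1 - ρ : ℝ) : ℂ) - 1 = ((-ρ : ℝ) : ℂ) := by push_cast; ring
    have e2 : ((1 + ρ : ℝ) : ℂ) - 1 = ((ρ : ℝ) : ℂ) := by push_cast; ring
    rw [e1, e2, ← Complex.ofReal_cpow hx0, ← Complex.ofReal_one, ← Complex.ofReal_sub,
      ← Complex.ofReal_cpow (by linarith), ← Complex.ofReal_mul]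
  rw [hβ, Complex.Gamma_ofReal, Complex.Gamma_ofReal, ← Complex.ofReal_mul] at key
  exact (Complex.ofReal_inj.mp key).symm

/-- integrability of the kernel -/
lemma Gint {ρ : ℝ} (h0 : 0 ≤ ρ) (h1 : ρ < 1) {x b : ℝ} (hx : 0 ≤ x) (hb : 0 ≤ b) :
    IntervalIntegrable (fun t => if t ≤ x then (x - t) ^ ρ * t ^ (-ρ) else 0)
      volume 0 b := by
  have hrpow : ∀ c : ℝ, 0 ≤ c → IntervalIntegrable
      (fun t : ℝ => (x - t) ^ ρ * t ^ (-ρ)) volume 0 c := fun c hc => by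
    have hint : IntervalIntegrable (fun t : ℝ => t ^ (-ρ)) volume 0 c :=
      intervalIntegral.intervalIntegrable_rpow' (by linarith)
    exact hint.continuousOn_mul
      (((continuous_const.sub continuous_id).rpow_const
        (fun t => Or.inr h0)).continuousOn)
  have smooth : ∀ c : ℝ, 0 ≤ c → c ≤ x → IntervalIntegrable
      (fun t => if t ≤ x then (x - t) ^ ρ * t ^ (-ρ) else 0) volume 0 c := by
    intro c hc hcx
    rw [intervalIntegrable_iff_integrableOn_Ioc_of_le hc]
    refine (((intervalIntegrable_iff_integrableOn_Ioc_of_le hc).mp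
      (hrpow c hc)).congr_fun (fun t ht => ?_) measurableSet_Ioc)
    rw [if_pos (le_trans ht.2 hcx)]
  rcases le_or_gt b x with hbx | hxb
  · exact smooth b hb hbx
  · refine (smooth x hx le_rfl).trans ?_
    rw [intervalIntegrable_iff_integrableOn_Ioc_of_le hxb.le]
    refine (integrableOn_zero (μ := volume)).congr_fun (fun t ht => ?_) measurableSet_Ioc
    rw [if_neg (not_le.mpr ht.1)]

lemma Gval {ρ : ℝ} (h0 : 0 ≤ ρ) (h1 : ρ < 1) {x b : ℝ} (hx : 0 ≤ x) (hb : 0 ≤ b) :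
    ∫ t in (0:ℝ)..b, (if t ≤ x then (x - t) ^ ρ * t ^ (-ρ) else 0)
      ≤ x * (Gamma (1 - ρ) * Gamma (1 + ρ)) := by
  have hBpos : 0 < Gamma (1 - ρ) * Gamma (1 + ρ) :=
    mul_pos (Gamma_pos_of_pos (by linarith)) (Gamma_pos_of_pos (by linarith))
  have key : ∫ t in (0:ℝ)..x, (if t ≤ x then (x - t) ^ ρ * t ^ (-ρ) else 0)
      = x * (Gamma (1 - ρ) * Gamma (1 + ρ)) := by
    have e1 : ∫ t in (0:ℝ)..x, (if t ≤ x then (x - t) ^ ρ * t ^ (-ρ) else 0)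
        = ∫ t in (0:ℝ)..x, (x - t) ^ ρ * t ^ (-ρ) := by
      refine intervalIntegral.integral_congr fun t ht => ?_
      rw [uIcc_of_le hx] at ht
      rw [if_pos ht.2]
    rw [e1]
    rcases eq_or_lt_of_le hx with rfl | hx'
    · simp
    · have subst := intervalIntegral.smul_integral_comp_mul_left
        (a := (0:ℝ)) (b := 1) (fun t : ℝ => (x - t) ^ ρ * t ^ (-ρ)) x
      rw [mul_zero, mul_one] at subst
      rw [← subst]
      have e2 : ∫ s in (0:ℝ)..1, (x - x * s) ^ ρ * (x * s) ^ (-ρ)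
          = ∫ s in (0:ℝ)..1, s ^ (-ρ) * (1 - s) ^ ρ := by
        refine intervalIntegral.integral_congr fun s hs => ?_
        rw [uIcc_of_le (by norm_num : (0:ℝ) ≤ 1)] at hs
        obtain ⟨hs0, hs1⟩ := hs
        have : x - x * s = x * (1 - s) := by ring
        rw [this, Real.mul_rpow hx (by linarith), Real.mul_rpow hx hs0]
        have : x ^ ρ * (1 - s) ^ ρ * (x ^ (-ρ) * s ^ (-ρ))
            = (x ^ ρ * x ^ (-ρ)) * (s ^ (-ρ) * (1 - s) ^ ρ) := by ring
        rw [this, ← Real.rpow_add hx', add_neg_cancel, Real.rpow_zero, one_mul]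
      rw [e2, beta1 h0 h1, smul_eq_mul]
  rcases le_or_gt b x with hbx | hxb
  · have split : (∫ t in (0:ℝ)..b, (if t ≤ x then (x - t) ^ ρ * t ^ (-ρ) else 0))
        + (∫ t in b..x, (if t ≤ x then (x - t) ^ ρ * t ^ (-ρ) else 0))
        = ∫ t in (0:ℝ)..x, (if t ≤ x then (x - t) ^ ρ * t ^ (-ρ) else 0) := by
      refine intervalIntegral.integral_add_adjacent_intervals (Gint h0 h1 hx hb) ?_
      exact (Gint h0 h1 hx hb).symm.trans (Gint h0 h1 hx hx)
    have hnn : 0 ≤ ∫ t in b..x, (if t ≤ x then (x - t) ^ ρ * t ^ (-ρ) else 0) := by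
      refine intervalIntegral.integral_nonneg hbx fun u hu => ?_
      split
      · exact mul_nonneg (Real.rpow_nonneg (by linarith [hu.2]) _)
          (Real.rpow_nonneg (le_trans hb hu.1) _)
      · exact le_rfl
    linarith [split, key]
  · have split : (∫ t in (0:ℝ)..x, (if t ≤ x then (x - t) ^ ρ * t ^ (-ρ) else 0))
        + (∫ t in x..b, (if t ≤ x then (x - t) ^ ρ * t ^ (-ρ) else 0))
        = ∫ t in (0:ℝ)..b, (if t ≤ x then (x - t) ^ ρ * t ^ (-ρ) else 0) := by
      refine intervalIntegral.integral_add_adjacent_intervals (Gint h0 h1 hx hx) ?_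
      exact (Gint h0 h1 hx hx).symm.trans (Gint h0 h1 hx hb)
    have hz : (∫ t in x..b, (if t ≤ x then (x - t) ^ ρ * t ^ (-ρ) else 0)) = 0 := by
      rw [intervalIntegral.integral_of_le hxb.le]
      refine MeasureTheory.setIntegral_eq_zero_of_forall_eq_zero fun t ht => ?_
      rw [if_neg (not_le.mpr ht.1)]
    linarith [split, key]

/-- Interpolation between Berezin–Li–Yau and Laptev–Weidl: if
`R_1(z) ≤ C z^{1+d/2}` for all `z ≥ 0`, then for `0 ≤ ρ < 1` and `z > 0`,
`R_ρ(z) ≤ K_{ρ,d} Γ(1+ρ) Γ(2-ρ) C z^{ρ+d/2}` where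
`K_{ρ,d} = (1-ρ)^{-(1-ρ)} (1+d/2)^{1+d/2} / (ρ+d/2)^{ρ+d/2}`. -/
theorem riesz_mean_interpolation (d : ℕ) (hd : 0 < d) (lam : ℕ → ℝ)
    (hmono : Monotone lam) (hnonneg : ∀ k, 0 ≤ lam k)
    (htend : Tendsto lam atTop atTop)
    (C : ℝ) (hC : 0 < C)
    (hBLY : ∀ z ≥ (0 : ℝ), rieszMean lam 1 z ≤ C * z ^ (1 + (d : ℝ) / 2))
    (ρ : ℝ) (hρ0 : 0 ≤ ρ) (hρ1 : ρ < 1) (z : ℝ) (hz : 0 < z) :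
    rieszMean lam ρ z ≤
      ((1 - ρ) ^ (-(1 - ρ)) * (1 + (d : ℝ) / 2) ^ (1 + (d : ℝ) / 2) /
          (ρ + (d : ℝ) / 2) ^ (ρ + (d : ℝ) / 2)) *
        Gamma (1 + ρ) * Gamma (2 - ρ) * C * z ^ (ρ + (d : ℝ) / 2) := by
  have hd' : (0:ℝ) < (d:ℝ) := Nat.cast_pos.mpr hd
  set D : ℝ := (d:ℝ)/2 with hDdef
  have hDpos : 0 < D := by positivity
  have hσ : 0 < ρ + D := by linarith
  set θ : ℝ := (1 - ρ)/(ρ + D) with hθdef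
  have hθ : 0 < θ := div_pos (by linarith) hσ
  set τ : ℝ := θ * z with hτdef
  have hτ : 0 < τ := mul_pos hθ hz
  set Z : ℝ := z + τ with hZdef
  have hzZ : z < Z := by linarith
  have hZ0 : 0 < Z := by linarith
  obtain ⟨N, hN⟩ := Filter.eventually_atTop.mp (htend.eventually_gt_atTop Z)
  have hfin : ∀ p s : ℝ, s ≤ Z → rieszMean lam p s
      = ∑ k ∈ Finset.range N, (if lam k ≤ s then (s - lam k) ^ p else 0) := by
    intro p s hs
    simp only [rieszMean]
    refine tsum_eq_sum fun k hk => ?_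
    have hkN : N ≤ k := Nat.le_of_not_lt (fun h => hk (Finset.mem_range.mpr h))
    exact if_neg (not_le.mpr (lt_of_le_of_lt hs (hN k hkN)))
  set F : ℕ → ℝ → ℝ :=
    fun k t => if t ≤ Z - lam k then (Z - lam k - t) ^ ρ * t ^ (-ρ) else 0 with hF
  have hBpos : 0 < Gamma (1 - ρ) * Gamma (1 + ρ) :=
    mul_pos (Gamma_pos_of_pos (by linarith)) (Gamma_pos_of_pos (by linarith))
  have hFint : ∀ k, IntervalIntegrable (F k) volume 0 τ := by
    intro k
    rcases le_or_gt (lam k) Z with hk | hk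
    · exact Gint hρ0 hρ1 (sub_nonneg.mpr hk) hτ.le
    · rw [intervalIntegrable_iff_integrableOn_Ioc_of_le hτ.le]
      refine (integrableOn_zero (μ := volume)).congr_fun (fun t ht => ?_) measurableSet_Ioc
      simp only [hF]
      rw [if_neg (not_le.mpr (by linarith [ht.1]))]
  have hFval : ∀ k, (∫ t in (0:ℝ)..τ, F k t)
      ≤ (Gamma (1 - ρ) * Gamma (1 + ρ)) *
        (if lam k ≤ Z then (Z - lam k) ^ (1:ℝ) else 0) := by
    intro k
    rcases le_or_gt (lam k) Z with hk | hk
    · rw [if_pos hk, Real.rpow_one, mul_comm]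
      exact Gval hρ0 hρ1 (sub_nonneg.mpr hk) hτ.le
    · rw [if_neg (not_le.mpr hk), mul_zero]
      refine le_of_eq ?_
      rw [intervalIntegral.integral_of_le hτ.le]
      refine MeasureTheory.setIntegral_eq_zero_of_forall_eq_zero fun t ht => ?_
      simp only [hF]
      rw [if_neg (not_le.mpr (by linarith [ht.1]))]
  have hRz : rieszMean lam ρ z
      = ∑ k ∈ Finset.range N, (if lam k ≤ z then (z - lam k) ^ ρ else 0) :=
    hfin ρ z hzZ.le
  have hmainL : (rieszMean lam ρ z) * (τ ^ (1 - ρ)/(1 - ρ))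
      ≤ ∫ t in (0:ℝ)..τ, ∑ k ∈ Finset.range N, F k t := by
    have hint1 : IntervalIntegrable
        (fun t : ℝ => (rieszMean lam ρ z) * t ^ (-ρ)) volume 0 τ :=
      (intervalIntegral.intervalIntegrable_rpow' (by linarith)).const_mul _
    have hintS : IntervalIntegrable
        (fun t => ∑ k ∈ Finset.range N, F k t) volume 0 τ := by
      have heq : (fun t => ∑ k ∈ Finset.range N, F k t)
          = ∑ k ∈ Finset.range N, F k := by ext t; simp
      rw [heq]
      exact IntervalIntegrable.sum (Finset.range N) (fun k _ => hFint k)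
    have hle : ∀ t ∈ Icc (0:ℝ) τ,
        (rieszMean lam ρ z) * t ^ (-ρ) ≤ ∑ k ∈ Finset.range N, F k t := by
      intro t ht
      rw [hRz, Finset.sum_mul]
      refine Finset.sum_le_sum fun k hk => ?_
      simp only [hF]
      by_cases hkz : lam k ≤ z
      · rw [if_pos hkz, if_pos (by nlinarith [ht.2] : t ≤ Z - lam k)]
        refine mul_le_mul_of_nonneg_right ?_ (Real.rpow_nonneg ht.1 _)
        exact Real.rpow_le_rpow (sub_nonneg.mpr hkz) (by nlinarith [ht.2]) hρ0
      · rw [if_neg hkz, zero_mul]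
        split
        · next h =>
            exact mul_nonneg (Real.rpow_nonneg (by linarith) _)
              (Real.rpow_nonneg ht.1 _)
        · exact le_rfl
    have hmono2 := intervalIntegral.integral_mono_on hτ.le hint1 hintS hle
    rw [intervalIntegral.integral_const_mul,
      integral_rpow (Or.inl (by linarith : (-1:ℝ) < -ρ)),
      Real.zero_rpow (by linarith : -ρ + 1 ≠ 0), sub_zero] at hmono2
    calc (rieszMean lam ρ z) * (τ ^ (1 - ρ)/(1 - ρ))
        = (rieszMean lam ρ z) * (τ ^ (-ρ + 1)/(-ρ + 1)) := by ring_nf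
      _ ≤ _ := hmono2
  have hmainR : (∫ t in (0:ℝ)..τ, ∑ k ∈ Finset.range N, F k t)
      ≤ (Gamma (1 - ρ) * Gamma (1 + ρ)) * (C * Z ^ (1 + D)) := by
    rw [intervalIntegral.integral_finset_sum (fun k _ => hFint k)]
    have h1 : ∑ k ∈ Finset.range N, ∫ t in (0:ℝ)..τ, F k t
        ≤ ∑ k ∈ Finset.range N, (Gamma (1 - ρ) * Gamma (1 + ρ)) *
            (if lam k ≤ Z then (Z - lam k) ^ (1:ℝ) else 0) :=
      Finset.sum_le_sum fun k _ => hFval k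
    rw [← Finset.mul_sum, ← hfin 1 Z le_rfl] at h1
    exact h1.trans (mul_le_mul_of_nonneg_left (hBLY Z hZ0.le) hBpos.le)
  have hcomb := hmainL.trans hmainR
  have hden : 0 < τ ^ (1 - ρ)/(1 - ρ) :=
    div_pos (Real.rpow_pos_of_pos hτ _) (by linarith)
  rw [← le_div_iff₀ hden] at hcomb
  refine hcomb.trans (le_of_eq ?_)
  have hZval : Z = (1 + D)/(ρ + D) * z := by
    rw [hZdef, hτdef, hθdef]; field_simp; ring
  have hτval : τ = (1 - ρ)/(ρ + D) * z := by rw [hτdef, hθdef]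
  have eZ : Z ^ (1 + D)
      = (1 + D) ^ (1 + D) / ((ρ + D) ^ (1 - ρ) * (ρ + D) ^ (ρ + D)) * z ^ (1 + D) := by
    rw [hZval, Real.mul_rpow (by positivity) hz.le,
      Real.div_rpow (by positivity) hσ.le, ← Real.rpow_add hσ,
      show (1 - ρ) + (ρ + D) = 1 + D by ring]
  have eτ : τ ^ (1 - ρ) = (1 - ρ) ^ (1 - ρ) / (ρ + D) ^ (1 - ρ) * z ^ (1 - ρ) := by
    rw [hτval, Real.mul_rpow (by positivity) hz.le,
      Real.div_rpow (by linarith) hσ.le]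
  have ez : z ^ (1 + D) = z ^ (1 - ρ) * z ^ (ρ + D) := by
    rw [← Real.rpow_add hz, show (1 - ρ) + (ρ + D) = 1 + D by ring]
  have eG : Gamma (2 - ρ) = (1 - ρ) * Gamma (1 - ρ) := by
    rw [show (2:ℝ) - ρ = (1 - ρ) + 1 by ring,
      Real.Gamma_add_one (by linarith : (1:ℝ) - ρ ≠ 0)]
  have eK : (1 - ρ) ^ (-(1 - ρ)) = ((1 - ρ) ^ (1 - ρ) : ℝ)⁻¹ := by
    rw [Real.rpow_neg (by linarith)]
  rw [eZ, eτ, ez, eG, eK]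
  have p1 : ((1 - ρ) ^ (1 - ρ) : ℝ) ≠ 0 := ne_of_gt (Real.rpow_pos_of_pos (by linarith) _)
  have p2 : ((ρ + D) ^ (1 - ρ) : ℝ) ≠ 0 := ne_of_gt (Real.rpow_pos_of_pos hσ _)
  have p3 : ((ρ + D) ^ (ρ + D) : ℝ) ≠ 0 := ne_of_gt (Real.rpow_pos_of_pos hσ _)
  have p4 : (z ^ (1 - ρ) : ℝ) ≠ 0 := ne_of_gt (Real.rpow_pos_of_pos hz _)
  have p5 : (1:ℝ) - ρ ≠ 0 := by linarith
  field_simp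
end

section
/- Let d be a positive integer and (λ_k)_{k≥1} a nondecreasing sequence of positive real numbers with λ_k → ∞. Suppose that for some ρ ≥ 1 and some constant C > 0 one has Σ_k (z−λ_k)_+^ρ ≤ C·z^{ρ+d/2} for all z ≥ 0. Then for every t > 0 the series Σ_k e^{−λ_k t} converges and Σ_k e^{−λ_k t} ≤ C · [Γ(ρ+1+d/2)/Γ(ρ+1)] · t^{−d/2}. -/
open MeasureTheory Real Filter Set
open scoped ENNReal NNReal

private lemma lint_univ_eq_Ioi (f : ℝ → ℝ≥0∞) (hf : ∀ z ≤ (0:ℝ), f z = 0) :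
    ∫⁻ z, f z = ∫⁻ z in Ioi (0:ℝ), f z := by
  rw [← lintegral_indicator measurableSet_Ioi]
  congr 1; ext z
  by_cases hz : z ∈ Ioi (0:ℝ)
  · simp [indicator_of_mem hz]
  · rw [indicator_of_notMem hz, hf z (by simpa using hz)]

/-- Kac's inequality from a Berezin–Li–Yau type bound: if for some `ρ ≥ 1` and `C > 0`
one has `Σ_k (z-λ_k)_+^ρ ≤ C z^{ρ+d/2}` for all `z ≥ 0`, then for every `t > 0`
the series `Σ_k e^{-λ_k t}` converges and
`Σ_k e^{-λ_k t} ≤ C · [Γ(ρ+1+d/2)/Γ(ρ+1)] · t^{-d/2}`. -/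
theorem kac_from_berezin_li_yau (d : ℕ) (hd : 0 < d) (lam : ℕ → ℝ)
    (hmono : Monotone lam) (hpos : ∀ k, 0 < lam k)
    (htend : Tendsto lam atTop atTop)
    (ρ C : ℝ) (hρ : 1 ≤ ρ) (hC : 0 < C)
    (h : ∀ z ≥ (0 : ℝ), ∑' k, (max (z - lam k) 0) ^ ρ ≤ C * z ^ (ρ + (d : ℝ) / 2))
    (t : ℝ) (ht : 0 < t) :
    Summable (fun k => Real.exp (-lam k * t)) ∧
      ∑' k, Real.exp (-lam k * t) ≤
        C * (Gamma (ρ + 1 + (d : ℝ) / 2) / Gamma (ρ + 1)) * t ^ (-(d : ℝ) / 2) := by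
  have hρ0 : (0:ℝ) < ρ := lt_of_lt_of_le one_pos hρ
  set α : ℝ := ρ + (d : ℝ) / 2 with hαdef
  have hd2 : (0:ℝ) < (d:ℝ)/2 := by positivity
  have hα0 : 0 < α := by positivity
  have hΓρ : 0 < Gamma (ρ+1) := Gamma_pos_of_pos (by linarith)
  have hΓα : 0 < Gamma (α+1) := Gamma_pos_of_pos (by linarith)
  -- the base integral values
  have hIval : ∫ z in Ioi (0:ℝ), z ^ ρ * exp (-(t * z)) = (1/t) ^ (ρ+1) * Gamma (ρ+1) := by
    have := Real.integral_rpow_mul_exp_neg_mul_Ioi (a := ρ + 1) (r := t) (by linarith) ht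
    simpa using this
  have hJval : ∫ z in Ioi (0:ℝ), z ^ α * exp (-(t * z)) = (1/t) ^ (α+1) * Gamma (α+1) := by
    have := Real.integral_rpow_mul_exp_neg_mul_Ioi (a := α + 1) (r := t) (by linarith) ht
    simpa using this
  -- integrability
  have hint : ∀ s : ℝ, 0 < s →
      IntegrableOn (fun z : ℝ => z ^ s * exp (-(t * z))) (Ioi 0) := by
    intro s hs
    have := integrableOn_rpow_mul_exp_neg_mul_rpow (p := 1) (s := s) (b := t)
      (by linarith) one_pos ht
    refine this.congr_fun (fun z hz => ?_) measurableSet_Ioi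
    beta_reduce; rw [Real.rpow_one, neg_mul]
  -- I : lintegral over ℝ of the basic profile
  set I : ℝ≥0∞ := ∫⁻ z : ℝ, ENNReal.ofReal ((max z 0) ^ ρ * exp (-(t * z))) with hIdef
  have hI : I = ENNReal.ofReal ((1/t) ^ (ρ+1) * Gamma (ρ+1)) := by
    rw [hIdef, lint_univ_eq_Ioi _ (fun z hz => by
      rw [max_eq_right hz, Real.zero_rpow (ne_of_gt hρ0), zero_mul, ENNReal.ofReal_zero])]
    rw [← hIval]
    rw [← MeasureTheory.ofReal_integral_eq_lintegral_ofReal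
      ((hint ρ hρ0).congr_fun (fun z hz => by
        rw [max_eq_left (le_of_lt hz)]) measurableSet_Ioi)
      (ae_of_all _ (fun z => by positivity))]
    congr 1
    refine setIntegral_congr_fun measurableSet_Ioi (fun z hz => ?_)
    rw [max_eq_left (le_of_lt hz)]
  -- per-k lintegral identity via translation invariance
  have key : ∀ l : ℝ, 0 ≤ l →
      ∫⁻ z : ℝ, ENNReal.ofReal ((max (z - l) 0) ^ ρ * exp (-(t * z)))
        = ENNReal.ofReal (exp (-(t * l))) * I := by
    intro l hl
    have htr := lintegral_add_right_eq_self (μ := volume)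
      (f := fun z : ℝ => ENNReal.ofReal ((max (z - l) 0) ^ ρ * exp (-(t * z)))) l
    rw [← htr]
    have heq : ∀ z : ℝ, ENNReal.ofReal ((max (z + l - l) 0) ^ ρ * exp (-(t * (z + l))))
        = ENNReal.ofReal (exp (-(t * l))) * ENNReal.ofReal ((max z 0) ^ ρ * exp (-(t * z))) := by
      intro z
      rw [add_sub_cancel_right, ← ENNReal.ofReal_mul (exp_nonneg _)]
      congr 1
      rw [mul_add, neg_add, Real.exp_add]; ring
    simp_rw [heq]
    rw [lintegral_const_mul' _ _ ENNReal.ofReal_ne_top, hIdef]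
  -- summability of the Riesz means at fixed z
  have hsumz : ∀ z : ℝ, Summable (fun k => (max (z - lam k) 0) ^ ρ) := by
    intro z
    obtain ⟨N, hN⟩ := eventually_atTop.mp (htend.eventually_ge_atTop z)
    refine summable_of_ne_finset_zero (s := Finset.range N) (fun k hk => ?_)
    have hzk : z ≤ lam k := hN k (by simpa [Finset.mem_range, not_lt] using hk)
    rw [max_eq_right (by linarith), Real.zero_rpow (ne_of_gt hρ0)]
  -- measurability
  have hmeas : ∀ l : ℝ, Measurable
      (fun z : ℝ => ENNReal.ofReal ((max (z - l) 0) ^ ρ * exp (-(t * z)))) := by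
    intro l
    apply Measurable.ennreal_ofReal
    apply Measurable.mul
    · exact (Real.continuous_rpow_const (le_of_lt hρ0)).measurable.comp
        ((continuous_id.sub continuous_const).max continuous_const).measurable
    · exact ((continuous_const.mul continuous_id).neg.rexp).measurable
  -- pointwise bound for z ≥ 0
  have hS : ∀ z : ℝ, 0 ≤ z →
      ∑' k, ENNReal.ofReal ((max (z - lam k) 0) ^ ρ * exp (-(t * z)))
        ≤ ENNReal.ofReal (C * z ^ α * exp (-(t * z))) := by
    intro z hz
    calc ∑' k, ENNReal.ofReal ((max (z - lam k) 0) ^ ρ * exp (-(t * z)))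
        = ∑' k, ENNReal.ofReal ((max (z - lam k) 0) ^ ρ) * ENNReal.ofReal (exp (-(t * z))) := by
          refine tsum_congr fun k => ?_
          rw [← ENNReal.ofReal_mul (by positivity)]
      _ = (∑' k, ENNReal.ofReal ((max (z - lam k) 0) ^ ρ)) * ENNReal.ofReal (exp (-(t * z))) :=
          ENNReal.tsum_mul_right
      _ ≤ ENNReal.ofReal (C * z ^ α) * ENNReal.ofReal (exp (-(t * z))) := by
          refine mul_le_mul_left ?_ _
          rw [← ENNReal.ofReal_tsum_of_nonneg (fun k => by positivity) (hsumz z)]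
          exact ENNReal.ofReal_le_ofReal (h z hz)
      _ = ENNReal.ofReal (C * z ^ α * exp (-(t * z))) := by
          rw [← ENNReal.ofReal_mul (mul_nonneg hC.le (Real.rpow_nonneg hz α))]
  -- main estimate
  have main : (∑' k, ENNReal.ofReal (exp (-(t * lam k)))) * I
      ≤ ENNReal.ofReal (C * ((1/t) ^ (α+1) * Gamma (α+1))) := by
    have h1 : (∑' k, ENNReal.ofReal (exp (-(t * lam k)))) * I
        = ∫⁻ z : ℝ, ∑' k, ENNReal.ofReal ((max (z - lam k) 0) ^ ρ * exp (-(t * z))) := by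
      rw [lintegral_tsum (fun k => (hmeas (lam k)).aemeasurable), ← ENNReal.tsum_mul_right]
      exact (tsum_congr fun k => (key (lam k) (hpos k).le)).symm
    have h0 : ∀ z ≤ (0:ℝ),
        ∑' k, ENNReal.ofReal ((max (z - lam k) 0) ^ ρ * exp (-(t * z))) = 0 := by
      intro z hz
      have hk : ∀ k : ℕ, ENNReal.ofReal ((max (z - lam k) 0) ^ ρ * exp (-(t * z))) = 0 := by
        intro k
        rw [max_eq_right (by linarith [hpos k]), Real.zero_rpow (ne_of_gt hρ0), zero_mul,
          ENNReal.ofReal_zero]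
      simp only [hk]; exact tsum_zero
    rw [h1, lint_univ_eq_Ioi _ h0]
    calc ∫⁻ z in Ioi (0:ℝ), ∑' k, ENNReal.ofReal ((max (z - lam k) 0) ^ ρ * exp (-(t * z)))
        ≤ ∫⁻ z in Ioi (0:ℝ), ENNReal.ofReal (C * z ^ α * exp (-(t * z))) :=
          setLIntegral_mono' measurableSet_Ioi fun z hz => hS z (le_of_lt hz)
      _ = ENNReal.ofReal (C * ((1/t) ^ (α+1) * Gamma (α+1))) := by
          rw [← MeasureTheory.ofReal_integral_eq_lintegral_ofReal
            (IntegrableOn.congr_fun ((hint α hα0).const_mul C) (fun z _ => by ring) measurableSet_Ioi)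
            ((ae_restrict_iff' measurableSet_Ioi).2 (ae_of_all _ (fun z hz =>
              mul_nonneg (mul_nonneg hC.le (Real.rpow_nonneg (le_of_lt hz) α))
                (exp_nonneg _))))]
          congr 1
          calc ∫ z in Ioi (0:ℝ), C * z ^ α * exp (-(t * z))
              = ∫ z in Ioi (0:ℝ), C * (z ^ α * exp (-(t * z))) := by simp_rw [mul_assoc]
            _ = C * ∫ z in Ioi (0:ℝ), z ^ α * exp (-(t * z)) := integral_const_mul _ _
            _ = C * ((1/t) ^ (α+1) * Gamma (α+1)) := by rw [hJval]
  -- extract summability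
  have hc : (0:ℝ) < (1/t) ^ (ρ+1) * Gamma (ρ+1) := by positivity
  have hIne0 : I ≠ 0 := by
    rw [hI]; exact (ENNReal.ofReal_pos.mpr hc).ne'
  have hfin : ∑' k, ENNReal.ofReal (exp (-(t * lam k))) ≠ ⊤ := by
    intro htop
    rw [htop, ENNReal.top_mul hIne0] at main
    exact ENNReal.ofReal_ne_top (top_le_iff.mp main)
  have hsummE : Summable (fun k => exp (-(t * lam k))) := by
    refine (ENNReal.summable_toReal hfin).congr fun k => ?_
    rw [ENNReal.toReal_ofReal (exp_nonneg _)]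
  have hexp : ∀ k, exp (-lam k * t) = exp (-(t * lam k)) := fun k => by ring_nf
  have hsumm : Summable (fun k => Real.exp (-lam k * t)) :=
    hsummE.congr fun k => (hexp k).symm
  refine ⟨hsumm, ?_⟩
  -- real inequality
  set S : ℝ := ∑' k, exp (-(t * lam k)) with hSdef
  have hStsum : ∑' k, Real.exp (-lam k * t) = S := tsum_congr hexp
  have hSnn : 0 ≤ S := tsum_nonneg fun k => exp_nonneg _
  have hofS : ∑' k, ENNReal.ofReal (exp (-(t * lam k))) = ENNReal.ofReal S :=
    (ENNReal.ofReal_tsum_of_nonneg (fun k => exp_nonneg _) hsummE).symm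
  rw [hofS, hI, ← ENNReal.ofReal_mul hSnn] at main
  have hreal : S * ((1/t) ^ (ρ+1) * Gamma (ρ+1)) ≤ C * ((1/t) ^ (α+1) * Gamma (α+1)) :=
    (ENNReal.ofReal_le_ofReal_iff (by positivity)).mp main
  -- algebra
  have h1t : ∀ x : ℝ, (1/t) ^ x = t ^ (-x) := fun x => by
    rw [one_div, Real.inv_rpow ht.le, Real.rpow_neg ht.le]
  have hmulpow : t ^ (-(d:ℝ)/2) * t ^ (-(ρ+1)) = t ^ (-(α+1)) := by
    rw [← Real.rpow_add ht]; congr 1; rw [hαdef]; ring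
  have hΓeq : Gamma (ρ + 1 + (d:ℝ)/2) = Gamma (α+1) := by
    congr 1; rw [hαdef]; ring
  rw [hStsum, hΓeq]
  rw [← mul_le_mul_iff_of_pos_right hc]
  calc S * ((1/t) ^ (ρ+1) * Gamma (ρ+1)) ≤ C * ((1/t) ^ (α+1) * Gamma (α+1)) := hreal
    _ = C * (Gamma (α+1) / Gamma (ρ+1)) * t ^ (-(d:ℝ)/2) * ((1/t) ^ (ρ+1) * Gamma (ρ+1)) := by
        rw [h1t (α+1), h1t (ρ+1), ← hmulpow]
        field_simp
end

section
/- Let d be a positive integer and (λ_k)_{k≥1} a nondecreasing sequence of positive real numbers with λ_k → ∞ such that Z(t) = Σ_k e^{−λ_k t} < ∞ for every t > 0. Assume Yang's inequality: for all z ≥ 0, Σ_k (z−λ_k)_+^2 ≤ (4/d) Σ_k λ_k (z−λ_k)_+. Then Z is differentiable on (0,∞) with Z′(t) = −Σ_k λ_k e^{−λ_k t}, and for every t > 0 the differential inequality Z(t) ≤ −(2/d)·t·Z′(t) holds. -/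
open MeasureTheory Real Filter Set

/-- Value of `∫_0^∞ u^n e^{-tu} du`. -/
private lemma gamma_int (n : ℕ) {t : ℝ} (ht : 0 < t) :
    ∫ u in Ioi (0:ℝ), u ^ n * Real.exp (-(t * u)) = (n.factorial : ℝ) / t ^ (n + 1) := by
  have h := Real.integral_rpow_mul_exp_neg_mul_Ioi (a := (n : ℝ) + 1) (by positivity) ht
  rw [show ((n : ℝ) + 1) - 1 = (n : ℝ) by ring] at h
  calc ∫ u in Ioi (0:ℝ), u ^ n * Real.exp (-(t * u))
      = ∫ u in Ioi (0:ℝ), u ^ (n : ℝ) * Real.exp (-(t * u)) := by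
        refine setIntegral_congr_fun measurableSet_Ioi (fun u hu => ?_)
        rw [Real.rpow_natCast]
    _ = (1 / t) ^ ((n : ℝ) + 1) * Real.Gamma ((n : ℝ) + 1) := h
    _ = (n.factorial : ℝ) / t ^ (n + 1) := by
        rw [Real.Gamma_nat_eq_factorial,
          show ((n : ℝ) + 1) = ((n + 1 : ℕ) : ℝ) by push_cast; ring,
          Real.rpow_natCast]
        rw [one_div, inv_pow]
        field_simp

/-- The translated ramp-power integrand is integrable on `(0,∞)` and its integral factors. -/
private lemma ramp_int_aux {n : ℕ} (hn : n ≠ 0) {c t : ℝ} (hc : 0 < c) (ht : 0 < t) :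
    IntegrableOn (fun z => (max (z - c) 0) ^ n * Real.exp (-z * t)) (Ioi (0:ℝ)) volume ∧
    ∫ z in Ioi (0:ℝ), (max (z - c) 0) ^ n * Real.exp (-z * t)
      = Real.exp (-c * t) * ((n.factorial : ℝ) / t ^ (n + 1)) := by
  set F : ℝ → ℝ := fun u => (max u 0) ^ n * Real.exp (-(t * u)) * Real.exp (-c * t) with hF
  have hFzero : ∀ u : ℝ, u ∉ Ioi (0:ℝ) → F u = 0 := by
    intro u hu
    simp only [mem_Ioi, not_lt] at hu
    simp [hF, max_eq_right hu, zero_pow hn]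
  have hgF : ∀ z : ℝ, (max (z - c) 0) ^ n * Real.exp (-z * t) = F (z - c) := by
    intro z
    simp only [hF]
    rw [mul_assoc, ← Real.exp_add]
    ring_nf
  have hFIoi : IntegrableOn F (Ioi (0:ℝ)) volume := by
    have h0 : IntegrableOn (fun u : ℝ => u ^ (n : ℝ) * Real.exp (-t * u ^ (1:ℝ)))
        (Ioi (0:ℝ)) volume :=
      integrableOn_rpow_mul_exp_neg_mul_rpow (lt_of_lt_of_le neg_one_lt_zero (Nat.cast_nonneg n)) zero_lt_one ht
    have h1 : IntegrableOn (fun u : ℝ => (max u 0) ^ n * Real.exp (-(t * u)))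
        (Ioi (0:ℝ)) volume := by
      refine h0.congr_fun (fun u hu => ?_) measurableSet_Ioi
      beta_reduce
      rw [Real.rpow_natCast, Real.rpow_one, max_eq_left (le_of_lt hu), neg_mul]
    exact h1.mul_const _
  have hFIic : IntegrableOn F (Iic (0:ℝ)) volume := by
    refine (integrableOn_zero (s := Iic (0:ℝ))).congr_fun (fun u hu => ?_) measurableSet_Iic
    exact (hFzero u (by simpa using hu)).symm
  have hFint : Integrable F volume := by
    rw [← integrableOn_univ, ← Iic_union_Ioi (a := (0:ℝ))]
    exact hFIic.union hFIoi
  have hshift : Integrable (fun z => F (z - c)) volume := hFint.comp_sub_right c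
  constructor
  · refine hshift.integrableOn.congr_fun (fun z _ => (hgF z).symm) measurableSet_Ioi
  · calc ∫ z in Ioi (0:ℝ), (max (z - c) 0) ^ n * Real.exp (-z * t)
        = ∫ z in Ioi (0:ℝ), F (z - c) := by
          exact setIntegral_congr_fun measurableSet_Ioi (fun z _ => hgF z)
      _ = ∫ z, F (z - c) := by
          refine setIntegral_eq_integral_of_forall_compl_eq_zero (fun z hz => ?_)
          refine hFzero _ ?_
          simp only [mem_Ioi, not_lt] at hz ⊢
          linarith
      _ = ∫ z, F z := by
          simp_rw [sub_eq_add_neg]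
          exact integral_add_right_eq_self F (-c)
      _ = ∫ z in Ioi (0:ℝ), F z := by
          exact (setIntegral_eq_integral_of_forall_compl_eq_zero hFzero).symm
      _ = (∫ z in Ioi (0:ℝ), (max z 0) ^ n * Real.exp (-(t * z))) * Real.exp (-c * t) := by
          simp only [hF]
          exact integral_mul_const _ _
      _ = Real.exp (-c * t) * ((n.factorial : ℝ) / t ^ (n + 1)) := by
          rw [mul_comm]
          congr 1
          rw [← gamma_int n ht]
          exact setIntegral_congr_fun measurableSet_Ioi
            (fun z hz => by rw [max_eq_left (le_of_lt hz)])

/-- From Yang's inequality `Σ_k (z-λ_k)_+² ≤ (4/d) Σ_k λ_k (z-λ_k)_+`, the partition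
function `Z(t) = Σ_k e^{-λ_k t}` is differentiable on `(0,∞)` with
`Z'(t) = -Σ_k λ_k e^{-λ_k t}`, and satisfies `Z(t) ≤ -(2/d) t Z'(t)`. -/
theorem partition_differential_inequality_from_yang (d : ℕ) (hd : 0 < d)
    (lam : ℕ → ℝ) (hmono : Monotone lam) (hpos : ∀ k, 0 < lam k)
    (htend : Tendsto lam atTop atTop)
    (hZ : ∀ t > (0 : ℝ), Summable fun k => Real.exp (-lam k * t))
    (hyang : ∀ z ≥ (0 : ℝ),
      ∑' k, (max (z - lam k) 0) ^ (2 : ℝ) ≤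
         4 / (d : ℝ) * ∑' k, lam k * max (z - lam k) 0)
    (t : ℝ) (ht : 0 < t) :
    HasDerivAt (fun s => ∑' k, Real.exp (-lam k * s))
        (-∑' k, lam k * Real.exp (-lam k * t)) t ∧
      ∑' k, Real.exp (-lam k * t) ≤
        -(2 / (d : ℝ)) * t * (-∑' k, lam k * Real.exp (-lam k * t)) := by
  have hd' : (0:ℝ) < (d:ℝ) := by exact_mod_cast hd
  -- summability of `λ_k e^{-λ_k s}`
  have hlamZ : ∀ s : ℝ, 0 < s → Summable (fun k => lam k * Real.exp (-lam k * s)) := by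
    intro s hs
    have hb : ∀ k, lam k * Real.exp (-lam k * s) ≤ (2/s) * Real.exp (-lam k * (s/2)) := by
      intro k
      have hx : lam k * (s/2) ≤ Real.exp (lam k * (s/2)) := by
        have := Real.add_one_le_exp (lam k * (s/2)); linarith
      have key : lam k * (s/2) * Real.exp (-lam k * (s/2)) ≤ 1 := by
        calc lam k * (s/2) * Real.exp (-lam k * (s/2))
            ≤ Real.exp (lam k * (s/2)) * Real.exp (-lam k * (s/2)) :=
              mul_le_mul_of_nonneg_right hx (Real.exp_pos _).le
          _ = 1 := by rw [← Real.exp_add]; ring_nf; exact Real.exp_zero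
      have h1 : lam k * Real.exp (-lam k * (s/2)) ≤ 2/s := by
        rw [le_div_iff₀ hs]
        calc lam k * Real.exp (-lam k * (s/2)) * s
            = 2 * (lam k * (s/2) * Real.exp (-lam k * (s/2))) := by ring
          _ ≤ 2 * 1 := by linarith
          _ = 2 := by ring
      have hsplit : Real.exp (-lam k * s)
          = Real.exp (-lam k * (s/2)) * Real.exp (-lam k * (s/2)) := by
        rw [← Real.exp_add]; ring_nf
      calc lam k * Real.exp (-lam k * s)
          = (lam k * Real.exp (-lam k * (s/2))) * Real.exp (-lam k * (s/2)) := by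
            rw [hsplit]; ring
        _ ≤ (2/s) * Real.exp (-lam k * (s/2)) :=
            mul_le_mul_of_nonneg_right h1 (Real.exp_pos _).le
    exact Summable.of_nonneg_of_le
      (fun k => mul_nonneg (hpos k).le (Real.exp_pos _).le) hb
      ((hZ (s/2) (by linarith)).mul_left (2/s))
  -- derivative
  have hderiv : HasDerivAt (fun s => ∑' k, Real.exp (-lam k * s))
      (-∑' k, lam k * Real.exp (-lam k * t)) t := by
    have h := hasDerivAt_tsum_of_isPreconnected
      (u := fun k => lam k * Real.exp (-lam k * (t/2)))
      (g := fun k s => Real.exp (-lam k * s))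
      (g' := fun k y => -(lam k * Real.exp (-lam k * y))) (y₀ := t)
      (hlamZ (t/2) (by linarith)) isOpen_Ioi (convex_Ioi (t/2)).isPreconnected
      (fun k y _ => by
        have hl : HasDerivAt (fun s : ℝ => -lam k * s) (-lam k) y := by
          simpa using (hasDerivAt_id y).const_mul (-lam k)
        have := hl.exp
        rw [show -(lam k * Real.exp (-lam k * y)) = Real.exp (-lam k * y) * -lam k by ring]
        exact this)
      (fun k y hy => by
        rw [norm_neg, Real.norm_eq_abs,
          abs_of_nonneg (mul_nonneg (hpos k).le (Real.exp_pos _).le)]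
        refine mul_le_mul_of_nonneg_left ?_ (hpos k).le
        exact Real.exp_le_exp.2 (by nlinarith [hpos k, mem_Ioi.1 hy]))
      (show t ∈ Ioi (t/2) from mem_Ioi.2 (by linarith)) (hZ t ht) (show t ∈ Ioi (t/2) from mem_Ioi.2 (by linarith))
    rw [← tsum_neg]
    exact h
  refine ⟨hderiv, ?_⟩
  -- finite support of ramp terms
  have hfin : ∀ z : ℝ, ∃ N, ∀ k, N ≤ k → max (z - lam k) 0 = 0 := by
    intro z
    obtain ⟨N, hN⟩ := eventually_atTop.1 (htend.eventually_ge_atTop z)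
    exact ⟨N, fun k hk => max_eq_right (by linarith [hN k hk])⟩
  have hsupp : ∀ (f : ℕ → ℝ) (N : ℕ), (∀ k, N ≤ k → f k = 0) → Summable f := by
    intro f N h
    exact summable_of_ne_finset_zero (s := Finset.range N)
      (fun k hk => h k (by simpa using hk))
  -- per-k integrals
  have hIg : ∀ k, IntegrableOn (fun z => (max (z - lam k) 0) ^ 2 * Real.exp (-z * t))
      (Ioi (0:ℝ)) volume ∧
      ∫ z in Ioi (0:ℝ), (max (z - lam k) 0) ^ 2 * Real.exp (-z * t)
        = Real.exp (-lam k * t) * (2 / t ^ 3) := by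
    intro k
    obtain ⟨h1, h2⟩ := ramp_int_aux (n := 2) two_ne_zero (hpos k) ht
    refine ⟨h1, ?_⟩
    rw [h2]; norm_num
  have hIh : ∀ k, IntegrableOn (fun z => (max (z - lam k) 0) ^ 1 * Real.exp (-z * t))
      (Ioi (0:ℝ)) volume ∧
      ∫ z in Ioi (0:ℝ), (max (z - lam k) 0) ^ 1 * Real.exp (-z * t)
        = Real.exp (-lam k * t) * (1 / t ^ 2) := by
    intro k
    obtain ⟨h1, h2⟩ := ramp_int_aux (n := 1) one_ne_zero (hpos k) ht
    refine ⟨h1, ?_⟩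
    rw [h2]; norm_num
  -- summability of the integrated series
  have hA : Summable (fun k => Real.exp (-lam k * t) * (2 / t ^ 3)) := (hZ t ht).mul_right _
  have hB : Summable (fun k => lam k * (Real.exp (-lam k * t) * (1 / t ^ 2))) := by
    have := (hlamZ t ht).mul_right (1 / t ^ 2)
    simpa [mul_assoc] using this
  have hBnn : ∀ k, 0 ≤ lam k * (Real.exp (-lam k * t) * (1 / t ^ 2)) := fun k =>
    mul_nonneg (hpos k).le (by positivity)
  -- the ENNReal chain
  have chain : ENNReal.ofReal (∑' k, Real.exp (-lam k * t) * (2 / t ^ 3))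
      ≤ ENNReal.ofReal (4 / (d:ℝ) * ∑' k, lam k * (Real.exp (-lam k * t) * (1 / t ^ 2))) := by
    have hmeasg : ∀ k : ℕ, AEMeasurable
        (fun z => ENNReal.ofReal ((max (z - lam k) 0) ^ 2 * Real.exp (-z * t)))
        (volume.restrict (Ioi (0:ℝ))) := by
      intro k
      apply Measurable.aemeasurable
      apply Measurable.ennreal_ofReal
      fun_prop
    have hmeash : ∀ k : ℕ, AEMeasurable
        (fun z => ENNReal.ofReal
          (4 / (d:ℝ) * (lam k * ((max (z - lam k) 0) ^ 1 * Real.exp (-z * t)))))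
        (volume.restrict (Ioi (0:ℝ))) := by
      intro k
      apply Measurable.aemeasurable
      apply Measurable.ennreal_ofReal
      fun_prop
    calc ENNReal.ofReal (∑' k, Real.exp (-lam k * t) * (2 / t ^ 3))
        = ∑' k, ENNReal.ofReal (Real.exp (-lam k * t) * (2 / t ^ 3)) :=
          ENNReal.ofReal_tsum_of_nonneg (fun k => by positivity) hA
      _ = ∑' k, ∫⁻ z in Ioi (0:ℝ),
            ENNReal.ofReal ((max (z - lam k) 0) ^ 2 * Real.exp (-z * t)) := by
          refine tsum_congr (fun k => ?_)
          rw [← (hIg k).2]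
          exact ofReal_integral_eq_lintegral_ofReal (hIg k).1
            (Eventually.of_forall (fun z =>
              mul_nonneg (pow_nonneg (le_max_right _ _) _) (Real.exp_pos _).le))
      _ = ∫⁻ z in Ioi (0:ℝ), ∑' k,
            ENNReal.ofReal ((max (z - lam k) 0) ^ 2 * Real.exp (-z * t)) :=
          (lintegral_tsum hmeasg).symm
      _ ≤ ∫⁻ z in Ioi (0:ℝ), ∑' k, ENNReal.ofReal
            (4 / (d:ℝ) * (lam k * ((max (z - lam k) 0) ^ 1 * Real.exp (-z * t)))) := by
          refine lintegral_mono_ae ?_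
          rw [ae_restrict_iff' measurableSet_Ioi]
          refine Eventually.of_forall (fun z hz => ?_)
          obtain ⟨N, hN⟩ := hfin z
          have hs1 : Summable (fun k => (max (z - lam k) 0) ^ 2 * Real.exp (-z * t)) :=
            hsupp _ N (fun k hk => by rw [hN k hk]; ring)
          have hs3 : Summable (fun k =>
              4 / (d:ℝ) * (lam k * ((max (z - lam k) 0) ^ 1 * Real.exp (-z * t)))) :=
            hsupp _ N (fun k hk => by rw [hN k hk]; ring)
          calc ∑' k, ENNReal.ofReal ((max (z - lam k) 0) ^ 2 * Real.exp (-z * t))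
              = ENNReal.ofReal (∑' k, (max (z - lam k) 0) ^ 2 * Real.exp (-z * t)) :=
                (ENNReal.ofReal_tsum_of_nonneg (fun k =>
                  mul_nonneg (pow_nonneg (le_max_right _ _) _) (Real.exp_pos _).le) hs1).symm
            _ ≤ ENNReal.ofReal (∑' k,
                  4 / (d:ℝ) * (lam k * ((max (z - lam k) 0) ^ 1 * Real.exp (-z * t)))) := by
                refine ENNReal.ofReal_le_ofReal ?_
                have hy := hyang z (le_of_lt (mem_Ioi.1 hz))
                rw [show (2:ℝ) = ((2:ℕ):ℝ) by norm_num] at hy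
                simp_rw [Real.rpow_natCast] at hy
                calc ∑' k, (max (z - lam k) 0) ^ 2 * Real.exp (-z * t)
                    = (∑' k, (max (z - lam k) 0) ^ 2) * Real.exp (-z * t) := tsum_mul_right
                  _ ≤ (4 / (d:ℝ) * ∑' k, lam k * max (z - lam k) 0) * Real.exp (-z * t) :=
                      mul_le_mul_of_nonneg_right hy (Real.exp_pos _).le
                  _ = ∑' k, 4 / (d:ℝ) * (lam k * ((max (z - lam k) 0) ^ 1
                        * Real.exp (-z * t))) := by
                      rw [← tsum_mul_left (a := 4 / (d:ℝ)), ← tsum_mul_right]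
                      refine tsum_congr (fun k => ?_)
                      ring
            _ = ∑' k, ENNReal.ofReal
                  (4 / (d:ℝ) * (lam k * ((max (z - lam k) 0) ^ 1 * Real.exp (-z * t)))) :=
                ENNReal.ofReal_tsum_of_nonneg (fun k => by
                  have := le_max_right (z - lam k) 0
                  have := (hpos k).le
                  have := (Real.exp_pos (-z * t)).le
                  positivity) hs3
      _ = ∑' k, ∫⁻ z in Ioi (0:ℝ), ENNReal.ofReal
            (4 / (d:ℝ) * (lam k * ((max (z - lam k) 0) ^ 1 * Real.exp (-z * t)))) :=
          lintegral_tsum hmeash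
      _ = ∑' k, ENNReal.ofReal
            (4 / (d:ℝ) * (lam k * (Real.exp (-lam k * t) * (1 / t ^ 2)))) := by
          refine tsum_congr (fun k => ?_)
          have hint : IntegrableOn (fun z =>
              4 / (d:ℝ) * (lam k * ((max (z - lam k) 0) ^ 1 * Real.exp (-z * t))))
              (Ioi (0:ℝ)) volume := ((hIh k).1.const_mul (lam k)).const_mul (4 / (d:ℝ))
          rw [← ofReal_integral_eq_lintegral_ofReal hint
            (Eventually.of_forall (fun z => by
              have := le_max_right (z - lam k) 0
              have := (hpos k).le
              have := (Real.exp_pos (-z * t)).le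
              positivity))]
          congr 1
          rw [integral_const_mul, integral_const_mul, (hIh k).2]
      _ = ENNReal.ofReal (∑' k,
            4 / (d:ℝ) * (lam k * (Real.exp (-lam k * t) * (1 / t ^ 2)))) :=
          (ENNReal.ofReal_tsum_of_nonneg (fun k => by
            have := hBnn k; positivity) (hB.mul_left _)).symm
      _ = ENNReal.ofReal (4 / (d:ℝ) * ∑' k,
            lam k * (Real.exp (-lam k * t) * (1 / t ^ 2))) := by
          rw [tsum_mul_left]
  -- extract the real inequality
  have hRHSnn : 0 ≤ 4 / (d:ℝ) * ∑' k, lam k * (Real.exp (-lam k * t) * (1 / t ^ 2)) :=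
    mul_nonneg (by positivity) (tsum_nonneg hBnn)
  have key : (∑' k, Real.exp (-lam k * t) * (2 / t ^ 3))
      ≤ 4 / (d:ℝ) * ∑' k, lam k * (Real.exp (-lam k * t) * (1 / t ^ 2)) :=
    (ENNReal.ofReal_le_ofReal_iff hRHSnn).1 chain
  have e1 : (∑' k, Real.exp (-lam k * t) * (2 / t ^ 3))
      = (∑' k, Real.exp (-lam k * t)) * (2 / t ^ 3) := tsum_mul_right
  have e2 : (∑' k, lam k * (Real.exp (-lam k * t) * (1 / t ^ 2)))
      = (∑' k, lam k * Real.exp (-lam k * t)) * (1 / t ^ 2) := by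
    simp_rw [← mul_assoc]
    exact tsum_mul_right
  rw [e1, e2] at key
  set Zt := ∑' k, Real.exp (-lam k * t)
  set S := ∑' k, lam k * Real.exp (-lam k * t)
  have hgoal : -(2 / (d:ℝ)) * t * (-S) = 2 / (d:ℝ) * t * S := by ring
  rw [hgoal]
  have ht3 : (0:ℝ) < t ^ 3 := by positivity
  have hmul := mul_le_mul_of_nonneg_left key (le_of_lt (mul_pos hd' ht3))
  have hL : (d:ℝ) * t ^ 3 * (Zt * (2 / t ^ 3)) = 2 * (d:ℝ) * Zt := by
    field_simp
  have hR : (d:ℝ) * t ^ 3 * (4 / (d:ℝ) * (S * (1 / t ^ 2))) = 4 * t * S := by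
    field_simp
  rw [hL, hR] at hmul
  have : Zt ≤ 2 * t * S / (d:ℝ) := by
    rw [le_div_iff₀ hd']; linarith
  calc Zt ≤ 2 * t * S / (d:ℝ) := this
    _ = 2 / (d:ℝ) * t * S := by ring
end

section
/- Let d be a positive integer and (λ_k)_{k≥1} a nondecreasing sequence of positive real numbers with λ_k → ∞ such that Z(t) = Σ_k e^{−λ_k t} < ∞ for every t > 0. Assume Yang's inequality: for all z ≥ 0, Σ_k (z−λ_k)_+^2 ≤ (4/d) Σ_k λ_k (z−λ_k)_+. Then the function t ↦ t^{d/2}·Z(t) is nonincreasing on (0,∞). -/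
open MeasureTheory Real Filter Set

private lemma shift_integral (f : ℝ → ℝ) (c : ℝ) :
    ∫ z in Ioi c, f z = ∫ u in Ioi (0:ℝ), f (u + c) := by
  have h := (measurePreserving_add_right (volume : Measure ℝ) c).setIntegral_image_emb
    (MeasurableEquiv.addRight c).measurableEmbedding f (Ioi 0)
  simpa [image_add_const_Ioi] using h

private lemma aux_integrable (n : ℕ) {t l : ℝ} (ht : 0 < t) (hl : 0 ≤ l) :
    IntegrableOn (fun z => max (z - l) 0 ^ n * Real.exp (-(t * z))) (Ioi (0:ℝ)) := by
  have hn1 : (-1:ℝ) < (n:ℝ) := lt_of_lt_of_le neg_one_lt_zero (Nat.cast_nonneg n)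
  have hbound : IntegrableOn (fun z : ℝ => z ^ n * Real.exp (-(t * z))) (Ioi (0:ℝ)) := by
    have h := integrableOn_rpow_mul_exp_neg_mul_rpow hn1 one_pos ht
    refine h.congr_fun (fun x hx => ?_) measurableSet_Ioi
    beta_reduce
    rw [rpow_one, rpow_natCast, neg_mul]
  refine hbound.mono' ?_ ?_
  · exact (Continuous.aestronglyMeasurable (by fun_prop))
  · filter_upwards [ae_restrict_mem measurableSet_Ioi] with z hz
    have h1 : (0:ℝ) ≤ max (z - l) 0 := le_max_right _ _
    have h2 : max (z - l) 0 ≤ z := max_le (by linarith [mem_Ioi.1 hz, hl]) (le_of_lt hz)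
    rw [Real.norm_eq_abs, abs_of_nonneg (by positivity)]
    exact mul_le_mul_of_nonneg_right (pow_le_pow_left₀ h1 h2 n) (exp_pos _).le

private lemma gamma_step (n : ℕ) {t : ℝ} (ht : 0 < t) :
    ∫ u in Ioi (0:ℝ), u ^ n * Real.exp (-(t * u)) = (Nat.factorial n : ℝ) / t ^ (n + 1) := by
  have hn1 : (-1:ℝ) < (n:ℝ) := lt_of_lt_of_le neg_one_lt_zero (Nat.cast_nonneg n)
  have h := integral_rpow_mul_exp_neg_mul_rpow one_pos hn1 ht
  rw [show (∫ x in Ioi (0:ℝ), x ^ (n:ℝ) * Real.exp (-t * x ^ (1:ℝ)))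
      = ∫ u in Ioi (0:ℝ), u ^ n * Real.exp (-(t * u)) from
    setIntegral_congr_fun measurableSet_Ioi fun x _ => by
      rw [rpow_one, rpow_natCast, neg_mul]] at h
  rw [h]
  rw [show (-((n:ℝ) + 1) / 1 : ℝ) = -(((n + 1 : ℕ) : ℝ)) by push_cast; ring,
    show (((n:ℝ) + 1) / 1 : ℝ) = (n:ℝ) + 1 by ring,
    Real.Gamma_nat_eq_factorial, Real.rpow_neg ht.le, Real.rpow_natCast]
  ring

private lemma aux_integral (n : ℕ) (hn : 0 < n) {t l : ℝ} (ht : 0 < t) (hl : 0 ≤ l) :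
    ∫ z in Ioi (0:ℝ), max (z - l) 0 ^ n * Real.exp (-(t * z))
      = Real.exp (-(l * t)) * ((Nat.factorial n : ℝ) / t ^ (n + 1)) := by
  have hint := aux_integrable n ht hl (l := l)
  rw [← Ioc_union_Ioi_eq_Ioi hl,
    setIntegral_union Ioc_disjoint_Ioi_same measurableSet_Ioi
      (hint.mono_set Ioc_subset_Ioi_self) (hint.mono_set (Ioi_subset_Ioi hl))]
  have h1 : ∫ z in Ioc (0:ℝ) l, max (z - l) 0 ^ n * Real.exp (-(t * z)) = 0 := by
    rw [setIntegral_congr_fun measurableSet_Ioc (g := fun _ => (0:ℝ))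
      (fun z hz => by
        rw [max_eq_right (by linarith [hz.2] : z - l ≤ 0), zero_pow hn.ne', zero_mul])]
    simp
  rw [h1, zero_add, shift_integral _ l,
    setIntegral_congr_fun measurableSet_Ioi
      (g := fun u => Real.exp (-(l * t)) * (u ^ n * Real.exp (-(t * u))))
      (fun u hu => by
        rw [add_sub_cancel_right, max_eq_left (le_of_lt hu),
          show -(t * (u + l)) = -(l * t) + -(t * u) by ring, Real.exp_add]
        ring),
    integral_const_mul, gamma_step n ht]

private lemma xexp_le {x s : ℝ} (hx : 0 ≤ x) (hs : 0 < s) :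
    x * Real.exp (-(x * s)) ≤ 1 / s := by
  have h1 : x * s ≤ Real.exp (x * s) := by
    have := Real.add_one_le_exp (x * s); linarith
  have h2 := Real.exp_pos (x * s)
  rw [Real.exp_neg, inv_eq_one_div, mul_one_div, div_le_div_iff₀ h2 hs]
  linarith

private lemma summable_W {lam : ℕ → ℝ} (hpos : ∀ k, 0 < lam k)
    (hZ : ∀ t > (0 : ℝ), Summable fun k => Real.exp (-(lam k * t)))
    {t : ℝ} (ht : 0 < t) :
    Summable fun k => lam k * Real.exp (-(lam k * t)) := by
  have h2 : (0:ℝ) < t / 2 := by positivity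
  refine Summable.of_nonneg_of_le
    (fun k => mul_nonneg (hpos k).le (Real.exp_pos _).le)
    (fun k => ?_) (((hZ (t/2) h2).mul_left (1 / (t/2))))
  have key : lam k * Real.exp (-(lam k * (t/2))) ≤ 1 / (t/2) :=
    xexp_le (hpos k).le h2
  calc lam k * Real.exp (-(lam k * t))
      = (lam k * Real.exp (-(lam k * (t/2)))) * Real.exp (-(lam k * (t/2))) := by
        rw [mul_assoc, ← Real.exp_add]; ring_nf
    _ ≤ (1 / (t/2)) * Real.exp (-(lam k * (t/2))) :=
        mul_le_mul_of_nonneg_right key (Real.exp_pos _).le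

private lemma hasDerivZ {lam : ℕ → ℝ} (hpos : ∀ k, 0 < lam k)
    (hZ : ∀ t > (0 : ℝ), Summable fun k => Real.exp (-(lam k * t)))
    {t : ℝ} (ht : 0 < t) :
    HasDerivAt (fun x => ∑' k, Real.exp (-(lam k * x)))
      (-∑' k, lam k * Real.exp (-(lam k * t))) t := by
  have h2 : (0:ℝ) < t / 2 := by positivity
  have hmem : t ∈ Ioi (t/2) := by simp [half_lt_self ht]
  have h := hasDerivAt_tsum_of_isPreconnected
    (summable_W hpos hZ h2) isOpen_Ioi isPreconnected_Ioi
    (g := fun k y => Real.exp (-(lam k * y)))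
    (g' := fun k y => Real.exp (-(lam k * y)) * -(lam k))
    (fun k y _ => by
      have hb : HasDerivAt (fun y : ℝ => -(lam k * y)) (-(lam k)) y := by
        simpa [Pi.neg_def] using ((hasDerivAt_id y).const_mul (lam k)).neg
      exact hb.exp)
    (fun k y hy => by
      rw [norm_mul, norm_neg, Real.norm_eq_abs, Real.norm_eq_abs,
        abs_of_pos (Real.exp_pos _), abs_of_pos (hpos k), mul_comm]
      exact mul_le_mul_of_nonneg_left
        (Real.exp_le_exp.2 (neg_le_neg (mul_le_mul_of_nonneg_left
          (le_of_lt (mem_Ioi.1 hy)) (hpos k).le))) (hpos k).le)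
    hmem (hZ t ht) hmem
  refine h.congr_deriv ?_
  rw [← tsum_neg]
  exact tsum_congr fun k => by ring

private lemma finSupp {lam : ℕ → ℝ} (htend : Tendsto lam atTop atTop) (z : ℝ) :
    ∃ N : ℕ, ∀ k, N ≤ k → max (z - lam k) 0 = 0 := by
  obtain ⟨N, hN⟩ := (htend.eventually_ge_atTop z).exists_forall_of_atTop
  exact ⟨N, fun k hk => max_eq_right (sub_nonpos.2 (hN k hk))⟩

private lemma key_ineq (d : ℕ) (hd : 0 < d) {lam : ℕ → ℝ} (hpos : ∀ k, 0 < lam k)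
    (htend : Tendsto lam atTop atTop)
    (hZ : ∀ t > (0 : ℝ), Summable fun k => Real.exp (-(lam k * t)))
    (hyang : ∀ z ≥ (0 : ℝ),
      ∑' k, (max (z - lam k) 0) ^ (2 : ℝ) ≤
        4 / (d : ℝ) * ∑' k, lam k * max (z - lam k) 0)
    {t : ℝ} (ht : 0 < t) :
    (d : ℝ) / 2 * (∑' k, Real.exp (-(lam k * t))) ≤
      t * ∑' k, lam k * Real.exp (-(lam k * t)) := by
  have hd' : (0:ℝ) < (d:ℝ) := by exact_mod_cast hd
  set F : ℕ → ℝ → ℝ := fun k z => max (z - lam k) 0 ^ 2 * Real.exp (-(t * z)) with hF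
  set G : ℕ → ℝ → ℝ :=
    fun k z => 4 / (d:ℝ) * (lam k * (max (z - lam k) 0 ^ 1 * Real.exp (-(t * z)))) with hG
  have hFint : ∀ k, IntegrableOn (F k) (Ioi (0:ℝ)) := fun k => aux_integrable 2 ht (hpos k).le
  have hGint : ∀ k, IntegrableOn (G k) (Ioi (0:ℝ)) := fun k =>
    ((aux_integrable 1 ht (hpos k).le).const_mul (lam k)).const_mul (4 / (d:ℝ))
  have hFval : ∀ k, ∫ z in Ioi (0:ℝ), F k z
      = Real.exp (-(lam k * t)) * (2 / t ^ 3) := fun k => by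
    have := aux_integral 2 two_pos ht (hpos k).le
    norm_num [Nat.factorial] at this ⊢
    exact this
  have hGval : ∀ k, ∫ z in Ioi (0:ℝ), G k z
      = 4 / (d:ℝ) * (lam k * (Real.exp (-(lam k * t)) * (1 / t ^ 2))) := fun k => by
    rw [hG]
    simp only []
    rw [integral_const_mul, integral_const_mul, aux_integral 1 one_pos ht (hpos k).le]
    norm_num [Nat.factorial]
  have hFnn : ∀ k z, 0 ≤ F k z := fun k z => by positivity
  have hGnn : ∀ k z, 0 ≤ G k z := fun k z => by
    have := (hpos k).le
    have := le_max_right (z - lam k) (0:ℝ)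
    positivity
  have hFmeas : ∀ k, Measurable fun z => ENNReal.ofReal (F k z) := fun k =>
    (Continuous.measurable (by fun_prop)).ennreal_ofReal
  have hGmeas : ∀ k, Measurable fun z => ENNReal.ofReal (G k z) := fun k =>
    (Continuous.measurable (by fun_prop)).ennreal_ofReal
  have hZt := hZ t ht
  have hWt := summable_W hpos hZ ht
  -- summability of the integral-value sequences
  have hIs : Summable fun k => Real.exp (-(lam k * t)) * (2 / t ^ 3) := hZt.mul_right _
  have hJs : Summable fun k =>
      4 / (d:ℝ) * (lam k * (Real.exp (-(lam k * t)) * (1 / t ^ 2))) := by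
    refine Summable.mul_left _ ?_
    have : (fun k => lam k * (Real.exp (-(lam k * t)) * (1 / t ^ 2)))
        = fun k => (lam k * Real.exp (-(lam k * t))) * (1 / t ^ 2) := by
      funext k; ring
    rw [this]
    exact hWt.mul_right _
  -- pointwise comparison of the summed integrands
  have hptwise : ∀ z : ℝ,
      (∑' k, ENNReal.ofReal (F k z)) ≤ ∑' k, ENNReal.ofReal (G k z) := by
    intro z
    obtain ⟨N, hN⟩ := finSupp htend z
    have hsF : Summable fun k => F k z := by
      refine summable_of_ne_finset_zero (s := Finset.range N) fun k hk => ?_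
      have : N ≤ k := le_of_not_gt (fun h => hk (Finset.mem_range.2 h))
      simp [hF, hN k this]
    have hsG : Summable fun k => G k z := by
      refine summable_of_ne_finset_zero (s := Finset.range N) fun k hk => ?_
      have : N ≤ k := le_of_not_gt (fun h => hk (Finset.mem_range.2 h))
      simp [hG, hN k this]
    rw [← ENNReal.ofReal_tsum_of_nonneg (fun k => hFnn k z) hsF,
      ← ENNReal.ofReal_tsum_of_nonneg (fun k => hGnn k z) hsG]
    apply ENNReal.ofReal_le_ofReal
    have hcore : (∑' k, max (z - lam k) 0 ^ 2) ≤
        4 / (d:ℝ) * ∑' k, lam k * max (z - lam k) 0 := by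
      rcases le_or_gt 0 z with hz | hz
      · have h := hyang z hz
        have hc : ∀ k : ℕ, (max (z - lam k) 0) ^ (2 : ℝ) = (max (z - lam k) 0) ^ (2 : ℕ) :=
          fun k => by rw [show (2:ℝ) = ((2:ℕ):ℝ) by norm_num, Real.rpow_natCast]
        simp_rw [hc] at h
        exact h
      · have hzero : ∀ k, max (z - lam k) 0 = 0 := fun k =>
          max_eq_right (by linarith [hpos k])
        have h1 : (∑' k, max (z - lam k) 0 ^ 2) = 0 := by
          simp [hzero]
        have h2 : 0 ≤ ∑' k, lam k * max (z - lam k) 0 := by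
          simp [hzero]
        rw [h1]
        positivity
    calc (∑' k, F k z) = (∑' k, max (z - lam k) 0 ^ 2) * Real.exp (-(t * z)) := by
          rw [hF]; exact tsum_mul_right
      _ ≤ (4 / (d:ℝ) * ∑' k, lam k * max (z - lam k) 0) * Real.exp (-(t * z)) :=
          mul_le_mul_of_nonneg_right hcore (Real.exp_pos _).le
      _ = ∑' k, G k z := by
          rw [hG]
          rw [show (fun k => 4 / (d:ℝ) * (lam k * (max (z - lam k) 0 ^ 1 * Real.exp (-(t * z)))))
            = fun k => (4 / (d:ℝ)) * ((lam k * max (z - lam k) 0) * Real.exp (-(t * z))) by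
              funext k; ring]
          rw [tsum_mul_left, tsum_mul_right, mul_assoc]
  -- main ENNReal chain
  have chain : ENNReal.ofReal ((∑' k, Real.exp (-(lam k * t))) * (2 / t ^ 3)) ≤
      ENNReal.ofReal (4 / (d:ℝ) * ((∑' k, lam k * Real.exp (-(lam k * t))) * (1 / t ^ 2))) := by
    calc ENNReal.ofReal ((∑' k, Real.exp (-(lam k * t))) * (2 / t ^ 3))
        = ENNReal.ofReal (∑' k, Real.exp (-(lam k * t)) * (2 / t ^ 3)) := by
          rw [tsum_mul_right]
      _ = ∑' k, ENNReal.ofReal (Real.exp (-(lam k * t)) * (2 / t ^ 3)) :=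
          ENNReal.ofReal_tsum_of_nonneg (fun k => by positivity) hIs
      _ = ∑' k, ∫⁻ z in Ioi (0:ℝ), ENNReal.ofReal (F k z) := by
          refine tsum_congr fun k => ?_
          rw [← hFval k, ofReal_integral_eq_lintegral_ofReal (hFint k)
            (ae_of_all _ fun z => hFnn k z)]
      _ = ∫⁻ z in Ioi (0:ℝ), ∑' k, ENNReal.ofReal (F k z) :=
          (lintegral_tsum fun k => (hFmeas k).aemeasurable).symm
      _ ≤ ∫⁻ z in Ioi (0:ℝ), ∑' k, ENNReal.ofReal (G k z) :=
          lintegral_mono fun z => hptwise z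
      _ = ∑' k, ∫⁻ z in Ioi (0:ℝ), ENNReal.ofReal (G k z) :=
          lintegral_tsum fun k => (hGmeas k).aemeasurable
      _ = ∑' k, ENNReal.ofReal
            (4 / (d:ℝ) * (lam k * (Real.exp (-(lam k * t)) * (1 / t ^ 2)))) := by
          refine tsum_congr fun k => ?_
          rw [← hGval k, ofReal_integral_eq_lintegral_ofReal (hGint k)
            (ae_of_all _ fun z => hGnn k z)]
      _ = ENNReal.ofReal (∑' k,
            4 / (d:ℝ) * (lam k * (Real.exp (-(lam k * t)) * (1 / t ^ 2)))) :=
          (ENNReal.ofReal_tsum_of_nonneg (fun k => by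
            have := (hpos k).le; positivity) hJs).symm
      _ = ENNReal.ofReal (4 / (d:ℝ) *
            ((∑' k, lam k * Real.exp (-(lam k * t))) * (1 / t ^ 2))) := by
          rw [tsum_mul_left]
          congr 1
          rw [show (fun k => lam k * (Real.exp (-(lam k * t)) * (1 / t ^ 2)))
            = fun k => (lam k * Real.exp (-(lam k * t))) * (1 / t ^ 2) by funext k; ring]
          rw [tsum_mul_right]
  have hWnn : 0 ≤ ∑' k, lam k * Real.exp (-(lam k * t)) :=
    tsum_nonneg fun k => mul_nonneg (hpos k).le (Real.exp_pos _).le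
  have hineq : (∑' k, Real.exp (-(lam k * t))) * (2 / t ^ 3) ≤
      4 / (d:ℝ) * ((∑' k, lam k * Real.exp (-(lam k * t))) * (1 / t ^ 2)) := by
    refine (ENNReal.ofReal_le_ofReal_iff ?_).1 chain
    positivity
  have htne : t ≠ 0 := ht.ne'
  have hdne : (d:ℝ) ≠ 0 := hd'.ne'
  set A := ∑' k, Real.exp (-(lam k * t))
  set B := ∑' k, lam k * Real.exp (-(lam k * t))
  calc (d:ℝ) / 2 * A = ((d:ℝ) * t ^ 3 / 4) * (A * (2 / t ^ 3)) := by
        field_simp; ring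
    _ ≤ ((d:ℝ) * t ^ 3 / 4) * (4 / (d:ℝ) * (B * (1 / t ^ 2))) :=
        mul_le_mul_of_nonneg_left hineq (by positivity)
    _ = t * B := by field_simp

/-- Harrell–Stubbe monotonicity from Yang's inequality: if
`Σ_k (z-λ_k)_+² ≤ (4/d) Σ_k λ_k (z-λ_k)_+` for all `z ≥ 0`, then
`t ↦ t^{d/2} Z(t)` is nonincreasing on `(0,∞)`, where `Z(t) = Σ_k e^{-λ_k t}`. -/
theorem partition_monotonicity_from_yang (d : ℕ) (hd : 0 < d)
    (lam : ℕ → ℝ) (hmono : Monotone lam) (hpos : ∀ k, 0 < lam k)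
    (htend : Tendsto lam atTop atTop)
    (hZ : ∀ t > (0 : ℝ), Summable fun k => Real.exp (-lam k * t))
    (hyang : ∀ z ≥ (0 : ℝ),
      ∑' k, (max (z - lam k) 0) ^ (2 : ℝ) ≤
        4 / (d : ℝ) * ∑' k, lam k * max (z - lam k) 0) :
    AntitoneOn (fun t => t ^ ((d : ℝ) / 2) * ∑' k, Real.exp (-lam k * t))
      (Ioi (0 : ℝ)) := by
  have hZ' : ∀ t > (0:ℝ), Summable fun k => Real.exp (-(lam k * t)) := by
    intro t ht; simpa [neg_mul] using hZ t ht
  have hd' : (0:ℝ) < (d:ℝ) := by exact_mod_cast hd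
  simp only [neg_mul]
  have hf : ∀ t ∈ Ioi (0:ℝ),
      HasDerivAt (fun x => x ^ ((d:ℝ)/2) * ∑' k, Real.exp (-(lam k * x)))
      ((((d:ℝ)/2) * t ^ (((d:ℝ)/2) - 1)) * (∑' k, Real.exp (-(lam k * t)))
        + t ^ ((d:ℝ)/2) * (-∑' k, lam k * Real.exp (-(lam k * t)))) t := by
    intro t ht
    have ht' : (0:ℝ) < t := ht
    have h1 : HasDerivAt (fun x : ℝ => x ^ ((d:ℝ)/2))
        (((d:ℝ)/2) * t ^ (((d:ℝ)/2) - 1)) t :=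
      Real.hasDerivAt_rpow_const (Or.inl ht'.ne')
    exact h1.mul (hasDerivZ hpos hZ' ht')
  apply antitoneOn_of_deriv_nonpos (convex_Ioi 0)
  · exact fun t ht => (hf t ht).continuousAt.continuousWithinAt
  · rw [interior_Ioi]
    exact fun t ht => (hf t ht).differentiableAt.differentiableWithinAt
  · rw [interior_Ioi]
    intro t ht
    rw [(hf t ht).deriv]
    have ht' : (0:ℝ) < t := ht
    have hkey := key_ineq d hd hpos htend hZ' hyang ht'
    have hpow : (0:ℝ) < t ^ (((d:ℝ)/2) - 1) := Real.rpow_pos_of_pos ht' _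
    have hsplit : t ^ ((d:ℝ)/2) = t ^ (((d:ℝ)/2) - 1) * t := by
      rw [← Real.rpow_add_one ht'.ne', sub_add_cancel]
    have h2 := mul_le_mul_of_nonneg_left hkey hpow.le
    rw [hsplit]
    nlinarith [h2]
end

section
/- Let d be a positive integer and (λ_k)_{k≥1} a nondecreasing sequence of positive real numbers with λ_k → ∞. Assume Yang's inequality: for all z ≥ 0, Σ_k (z−λ_k)_+^2 ≤ (4/d) Σ_k λ_k (z−λ_k)_+. Then for every real ρ ≥ 2 and every z ≥ 0: Σ_k (z−λ_k)_+^ρ ≤ (2ρ/d) · Σ_k λ_k (z−λ_k)_+^{ρ−1}. -/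
open MeasureTheory Real Filter Set

private lemma riesz_intable {ρ z : ℝ} (hρ : 2 < ρ) {g : ℝ → ℝ} (hg : Continuous g) :
    IntervalIntegrable (fun t => t ^ (ρ - 3) * g t) volume 0 z :=
  (intervalIntegral.intervalIntegrable_rpow' (by linarith)).mul_continuousOn
    hg.continuousOn

private lemma riesz_aux_sq {ρ : ℝ} (hρ : 2 < ρ) {a : ℝ} (ha : 0 ≤ a) :
    ∫ t in (0:ℝ)..a, t ^ (ρ - 3) * (a - t) ^ 2
      = 2 / ((ρ - 2) * (ρ - 1) * ρ) * a ^ ρ := by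
  rcases eq_or_lt_of_le ha with rfl | ha
  · simp [Real.zero_rpow (by positivity : ρ ≠ 0)]
  have hane : a ≠ 0 := ne_of_gt ha
  have h1 : (-1 : ℝ) < ρ - 3 := by linarith
  have h2 : (-1 : ℝ) < ρ - 2 := by linarith
  have h3 : (-1 : ℝ) < ρ - 1 := by linarith
  have key : ∫ t in (0:ℝ)..a, t ^ (ρ - 3) * (a - t) ^ 2
      = ∫ t in (0:ℝ)..a,
          (a^2 * t ^ (ρ - 3) - 2 * a * t ^ (ρ - 2) + t ^ (ρ - 1)) := by
    apply intervalIntegral.integral_congr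
    intro t ht
    rw [Set.uIcc_of_le ha.le] at ht
    rcases eq_or_lt_of_le ht.1 with rfl | htpos
    · simp only [sub_zero, Real.zero_rpow (show ρ - 2 ≠ 0 by linarith),
        Real.zero_rpow (show ρ - 1 ≠ 0 by linarith), mul_zero, add_zero]
      ring
    · have hne : t ≠ 0 := ne_of_gt htpos
      have e2 : t ^ (ρ - 2) = t ^ (ρ - 3) * t := by
        rw [show ρ - 2 = (ρ - 3) + 1 by ring, Real.rpow_add_one hne]
      have e3 : t ^ (ρ - 1) = t ^ (ρ - 3) * t * t := by
        rw [show ρ - 1 = ((ρ - 3) + 1) + 1 by ring, Real.rpow_add_one hne,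
          Real.rpow_add_one hne]
      simp only [e2, e3]
      ring
  rw [key]
  have i1 : IntervalIntegrable (fun t : ℝ => t ^ (ρ - 3)) volume 0 a :=
    intervalIntegral.intervalIntegrable_rpow' h1
  have i2 : IntervalIntegrable (fun t : ℝ => t ^ (ρ - 2)) volume 0 a :=
    intervalIntegral.intervalIntegrable_rpow' h2
  have i3 : IntervalIntegrable (fun t : ℝ => t ^ (ρ - 1)) volume 0 a :=
    intervalIntegral.intervalIntegrable_rpow' h3
  rw [intervalIntegral.integral_add ((i1.const_mul _).sub (i2.const_mul _)) i3,
    intervalIntegral.integral_sub (i1.const_mul _) (i2.const_mul _),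
    intervalIntegral.integral_const_mul, intervalIntegral.integral_const_mul,
    integral_rpow (Or.inl h1), integral_rpow (Or.inl h2), integral_rpow (Or.inl h3),
    Real.zero_rpow (show ρ - 3 + 1 ≠ 0 by linarith),
    Real.zero_rpow (show ρ - 2 + 1 ≠ 0 by linarith),
    Real.zero_rpow (show ρ - 1 + 1 ≠ 0 by linarith),
    show ρ - 3 + 1 = ρ - 2 by ring, show ρ - 2 + 1 = ρ - 1 by ring,
    show ρ - 1 + 1 = ρ by ring, sub_zero, sub_zero, sub_zero]
  have hρd2 : a ^ ρ = a ^ (ρ - 2) * a * a := by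
    rw [← Real.rpow_add_one hane, ← Real.rpow_add_one hane]; ring_nf
  have hρd1 : a ^ ρ = a ^ (ρ - 1) * a := by
    rw [← Real.rpow_add_one hane]; ring_nf
  have t1 : a ^ 2 * (a ^ (ρ - 2) / (ρ - 2)) = a ^ ρ / (ρ - 2) := by
    rw [hρd2, pow_two]; ring
  have t2 : 2 * a * (a ^ (ρ - 1) / (ρ - 1)) = 2 * a ^ ρ / (ρ - 1) := by
    rw [hρd1]; ring
  rw [t1, t2]
  have hne2 : ρ - 2 ≠ 0 := by linarith
  have hne1 : ρ - 1 ≠ 0 := by linarith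
  have hne0 : ρ ≠ 0 := by linarith
  field_simp
  ring

private lemma riesz_aux_lin {ρ : ℝ} (hρ : 2 < ρ) {a : ℝ} (ha : 0 ≤ a) :
    ∫ t in (0:ℝ)..a, t ^ (ρ - 3) * (a - t)
      = 1 / ((ρ - 2) * (ρ - 1)) * a ^ (ρ - 1) := by
  rcases eq_or_lt_of_le ha with rfl | ha
  · simp [Real.zero_rpow (show ρ - 1 ≠ 0 by linarith)]
  have hane : a ≠ 0 := ne_of_gt ha
  have h1 : (-1 : ℝ) < ρ - 3 := by linarith
  have h2 : (-1 : ℝ) < ρ - 2 := by linarith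
  have key : ∫ t in (0:ℝ)..a, t ^ (ρ - 3) * (a - t)
      = ∫ t in (0:ℝ)..a, (a * t ^ (ρ - 3) - t ^ (ρ - 2)) := by
    apply intervalIntegral.integral_congr
    intro t ht
    rw [Set.uIcc_of_le ha.le] at ht
    rcases eq_or_lt_of_le ht.1 with rfl | htpos
    · simp only [sub_zero, Real.zero_rpow (show ρ - 2 ≠ 0 by linarith)]
      ring
    · have hne : t ≠ 0 := ne_of_gt htpos
      have e2 : t ^ (ρ - 2) = t ^ (ρ - 3) * t := by
        rw [show ρ - 2 = (ρ - 3) + 1 by ring, Real.rpow_add_one hne]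
      simp only [e2]
      ring
  rw [key]
  have i1 : IntervalIntegrable (fun t : ℝ => t ^ (ρ - 3)) volume 0 a :=
    intervalIntegral.intervalIntegrable_rpow' h1
  have i2 : IntervalIntegrable (fun t : ℝ => t ^ (ρ - 2)) volume 0 a :=
    intervalIntegral.intervalIntegrable_rpow' h2
  rw [intervalIntegral.integral_sub (i1.const_mul _) i2,
    intervalIntegral.integral_const_mul,
    integral_rpow (Or.inl h1), integral_rpow (Or.inl h2),
    Real.zero_rpow (show ρ - 3 + 1 ≠ 0 by linarith),
    Real.zero_rpow (show ρ - 2 + 1 ≠ 0 by linarith),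
    show ρ - 3 + 1 = ρ - 2 by ring, show ρ - 2 + 1 = ρ - 1 by ring,
    sub_zero, sub_zero]
  have hρd1 : a ^ (ρ - 1) = a ^ (ρ - 2) * a := by
    rw [← Real.rpow_add_one hane]; ring_nf
  have t1 : a * (a ^ (ρ - 2) / (ρ - 2)) = a ^ (ρ - 1) / (ρ - 2) := by
    rw [hρd1]; ring
  rw [t1]
  have hne2 : ρ - 2 ≠ 0 := by linarith
  have hne1 : ρ - 1 ≠ 0 := by linarith
  field_simp
  ring

private lemma riesz_aux_max_sq {ρ z lam : ℝ} (hρ : 2 < ρ) (hz : 0 ≤ z) (hl : 0 ≤ lam) :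
    ∫ t in (0:ℝ)..z, t ^ (ρ - 3) * (max (z - t - lam) 0) ^ 2
      = 2 / ((ρ - 2) * (ρ - 1) * ρ) * (max (z - lam) 0) ^ ρ := by
  rcases le_or_gt z lam with h | h
  · rw [max_eq_right (by linarith), Real.zero_rpow (by positivity : ρ ≠ 0), mul_zero]
    calc ∫ t in (0:ℝ)..z, t ^ (ρ - 3) * (max (z - t - lam) 0) ^ 2
        = ∫ _t in (0:ℝ)..z, (0:ℝ) := by
          apply intervalIntegral.integral_congr
          intro t ht
          rw [Set.uIcc_of_le hz] at ht
          have hm : max (z - t - lam) 0 = 0 := max_eq_right (by linarith [ht.1])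
          simp [hm]
      _ = 0 := by simp
  · set a := z - lam with ha_def
    have ha : 0 < a := by rw [ha_def]; linarith
    have haz : a ≤ z := by rw [ha_def]; linarith
    have hint : IntervalIntegrable
        (fun t => t ^ (ρ - 3) * (max (z - t - lam) 0) ^ 2) volume 0 z :=
      riesz_intable hρ (by fun_prop)
    have hs1 : Set.uIcc (0:ℝ) a ⊆ Set.uIcc (0:ℝ) z := by
      rw [Set.uIcc_of_le hz, Set.uIcc_of_le ha.le]
      exact Set.Icc_subset_Icc le_rfl haz
    have hs2 : Set.uIcc a z ⊆ Set.uIcc (0:ℝ) z := by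
      rw [Set.uIcc_of_le hz, Set.uIcc_of_le haz]
      exact Set.Icc_subset_Icc ha.le le_rfl
    have hsplit := intervalIntegral.integral_add_adjacent_intervals
      (hint.mono_set hs1) (hint.mono_set hs2)
    rw [← hsplit]
    have e1 : ∫ t in (0:ℝ)..a, t ^ (ρ - 3) * (max (z - t - lam) 0) ^ 2
        = ∫ t in (0:ℝ)..a, t ^ (ρ - 3) * (a - t) ^ 2 := by
      apply intervalIntegral.integral_congr
      intro t ht
      rw [Set.uIcc_of_le ha.le] at ht
      have hm : max (z - t - lam) 0 = a - t := by
        rw [max_eq_left (by linarith [ht.2])]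
        rw [ha_def]; ring
      simp only [hm]
    have e2 : ∫ t in a..z, t ^ (ρ - 3) * (max (z - t - lam) 0) ^ 2 = 0 := by
      calc ∫ t in a..z, t ^ (ρ - 3) * (max (z - t - lam) 0) ^ 2
          = ∫ _t in a..z, (0:ℝ) := by
            apply intervalIntegral.integral_congr
            intro t ht
            rw [Set.uIcc_of_le haz] at ht
            have hm : max (z - t - lam) 0 = 0 := max_eq_right (by linarith [ht.1])
            simp [hm]
        _ = 0 := by simp
    rw [e1, e2, riesz_aux_sq hρ ha.le, add_zero, max_eq_left (by linarith : (0:ℝ) ≤ z - lam)]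

private lemma riesz_aux_max_lin {ρ z lam : ℝ} (hρ : 2 < ρ) (hz : 0 ≤ z) (hl : 0 ≤ lam) :
    ∫ t in (0:ℝ)..z, t ^ (ρ - 3) * (max (z - t - lam) 0)
      = 1 / ((ρ - 2) * (ρ - 1)) * (max (z - lam) 0) ^ (ρ - 1) := by
  rcases le_or_gt z lam with h | h
  · rw [max_eq_right (by linarith), Real.zero_rpow (show ρ - 1 ≠ 0 by linarith), mul_zero]
    calc ∫ t in (0:ℝ)..z, t ^ (ρ - 3) * (max (z - t - lam) 0)
        = ∫ _t in (0:ℝ)..z, (0:ℝ) := by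
          apply intervalIntegral.integral_congr
          intro t ht
          rw [Set.uIcc_of_le hz] at ht
          have hm : max (z - t - lam) 0 = 0 := max_eq_right (by linarith [ht.1])
          simp [hm]
      _ = 0 := by simp
  · set a := z - lam with ha_def
    have ha : 0 < a := by rw [ha_def]; linarith
    have haz : a ≤ z := by rw [ha_def]; linarith
    have hint : IntervalIntegrable
        (fun t => t ^ (ρ - 3) * (max (z - t - lam) 0)) volume 0 z :=
      riesz_intable hρ (by fun_prop)
    have hs1 : Set.uIcc (0:ℝ) a ⊆ Set.uIcc (0:ℝ) z := by
      rw [Set.uIcc_of_le hz, Set.uIcc_of_le ha.le]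
      exact Set.Icc_subset_Icc le_rfl haz
    have hs2 : Set.uIcc a z ⊆ Set.uIcc (0:ℝ) z := by
      rw [Set.uIcc_of_le hz, Set.uIcc_of_le haz]
      exact Set.Icc_subset_Icc ha.le le_rfl
    have hsplit := intervalIntegral.integral_add_adjacent_intervals
      (hint.mono_set hs1) (hint.mono_set hs2)
    rw [← hsplit]
    have e1 : ∫ t in (0:ℝ)..a, t ^ (ρ - 3) * (max (z - t - lam) 0)
        = ∫ t in (0:ℝ)..a, t ^ (ρ - 3) * (a - t) := by
      apply intervalIntegral.integral_congr
      intro t ht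
      rw [Set.uIcc_of_le ha.le] at ht
      have hm : max (z - t - lam) 0 = a - t := by
        rw [max_eq_left (by linarith [ht.2])]
        rw [ha_def]; ring
      simp only [hm]
    have e2 : ∫ t in a..z, t ^ (ρ - 3) * (max (z - t - lam) 0) = 0 := by
      calc ∫ t in a..z, t ^ (ρ - 3) * (max (z - t - lam) 0)
          = ∫ _t in a..z, (0:ℝ) := by
            apply intervalIntegral.integral_congr
            intro t ht
            rw [Set.uIcc_of_le haz] at ht
            have hm : max (z - t - lam) 0 = 0 := max_eq_right (by linarith [ht.1])
            simp [hm]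
        _ = 0 := by simp
    rw [e1, e2, riesz_aux_lin hρ ha.le, add_zero, max_eq_left (by linarith : (0:ℝ) ≤ z - lam)]

/-- Riesz-mean inequalities for `ρ ≥ 2` from Yang's inequality: if
`Σ_k (z-λ_k)_+² ≤ (4/d) Σ_k λ_k (z-λ_k)_+` for all `z ≥ 0`, then for every `ρ ≥ 2`
and `z ≥ 0`, `Σ_k (z-λ_k)_+^ρ ≤ (2ρ/d) Σ_k λ_k (z-λ_k)_+^{ρ-1}`. -/
theorem riesz_mean_from_yang (d : ℕ) (hd : 0 < d)
    (lam : ℕ → ℝ) (hmono : Monotone lam) (hpos : ∀ k, 0 < lam k)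
    (htend : Tendsto lam atTop atTop)
    (hyang : ∀ z ≥ (0 : ℝ),
      ∑' k, (max (z - lam k) 0) ^ (2 : ℝ) ≤
        4 / (d : ℝ) * ∑' k, lam k * max (z - lam k) 0)
    (ρ : ℝ) (hρ : 2 ≤ ρ) (z : ℝ) (hz : 0 ≤ z) :
    ∑' k, (max (z - lam k) 0) ^ ρ ≤
      2 * ρ / (d : ℝ) * ∑' k, lam k * (max (z - lam k) 0) ^ (ρ - 1) := by
  have hd' : (0:ℝ) < d := Nat.cast_pos.mpr hd
  rcases eq_or_lt_of_le hρ with rfl | hρ2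
  · have h := hyang z hz
    have h4 : (2:ℝ) * 2 / d = 4 / d := by ring
    rw [h4]
    simpa [show (2:ℝ) - 1 = 1 by norm_num, Real.rpow_one] using h
  -- ρ > 2
  obtain ⟨N, hN⟩ : ∃ N, ∀ k ≥ N, z ≤ lam k := by
    have := htend.eventually_ge_atTop z
    rw [eventually_atTop] at this
    exact this
  have hmax0 : ∀ k ≥ N, max (z - lam k) 0 = 0 := fun k hk =>
    max_eq_right (by linarith [hN k hk])
  have yangN : ∀ w ∈ Set.Icc (0:ℝ) z,
      ∑ k ∈ Finset.range N, (max (w - lam k) 0) ^ 2 ≤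
        4 / (d:ℝ) * ∑ k ∈ Finset.range N, lam k * max (w - lam k) 0 := by
    intro w hw
    have hmw : ∀ k ∉ Finset.range N, max (w - lam k) 0 = 0 := by
      intro k hk
      rw [Finset.mem_range, not_lt] at hk
      exact max_eq_right (by linarith [hN k hk, hw.2])
    have h := hyang w hw.1
    rw [tsum_eq_sum (s := Finset.range N) (fun k hk => by
        rw [hmw k hk]; exact Real.zero_rpow two_ne_zero),
      tsum_eq_sum (s := Finset.range N) (fun k hk => by rw [hmw k hk, mul_zero])] at h
    calc ∑ k ∈ Finset.range N, (max (w - lam k) 0) ^ 2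
        = ∑ k ∈ Finset.range N, (max (w - lam k) 0) ^ (2:ℝ) := by
          refine Finset.sum_congr rfl fun k _ => (Real.rpow_two _).symm
      _ ≤ _ := h
  rw [tsum_eq_sum (s := Finset.range N) (fun k hk => by
      rw [hmax0 k (by simpa using hk)]
      exact Real.zero_rpow (by linarith : ρ ≠ 0)),
    tsum_eq_sum (s := Finset.range N) (fun k hk => by
      rw [hmax0 k (by simpa using hk), Real.zero_rpow (by linarith : ρ - 1 ≠ 0), mul_zero])]
  set L := ∑ k ∈ Finset.range N, (max (z - lam k) 0) ^ ρ with hL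
  set R := ∑ k ∈ Finset.range N, lam k * (max (z - lam k) 0) ^ (ρ - 1) with hR
  set c2 := 2 / ((ρ - 2) * (ρ - 1) * ρ) with hc2
  set c1 := 1 / ((ρ - 2) * (ρ - 1)) with hc1
  have hprod : (0:ℝ) < (ρ - 2) * (ρ - 1) * ρ :=
    mul_pos (mul_pos (by linarith) (by linarith)) (by linarith)
  have hc2pos : 0 < c2 := by rw [hc2]; exact div_pos two_pos hprod
  have hint1 : ∀ k, IntervalIntegrable
      (fun t => t ^ (ρ - 3) * (max (z - t - lam k) 0) ^ 2) volume 0 z :=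
    fun k => riesz_intable hρ2 (by fun_prop)
  have hint2 : ∀ k, IntervalIntegrable
      (fun t => t ^ (ρ - 3) * (lam k * max (z - t - lam k) 0)) volume 0 z :=
    fun k => riesz_intable hρ2 (by fun_prop)
  have key : c2 * L ≤ 4 / (d:ℝ) * (c1 * R) := by
    have lhs_eq : c2 * L = ∫ t in (0:ℝ)..z,
        t ^ (ρ - 3) * ∑ k ∈ Finset.range N, (max (z - t - lam k) 0) ^ 2 := by
      have step : c2 * L = ∑ k ∈ Finset.range N,
          ∫ t in (0:ℝ)..z, t ^ (ρ - 3) * (max (z - t - lam k) 0) ^ 2 := by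
        rw [hL, Finset.mul_sum]
        refine Finset.sum_congr rfl fun k _ => ?_
        rw [riesz_aux_max_sq hρ2 hz (hpos k).le]
      rw [step, ← intervalIntegral.integral_finset_sum (fun k _ => hint1 k)]
      apply intervalIntegral.integral_congr
      intro t _
      simp only [Finset.mul_sum]
    have rhs_eq : 4 / (d:ℝ) * (c1 * R) = ∫ t in (0:ℝ)..z,
        t ^ (ρ - 3) * (4 / (d:ℝ) * ∑ k ∈ Finset.range N,
          lam k * max (z - t - lam k) 0) := by
      have step : 4 / (d:ℝ) * (c1 * R) = ∑ k ∈ Finset.range N,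
          ∫ t in (0:ℝ)..z, (4 / (d:ℝ)) * (t ^ (ρ - 3) * (lam k * max (z - t - lam k) 0)) := by
        rw [hR, Finset.mul_sum, Finset.mul_sum]
        refine Finset.sum_congr rfl fun k _ => ?_
        rw [intervalIntegral.integral_const_mul]
        have hk : ∫ t in (0:ℝ)..z, t ^ (ρ - 3) * (lam k * max (z - t - lam k) 0)
            = lam k * ∫ t in (0:ℝ)..z, t ^ (ρ - 3) * max (z - t - lam k) 0 := by
          rw [← intervalIntegral.integral_const_mul]
          apply intervalIntegral.integral_congr
          intro t _
          simp only []
          ring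
        rw [hk, riesz_aux_max_lin hρ2 hz (hpos k).le]
        ring
      rw [step, ← intervalIntegral.integral_finset_sum
        (fun k _ => (hint2 k).const_mul _)]
      apply intervalIntegral.integral_congr
      intro t _
      simp only [Finset.mul_sum]
      exact Finset.sum_congr rfl fun k _ => by ring
    rw [lhs_eq, rhs_eq]
    apply intervalIntegral.integral_mono_on hz
    · exact riesz_intable hρ2 (continuous_finset_sum _ fun i _ => by fun_prop)
    · exact riesz_intable hρ2
        (continuous_const.mul (continuous_finset_sum _ fun i _ => by fun_prop))
    · intro t ht
      have htp : (0:ℝ) ≤ t ^ (ρ - 3) := Real.rpow_nonneg ht.1 _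
      exact mul_le_mul_of_nonneg_left
        (yangN (z - t) ⟨by linarith [ht.2], by linarith [ht.1]⟩) htp
  have hfinal : (2 * ρ / (d:ℝ)) * R = c2⁻¹ * (4 / (d:ℝ) * (c1 * R)) := by
    rw [hc1, hc2]
    have hne2 : ρ - 2 ≠ 0 := by linarith
    have hne1 : ρ - 1 ≠ 0 := by linarith
    have hne0 : ρ ≠ 0 := by linarith
    have hdne : (d:ℝ) ≠ 0 := ne_of_gt hd'
    field_simp
    ring
  calc L = c2⁻¹ * (c2 * L) := by
        rw [← mul_assoc, inv_mul_cancel₀ (ne_of_gt hc2pos), one_mul]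
    _ ≤ c2⁻¹ * (4 / (d:ℝ) * (c1 * R)) :=
        mul_le_mul_of_nonneg_left key (by positivity)
    _ = (2 * ρ / (d:ℝ)) * R := hfinal.symm
end

section
/- Let d be a positive integer, ρ ≥ 2 a real number, and (λ_k)_{k≥1} a nondecreasing sequence of positive real numbers with λ_k → ∞; set R_ρ(z) = Σ_k (z−λ_k)_+^ρ. Suppose that for all z > 0, R_ρ(z) ≤ [ρ/(ρ+d/2)] · z · R_{ρ−1}(z). Then the function z ↦ R_ρ(z)/z^{ρ+d/2} is nondecreasing on (0,∞). -/
open MeasureTheory Real Filter Set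

lemma ramp_eq (p lam w : ℝ) (hp : p ≠ 0) :
    (if lam ≤ w then (w - lam) ^ p else 0) = max (w - lam) 0 ^ p := by
  split_ifs with h
  · rw [max_eq_left (by linarith)]
  · rw [max_eq_right (by linarith), Real.zero_rpow hp]

lemma hasDerivAt_ramp (p : ℝ) (hp : 1 < p) (lam z : ℝ) :
    HasDerivAt (fun w => max (w - lam) 0 ^ p) (p * max (z - lam) 0 ^ (p - 1)) z := by
  rcases lt_trichotomy z lam with hz | rfl | hz
  · have he : (fun w : ℝ => max (w - lam) 0 ^ p) =ᶠ[nhds z] fun _ => (0:ℝ) := by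
      filter_upwards [Iio_mem_nhds hz] with w hw
      rw [max_eq_right (by simp only [mem_Iio] at hw; linarith),
        Real.zero_rpow (by linarith)]
    have h0 : HasDerivAt (fun _ : ℝ => (0:ℝ)) 0 z := hasDerivAt_const _ _
    have := h0.congr_of_eventuallyEq he
    simpa [max_eq_right (by linarith : z - lam ≤ 0),
      Real.zero_rpow (by linarith : p - 1 ≠ 0)] using this
  · -- z = z
    rw [hasDerivAt_iff_tendsto_slope]
    have hmax : max (z - z) 0 = 0 := by simp
    rw [hmax, Real.zero_rpow (by linarith : p - 1 ≠ 0), mul_zero]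
    apply squeeze_zero_norm' (a := fun w => |w - z| ^ (p - 1))
    · filter_upwards [self_mem_nhdsWithin] with w hw
      have hw' : w ≠ z := hw
      have hne : w - z ≠ 0 := sub_ne_zero.mpr hw'
      have habs : (0:ℝ) < |w - z| := abs_pos.mpr hne
      have h1 : max (w - z) 0 ^ p ≤ |w - z| ^ p := by
        apply Real.rpow_le_rpow (le_max_right _ _)
        · exact max_le (le_abs_self _) (abs_nonneg _)
        · linarith
      have h2 : (0:ℝ) ≤ max (w - z) 0 ^ p :=
        Real.rpow_nonneg (le_max_right _ _) _
      have : ‖slope (fun w => max (w - z) 0 ^ p) z w‖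
          = max (w - z) 0 ^ p / |w - z| := by
        rw [slope_def_field]
        simp only [sub_self, max_self, Real.zero_rpow (by linarith : p ≠ 0), sub_zero]
        rw [div_eq_mul_inv, norm_mul, norm_inv, Real.norm_eq_abs, Real.norm_eq_abs,
          abs_of_nonneg h2, ← div_eq_mul_inv]
      rw [this]
      rw [div_le_iff₀ habs, ← Real.rpow_add_one (ne_of_gt habs)]
      simpa using h1
    · have hc : ContinuousAt (fun x : ℝ => x ^ (p - 1)) 0 :=
        Real.continuousAt_rpow_const 0 (p - 1) (Or.inr (by linarith))
      have h0 : Tendsto (fun w : ℝ => |w - z|) (nhds z) (nhds 0) := by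
        have : Tendsto (fun w : ℝ => w - z) (nhds z) (nhds (z - z)) :=
          (continuous_sub_right z).tendsto z
        rw [sub_self] at this
        simpa using this.abs
      have := hc.tendsto.comp h0
      rw [Real.zero_rpow (by linarith : p - 1 ≠ 0)] at this
      exact this.mono_left nhdsWithin_le_nhds
  · have he : (fun w : ℝ => max (w - lam) 0 ^ p)
        =ᶠ[nhds z] fun w => (w - lam) ^ p := by
      filter_upwards [Ioi_mem_nhds hz] with w hw
      rw [max_eq_left (by simp only [mem_Ioi] at hw; linarith)]
    have h1 : HasDerivAt (fun w : ℝ => (w - lam) ^ p)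
        (p * (z - lam) ^ (p - 1)) z := by
      have := (Real.hasDerivAt_rpow_const
        (x := z - lam) (p := p) (Or.inl (by linarith))).comp z
        ((hasDerivAt_id z).sub_const lam)
      simpa [Function.comp_def] using this
    have := h1.congr_of_eventuallyEq he
    simpa [max_eq_left (by linarith : (0:ℝ) ≤ z - lam)] using this

lemma riesz_finite (lam : ℕ → ℝ) (p : ℝ) (hp : p ≠ 0) (N : ℕ) (z : ℝ)
    (hN : ∀ k, N ≤ k → z < lam k) :
    rieszMean lam p z = ∑ k ∈ Finset.range N, max (z - lam k) 0 ^ p := by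
  rw [rieszMean, tsum_eq_sum (s := Finset.range N) ?_]
  · exact Finset.sum_congr rfl fun k _ => ramp_eq p (lam k) z hp
  · intro k hk
    rw [if_neg (not_le.mpr (hN k (by simpa using hk)))]

lemma riesz_hasDerivAt (lam : ℕ → ℝ) (htend : Tendsto lam atTop atTop)
    (ρ : ℝ) (hρ : 2 ≤ ρ) (z : ℝ) :
    HasDerivAt (fun w => rieszMean lam ρ w) (ρ * rieszMean lam (ρ - 1) z) z := by
  obtain ⟨N, hN⟩ := eventually_atTop.mp (htend.eventually (eventually_gt_atTop (z + 1)))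
  have key : ∀ w ∈ Iio (z + 1),
      rieszMean lam ρ w = ∑ k ∈ Finset.range N, max (w - lam k) 0 ^ ρ := by
    intro w hw
    exact riesz_finite lam ρ (by linarith) N w fun k hk => by
      have := hN k hk; simp only [mem_Iio] at hw; linarith
  have hsum : HasDerivAt (fun w => ∑ k ∈ Finset.range N, max (w - lam k) 0 ^ ρ)
      (∑ k ∈ Finset.range N, ρ * max (z - lam k) 0 ^ (ρ - 1)) z :=
    HasDerivAt.fun_sum fun k _ => hasDerivAt_ramp ρ (by linarith) (lam k) z
  have hval : ∑ k ∈ Finset.range N, ρ * max (z - lam k) 0 ^ (ρ - 1)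
      = ρ * rieszMean lam (ρ - 1) z := by
    rw [← Finset.mul_sum, riesz_finite lam (ρ - 1) (by linarith) N z
      fun k hk => by have := hN k hk; linarith]
  rw [hval] at hsum
  apply hsum.congr_of_eventuallyEq
  filter_upwards [Iio_mem_nhds (lt_add_one z)] with w hw
  exact key w hw

/-- Harrell–Stubbe monotonicity principle: if `ρ ≥ 2` and
`R_ρ(z) ≤ [ρ/(ρ+d/2)] z R_{ρ-1}(z)` for all `z > 0`, then
`z ↦ R_ρ(z)/z^{ρ+d/2}` is nondecreasing on `(0,∞)`. -/
theorem riesz_mean_monotonicity (d : ℕ) (hd : 0 < d) (ρ : ℝ) (hρ : 2 ≤ ρ)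
    (lam : ℕ → ℝ) (hmono : Monotone lam) (hpos : ∀ k, 0 < lam k)
    (htend : Tendsto lam atTop atTop)
    (h : ∀ z > (0 : ℝ),
      rieszMean lam ρ z ≤ ρ / (ρ + (d : ℝ) / 2) * (z * rieszMean lam (ρ - 1) z)) :
    MonotoneOn (fun z => rieszMean lam ρ z / z ^ (ρ + (d : ℝ) / 2))
      (Ioi (0 : ℝ)) := by
  set σ : ℝ := ρ + (d : ℝ) / 2 with hσdef
  have hd2 : (0:ℝ) < (d : ℝ) / 2 := by positivity
  have hσ : (0:ℝ) < σ := by simp only [hσdef]; linarith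
  have hF : ∀ z ∈ Ioi (0:ℝ), HasDerivAt (fun w => rieszMean lam ρ w / w ^ σ)
      ((ρ * rieszMean lam (ρ - 1) z * z ^ σ -
        rieszMean lam ρ z * (σ * z ^ (σ - 1))) / (z ^ σ) ^ 2) z := by
    intro z hz
    have hz' : (0:ℝ) < z := hz
    exact (riesz_hasDerivAt lam htend ρ hρ z).div
      (Real.hasDerivAt_rpow_const (Or.inl hz'.ne'))
      (ne_of_gt (Real.rpow_pos_of_pos hz' σ))
  apply monotoneOn_of_deriv_nonneg (convex_Ioi 0)
  · exact fun z hz => ((hF z hz).continuousAt).continuousWithinAt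
  · rw [interior_Ioi]
    exact fun z hz => (hF z hz).differentiableAt.differentiableWithinAt
  · rw [interior_Ioi]
    intro z hz
    have hz' : (0:ℝ) < z := hz
    rw [(hF z hz).deriv]
    apply div_nonneg _ (sq_nonneg _)
    have hsplit : z ^ σ = z ^ (σ - 1) * z := by
      rw [← Real.rpow_add_one hz'.ne' (σ - 1)]; ring_nf
    have hpow : (0:ℝ) ≤ z ^ (σ - 1) := (Real.rpow_pos_of_pos hz' _).le
    have hh := h z hz'
    rw [div_mul_eq_mul_div, le_div_iff₀ hσ] at hh
    rw [hsplit]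
    nlinarith [hh, hpow]
end

section
/- Let d be a positive integer, ρ ≥ 2 a real number, and (λ_k)_{k≥1} a nondecreasing sequence of positive real numbers with λ_k → ∞; set R_ρ(z) = Σ_k (z−λ_k)_+^ρ and L^{cl}_{ρ,d} = Γ(1+ρ)/((4π)^{d/2}Γ(1+ρ+d/2)). Suppose there are constants C > 0 and V > 0 such that R_ρ(z) ≤ C·z·R_{ρ−1}(z) for all z > 0, and such that R_ρ(z)/z^{ρ+d/2} → L^{cl}_{ρ,d}·V and R_{ρ−1}(z)/z^{ρ−1+d/2} → L^{cl}_{ρ−1,d}·V as z → ∞. Then C ≥ ρ/(ρ+d/2); i.e., the constant ρ/(ρ+d/2) in the Riesz-mean inequality cannot be improved. -/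
open MeasureTheory Real Filter Set

/-- The classical (Weyl) constant `L^{cl}_{ρ,d} = Γ(1+ρ)/((4π)^{d/2} Γ(1+ρ+d/2))`. -/
noncomputable def classicalConstant (ρ : ℝ) (d : ℕ) : ℝ :=
  Real.Gamma (1 + ρ) / ((4 * Real.pi) ^ ((d : ℝ) / 2) * Real.Gamma (1 + ρ + (d : ℝ) / 2))

/-- The constant `ρ/(ρ+d/2)` in the Riesz-mean inequality cannot be improved: if
`R_ρ(z) ≤ C z R_{ρ-1}(z)` for all `z > 0` and the Weyl asymptotics
`R_ρ(z)/z^{ρ+d/2} → L^{cl}_{ρ,d} V`, `R_{ρ-1}(z)/z^{ρ-1+d/2} → L^{cl}_{ρ-1,d} V`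
hold as `z → ∞`, then `C ≥ ρ/(ρ+d/2)`. -/
theorem riesz_mean_constant_sharp (d : ℕ) (hd : 0 < d) (ρ : ℝ) (hρ : 2 ≤ ρ)
    (lam : ℕ → ℝ) (hmono : Monotone lam) (hpos : ∀ k, 0 < lam k)
    (htend : Tendsto lam atTop atTop)
    (C V : ℝ) (hC : 0 < C) (hV : 0 < V)
    (hineq : ∀ z > (0 : ℝ), rieszMean lam ρ z ≤ C * z * rieszMean lam (ρ - 1) z)
    (h1 : Tendsto (fun z => rieszMean lam ρ z / z ^ (ρ + (d : ℝ) / 2)) atTop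
      (nhds (classicalConstant ρ d * V)))
    (h2 : Tendsto (fun z => rieszMean lam (ρ - 1) z / z ^ (ρ - 1 + (d : ℝ) / 2)) atTop
      (nhds (classicalConstant (ρ - 1) d * V))) :
    ρ / (ρ + (d : ℝ) / 2) ≤ C := by
  have hd2 : (0 : ℝ) < (d : ℝ) / 2 := by positivity
  have hρpos : (0 : ℝ) < ρ := by linarith
  have hρd : (0 : ℝ) < ρ + (d : ℝ) / 2 := by linarith
  -- limit inequality : L_ρ V ≤ C * (L_{ρ-1} V)
  have key : classicalConstant ρ d * V ≤ C * (classicalConstant (ρ - 1) d * V) := by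
    refine le_of_tendsto_of_tendsto h1 (h2.const_mul C) ?_
    filter_upwards [eventually_gt_atTop (0 : ℝ)] with z hz
    have hw : (0 : ℝ) < z ^ (ρ - 1 + (d : ℝ) / 2) := Real.rpow_pos_of_pos hz _
    have hsplit : z ^ (ρ + (d : ℝ) / 2) = z * z ^ (ρ - 1 + (d : ℝ) / 2) := by
      rw [show ρ + (d : ℝ) / 2 = 1 + (ρ - 1 + (d : ℝ) / 2) by ring,
        Real.rpow_add hz, Real.rpow_one]
    show rieszMean lam ρ z / z ^ (ρ + (d : ℝ) / 2)
        ≤ C * (rieszMean lam (ρ - 1) z / z ^ (ρ - 1 + (d : ℝ) / 2))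
    rw [hsplit]
    have h := hineq z hz
    rw [div_le_iff₀ (by positivity)]
    calc rieszMean lam ρ z ≤ C * z * rieszMean lam (ρ - 1) z := h
      _ = C * (rieszMean lam (ρ - 1) z / z ^ (ρ - 1 + (d : ℝ) / 2))
            * (z * z ^ (ρ - 1 + (d : ℝ) / 2)) := by field_simp
  -- Gamma functional equation computations
  have hg1 : Real.Gamma (1 + ρ) = ρ * Real.Gamma ρ := by
    rw [add_comm, Real.Gamma_add_one (ne_of_gt hρpos)]
  have hg2 : Real.Gamma (1 + ρ + (d : ℝ) / 2) = (ρ + (d : ℝ) / 2) * Real.Gamma (ρ + (d : ℝ) / 2) := by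
    rw [show 1 + ρ + (d : ℝ) / 2 = (ρ + (d : ℝ) / 2) + 1 by ring,
      Real.Gamma_add_one (ne_of_gt hρd)]
  have hGρ : 0 < Real.Gamma ρ := Real.Gamma_pos_of_pos hρpos
  have hGρd : 0 < Real.Gamma (ρ + (d : ℝ) / 2) := Real.Gamma_pos_of_pos hρd
  have h4π : (0 : ℝ) < (4 * Real.pi) ^ ((d : ℝ) / 2) :=
    Real.rpow_pos_of_pos (by positivity) _
  have hCm1 : classicalConstant (ρ - 1) d
      = Real.Gamma ρ / ((4 * Real.pi) ^ ((d : ℝ) / 2) * Real.Gamma (ρ + (d : ℝ) / 2)) := by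
    unfold classicalConstant
    rw [show 1 + (ρ - 1) = ρ by ring]
  have hratio : classicalConstant ρ d
      = ρ / (ρ + (d : ℝ) / 2) * classicalConstant (ρ - 1) d := by
    unfold classicalConstant
    rw [hg1, hg2, show 1 + (ρ - 1) = ρ by ring]
    field_simp
  have hApos : 0 < classicalConstant (ρ - 1) d * V := by
    rw [hCm1]; positivity
  rw [hratio, mul_assoc] at key
  exact le_of_mul_le_mul_right key hApos
end

section
/- Let (λ_k)_{k≥1} be a nondecreasing sequence of positive real numbers with λ_k → ∞. Then for all real numbers ρ₁, ρ₂ with 1 ≤ ρ₁ ≤ ρ₂ and every z > 0: [Σ_k (z−λ_k)_+^{ρ₁}] · [Σ_k λ_k (z−λ_k)_+^{ρ₂−1}] ≤ [Σ_k (z−λ_k)_+^{ρ₂}] · [Σ_k λ_k (z−λ_k)_+^{ρ₁−1}]. -/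
open MeasureTheory Real Filter Set

lemma weighted_chebyshev' {s : Finset ℕ} (w a b : ℕ → ℝ) (hw : ∀ i ∈ s, 0 ≤ w i)
    (hab : ∀ i ∈ s, ∀ j ∈ s, 0 ≤ (a i - a j) * (b j - b i)) :
    (∑ i ∈ s, w i) * ∑ i ∈ s, w i * (a i * b i) ≤
      (∑ i ∈ s, w i * a i) * ∑ i ∈ s, w i * b i := by
  have key : 0 ≤ ∑ i ∈ s, ∑ j ∈ s, w i * w j * ((a i - a j) * (b j - b i)) :=
    Finset.sum_nonneg fun i hi => Finset.sum_nonneg fun j hj =>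
      mul_nonneg (mul_nonneg (hw i hi) (hw j hj)) (hab i hi j hj)
  have h1 : ∀ i j : ℕ, w i * w j * ((a i - a j) * (b j - b i))
      = (w i * a i) * (w j * b j) + (w j * a j) * (w i * b i)
        - w i * (w j * (a j * b j)) - w j * (w i * (a i * b i)) := fun i j => by ring
  have expand : ∑ i ∈ s, ∑ j ∈ s, w i * w j * ((a i - a j) * (b j - b i))
      = 2 * ((∑ i ∈ s, w i * a i) * (∑ i ∈ s, w i * b i)
          - (∑ i ∈ s, w i) * ∑ i ∈ s, w i * (a i * b i)) := by
    simp only [h1, Finset.sum_add_distrib, Finset.sum_sub_distrib, ← Finset.sum_mul,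
      ← Finset.mul_sum]
    ring
  rw [expand] at key
  linarith

/-- Reverse-Chebyshev monotonicity of Riesz-mean ratios: for `1 ≤ ρ₁ ≤ ρ₂` and `z > 0`,
`[Σ_k (z-λ_k)_+^{ρ₁}]·[Σ_k λ_k (z-λ_k)_+^{ρ₂-1}] ≤ [Σ_k (z-λ_k)_+^{ρ₂}]·[Σ_k λ_k (z-λ_k)_+^{ρ₁-1}]`,
where `(z-λ_k)_+^0` is interpreted as the indicator of `λ_k ≤ z`. -/
theorem riesz_mean_ratio_monotone (lam : ℕ → ℝ) (hmono : Monotone lam)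
    (hpos : ∀ k, 0 < lam k) (htend : Tendsto lam atTop atTop)
    (ρ₁ ρ₂ : ℝ) (h1 : 1 ≤ ρ₁) (h12 : ρ₁ ≤ ρ₂) (z : ℝ) (hz : 0 < z) :
    (∑' k, (max (z - lam k) 0) ^ ρ₁) *
        ∑' k, (if lam k ≤ z then lam k * (z - lam k) ^ (ρ₂ - 1) else 0) ≤
      (∑' k, (max (z - lam k) 0) ^ ρ₂) *
        ∑' k, (if lam k ≤ z then lam k * (z - lam k) ^ (ρ₁ - 1) else 0) := by
  rcases eq_or_lt_of_le (le_trans h1 h12) with hρ2 | hρ2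
  · -- ρ₂ = 1, hence ρ₁ = 1 = ρ₂
    have : ρ₁ = ρ₂ := le_antisymm h12 (by linarith)
    rw [this]
  · -- 1 < ρ₂
    have hρ1pos : (0:ℝ) < ρ₁ := by linarith
    have hρ2pos : (0:ℝ) < ρ₂ := by linarith
    obtain ⟨N, hN⟩ := (htend.eventually_gt_atTop z).exists_forall_of_atTop
    set S : Finset ℕ := (Finset.range N).filter (fun k => lam k < z) with hS
    have hSz : ∀ k ∈ S, lam k < z := by
      intro k hk; exact (Finset.mem_filter.mp hk).2
    have hout : ∀ k, k ∉ S → z ≤ lam k := by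
      intro k hk
      by_cases hkN : k < N
      · by_contra hzk
        exact hk (Finset.mem_filter.mpr ⟨Finset.mem_range.mpr hkN, by linarith⟩)
      · exact (hN k (le_of_not_gt hkN)).le
    -- tsum reductions
    have TA : ∀ ρ : ℝ, 0 < ρ →
        (∑' k, (max (z - lam k) 0) ^ ρ) = ∑ k ∈ S, (z - lam k) ^ ρ := by
      intro ρ hρ
      rw [tsum_eq_sum (s := S) (fun k hk => by
        rw [max_eq_right (by have := hout k hk; linarith), Real.zero_rpow hρ.ne'])]
      exact Finset.sum_congr rfl fun k hk => by
        rw [max_eq_left (by have := hSz k hk; linarith)]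
    have TB : (∑' k, (if lam k ≤ z then lam k * (z - lam k) ^ (ρ₂ - 1) else 0))
        = ∑ k ∈ S, lam k * (z - lam k) ^ (ρ₂ - 1) := by
      rw [tsum_eq_sum (s := S) (fun k hk => by
        have hzk := hout k hk
        by_cases h : lam k ≤ z
        · have : lam k = z := le_antisymm h hzk
          rw [if_pos h, this, sub_self, Real.zero_rpow (by linarith), mul_zero]
        · rw [if_neg h])]
      exact Finset.sum_congr rfl fun k hk => if_pos (hSz k hk).le
    have TD : ∑ k ∈ S, lam k * (z - lam k) ^ (ρ₁ - 1)
        ≤ ∑' k, (if lam k ≤ z then lam k * (z - lam k) ^ (ρ₁ - 1) else 0) := by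
      rw [tsum_eq_sum (s := Finset.range N) (fun k hk => by
        rw [if_neg (not_le.mpr (hN k (le_of_not_gt fun h => hk (Finset.mem_range.mpr h))))])]
      calc ∑ k ∈ S, lam k * (z - lam k) ^ (ρ₁ - 1)
          = ∑ k ∈ S, (if lam k ≤ z then lam k * (z - lam k) ^ (ρ₁ - 1) else 0) :=
            (Finset.sum_congr rfl fun k hk => (if_pos (hSz k hk).le).symm)
        _ ≤ _ := Finset.sum_le_sum_of_subset_of_nonneg (Finset.filter_subset _ _)
            (fun k _ _ => by
              by_cases h : lam k ≤ z
              · rw [if_pos h]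
                exact mul_nonneg (hpos k).le (Real.rpow_nonneg (by linarith) _)
              · rw [if_neg h])
    rw [TA ρ₁ hρ1pos, TA ρ₂ hρ2pos, TB]
    -- main finite-sum inequality via weighted Chebyshev
    set w : ℕ → ℝ := fun k => (z - lam k) ^ ρ₁ with hw
    set a : ℕ → ℝ := fun k => lam k / (z - lam k) with ha
    set b : ℕ → ℝ := fun k => (z - lam k) ^ (ρ₂ - ρ₁) with hb
    have hp : ∀ k ∈ S, 0 < z - lam k := fun k hk => by have := hSz k hk; linarith
    have EW : ∀ k ∈ S, (z - lam k) ^ ρ₁ = w k := fun k _ => rfl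
    have EAB : ∀ k ∈ S, lam k * (z - lam k) ^ (ρ₂ - 1) = w k * (a k * b k) := by
      intro k hk
      have hpk := hp k hk
      have hmul : (z - lam k) ^ ρ₁ * (z - lam k) ^ (ρ₂ - ρ₁) = (z - lam k) ^ ρ₂ := by
        rw [← Real.rpow_add hpk, show ρ₁ + (ρ₂ - ρ₁) = ρ₂ by ring]
      simp only [hw, ha, hb]
      rw [Real.rpow_sub hpk, Real.rpow_one, ← hmul]
      field_simp
    have EB : ∀ k ∈ S, (z - lam k) ^ ρ₂ = w k * b k := by
      intro k hk
      simp only [hw, hb, ← Real.rpow_add (hp k hk), show ρ₁ + (ρ₂ - ρ₁) = ρ₂ by ring]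
    have EA : ∀ k ∈ S, lam k * (z - lam k) ^ (ρ₁ - 1) = w k * a k := by
      intro k hk
      have hpk := hp k hk
      simp only [hw, ha]
      rw [Real.rpow_sub hpk, Real.rpow_one]
      field_simp
    rw [Finset.sum_congr rfl EAB, Finset.sum_congr rfl EW]
    have cheb := weighted_chebyshev' (s := S) w a b
      (fun i hi => Real.rpow_nonneg (hp i hi).le _)
      (by
        intro i hi j hj
        rcases le_total i j with hij | hij
        · have h1 : a i ≤ a j :=
            div_le_div₀ (hpos j).le (hmono hij) (hp j hj) (by have := hmono hij; linarith)
          have h2 : b j ≤ b i :=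
            Real.rpow_le_rpow (hp j hj).le (by have := hmono hij; linarith) (by linarith)
          nlinarith
        · have h1 : a j ≤ a i :=
            div_le_div₀ (hpos i).le (hmono hij) (hp i hi) (by have := hmono hij; linarith)
          have h2 : b i ≤ b j :=
            Real.rpow_le_rpow (hp i hi).le (by have := hmono hij; linarith) (by linarith)
          nlinarith)
    refine le_trans cheb ?_
    rw [← Finset.sum_congr rfl EA, ← Finset.sum_congr rfl EB, mul_comm]
    exact mul_le_mul_of_nonneg_left TD
      (Finset.sum_nonneg fun k hk => Real.rpow_nonneg (hp k hk).le _)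
end

section
/- Let d be a positive integer and (λ_k)_{k≥1} a nondecreasing sequence of positive real numbers with λ_k → ∞. Assume Yang's inequality: for all z ≥ 0, Σ_k (z−λ_k)_+^2 ≤ (4/d) Σ_k λ_k (z−λ_k)_+. Then for every real ρ with 1 < ρ ≤ 2 and every z ≥ 0: Σ_k (z−λ_k)_+^ρ ≤ (4/d) · Σ_k λ_k (z−λ_k)_+^{ρ−1}. -/
open MeasureTheory Real Filter Set

/-- Pairwise inequality used in the Chebyshev-type symmetrization. -/
lemma pair_ineq_aux (ρ : ℝ) (hρ1 : 1 < ρ) (hρ2 : ρ ≤ 2)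
    (x y μ ν : ℝ) (hy : 0 ≤ y) (hxy : y ≤ x) (hμ : 0 ≤ μ) (hμν : μ ≤ ν) :
    x ^ ρ * (ν * y) + y ^ ρ * (μ * x) ≤
      x ^ (2:ℝ) * (ν * y ^ (ρ-1)) + y ^ (2:ℝ) * (μ * x ^ (ρ-1)) := by
  have hρ0 : ρ ≠ 0 := by linarith
  rcases eq_or_lt_of_le hy with h0 | hy0
  · rw [← h0, Real.zero_rpow hρ0, Real.zero_rpow (by norm_num : (2:ℝ) ≠ 0),
      Real.zero_rpow (by intro h; nlinarith [h] : ρ - 1 ≠ 0)]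
    ring_nf
    nlinarith [Real.rpow_nonneg (hy.trans hxy) (ρ-1),
      mul_nonneg hμ (Real.rpow_nonneg (hy.trans hxy) (ρ-1))]
  · have hx0 : 0 < x := lt_of_lt_of_le hy0 hxy
    have hxab : x ^ (ρ-1) * x ^ (2-ρ) = x := by
      rw [← Real.rpow_add hx0]
      norm_num
    have hyce : y ^ (ρ-1) * y ^ (2-ρ) = y := by
      rw [← Real.rpow_add hy0]
      norm_num
    have exρ : x ^ ρ = x ^ (ρ-1) * x := by
      rw [← Real.rpow_add_one hx0.ne' (ρ-1)]; norm_num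
    have eyρ : y ^ ρ = y ^ (ρ-1) * y := by
      rw [← Real.rpow_add_one hy0.ne' (ρ-1)]; norm_num
    have ex2 : x ^ (2:ℝ) = x * x := by
      rw [show (2:ℝ) = 1 + 1 by norm_num, Real.rpow_add hx0, Real.rpow_one]
    have ey2 : y ^ (2:ℝ) = y * y := by
      rw [show (2:ℝ) = 1 + 1 by norm_num, Real.rpow_add hy0, Real.rpow_one]
    set a := x ^ (ρ-1) with hA
    set b := x ^ (2-ρ) with hB
    set c := y ^ (ρ-1) with hC
    set e := y ^ (2-ρ) with hE
    have ha : 0 ≤ a := Real.rpow_nonneg hx0.le _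
    have hc : 0 ≤ c := Real.rpow_nonneg hy0.le _
    have hbe : e ≤ b := Real.rpow_le_rpow hy hxy (by linarith)
    have hνμ : μ * y ≤ ν * x := mul_le_mul hμν hxy hy (hμ.trans hμν)
    have key : 0 ≤ a * c * (b - e) * (ν * x - μ * y) :=
      mul_nonneg (mul_nonneg (mul_nonneg ha hc) (by linarith)) (by linarith)
    rw [← hxab, ← hyce] at key
    rw [exρ, eyρ, ex2, ey2, ← hxab, ← hyce]
    nlinarith [key]

/-- Finite-sum version of the Riesz-mean inequality. -/
lemma finite_riesz_aux (C : ℝ) (hC : 0 ≤ C) (ρ : ℝ) (hρ1 : 1 < ρ) (hρ2 : ρ ≤ 2)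
    (s : Finset ℕ) (lam a : ℕ → ℝ) (hlam : ∀ k, 0 < lam k)
    (ha : ∀ k, 0 ≤ a k)
    (hmono : ∀ j k, j ≤ k → lam j ≤ lam k) (hanti : ∀ j k, j ≤ k → a k ≤ a j)
    (hyang : ∑ k ∈ s, a k ^ (2:ℝ) ≤ C * ∑ k ∈ s, lam k * a k) :
    ∑ k ∈ s, a k ^ ρ ≤ C * ∑ k ∈ s, lam k * a k ^ (ρ-1) := by
  have hρ0 : ρ ≠ 0 := by linarith
  have hsym : ∀ j ∈ s, ∀ k ∈ s,
      a j ^ ρ * (lam k * a k) + a k ^ ρ * (lam j * a j) ≤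
        a j ^ (2:ℝ) * (lam k * a k ^ (ρ-1)) + a k ^ (2:ℝ) * (lam j * a j ^ (ρ-1)) := by
    intro j _ k _
    rcases le_total j k with h | h
    · have := pair_ineq_aux ρ hρ1 hρ2 (a j) (a k) (lam j) (lam k)
        (ha k) (hanti j k h) (hlam j).le (hmono j k h)
      linarith
    · have := pair_ineq_aux ρ hρ1 hρ2 (a k) (a j) (lam k) (lam j)
        (ha j) (hanti k j h) (hlam k).le (hmono k j h)
      linarith
  have hdouble : ∑ j ∈ s, ∑ k ∈ s,
      (a j ^ ρ * (lam k * a k) + a k ^ ρ * (lam j * a j)) ≤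
      ∑ j ∈ s, ∑ k ∈ s,
      (a j ^ (2:ℝ) * (lam k * a k ^ (ρ-1)) + a k ^ (2:ℝ) * (lam j * a j ^ (ρ-1))) :=
    Finset.sum_le_sum fun j hj => Finset.sum_le_sum fun k hk => hsym j hj k hk
  simp only [Finset.sum_add_distrib] at hdouble
  have e1 : ∑ j ∈ s, ∑ k ∈ s, a k ^ ρ * (lam j * a j)
      = ∑ j ∈ s, ∑ k ∈ s, a j ^ ρ * (lam k * a k) := Finset.sum_comm
  have e2 : ∑ j ∈ s, ∑ k ∈ s, a k ^ (2:ℝ) * (lam j * a j ^ (ρ-1))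
      = ∑ j ∈ s, ∑ k ∈ s, a j ^ (2:ℝ) * (lam k * a k ^ (ρ-1)) := Finset.sum_comm
  rw [e1, e2] at hdouble
  have key : (∑ j ∈ s, a j ^ ρ) * (∑ k ∈ s, lam k * a k) ≤
      (∑ j ∈ s, a j ^ (2:ℝ)) * (∑ k ∈ s, lam k * a k ^ (ρ-1)) := by
    rw [Finset.sum_mul_sum, Finset.sum_mul_sum]
    linarith
  have hB1 : 0 ≤ ∑ k ∈ s, lam k * a k :=
    Finset.sum_nonneg fun k _ => mul_nonneg (hlam k).le (ha k)
  have hBρ : 0 ≤ ∑ k ∈ s, lam k * a k ^ (ρ-1) :=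
    Finset.sum_nonneg fun k _ => mul_nonneg (hlam k).le (Real.rpow_nonneg (ha k) _)
  rcases hB1.eq_or_lt with hB0 | hBpos
  · have hall : ∀ k ∈ s, a k = 0 := by
      intro k hk
      have h0 := (Finset.sum_eq_zero_iff_of_nonneg
        (fun i _ => mul_nonneg (hlam i).le (ha i))).1 hB0.symm k hk
      rcases mul_eq_zero.1 h0 with h | h
      · exact absurd h (hlam k).ne'
      · exact h
    have hz : ∑ k ∈ s, a k ^ ρ = 0 :=
      Finset.sum_eq_zero fun k hk => by rw [hall k hk]; exact Real.zero_rpow hρ0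
    rw [hz]
    exact mul_nonneg hC hBρ
  · have h1 : (∑ j ∈ s, a j ^ ρ) * (∑ k ∈ s, lam k * a k) ≤
        (C * (∑ k ∈ s, lam k * a k ^ (ρ-1))) * (∑ k ∈ s, lam k * a k) := by
      calc (∑ j ∈ s, a j ^ ρ) * (∑ k ∈ s, lam k * a k)
          ≤ (∑ j ∈ s, a j ^ (2:ℝ)) * (∑ k ∈ s, lam k * a k ^ (ρ-1)) := key
        _ ≤ (C * ∑ k ∈ s, lam k * a k) * (∑ k ∈ s, lam k * a k ^ (ρ-1)) :=
            mul_le_mul_of_nonneg_right hyang hBρ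
        _ = (C * (∑ k ∈ s, lam k * a k ^ (ρ-1))) * (∑ k ∈ s, lam k * a k) := by ring
    exact le_of_mul_le_mul_right h1 hBpos

/-- Riesz-mean inequalities for `1 < ρ ≤ 2` from Yang's inequality: if
`Σ_k (z-λ_k)_+² ≤ (4/d) Σ_k λ_k (z-λ_k)_+` for all `z ≥ 0`, then for `1 < ρ ≤ 2`
and `z ≥ 0`, `Σ_k (z-λ_k)_+^ρ ≤ (4/d) Σ_k λ_k (z-λ_k)_+^{ρ-1}`. -/
theorem riesz_mean_small_rho_from_yang (d : ℕ) (hd : 0 < d)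
    (lam : ℕ → ℝ) (hmono : Monotone lam) (hpos : ∀ k, 0 < lam k)
    (htend : Tendsto lam atTop atTop)
    (hyang : ∀ z ≥ (0 : ℝ),
      ∑' k, (max (z - lam k) 0) ^ (2 : ℝ) ≤
        4 / (d : ℝ) * ∑' k, lam k * max (z - lam k) 0)
    (ρ : ℝ) (hρ1 : 1 < ρ) (hρ2 : ρ ≤ 2) (z : ℝ) (hz : 0 ≤ z) :
    ∑' k, (max (z - lam k) 0) ^ ρ ≤
      4 / (d : ℝ) * ∑' k, lam k * (max (z - lam k) 0) ^ (ρ - 1) := by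
  have hρ0 : ρ ≠ 0 := by linarith
  have hρ10 : ρ - 1 ≠ 0 := by intro h; nlinarith [h]
  obtain ⟨N, hN⟩ := Filter.eventually_atTop.1 (htend.eventually_ge_atTop z)
  have ha0 : ∀ k, k ∉ Finset.range N → max (z - lam k) 0 = 0 := by
    intro k hk
    have hk' : N ≤ k := le_of_not_gt fun h => hk (Finset.mem_range.2 h)
    exact max_eq_right (by linarith [hN k hk'])
  have t2 : ∑' k, (max (z - lam k) 0) ^ (2:ℝ) =
      ∑ k ∈ Finset.range N, (max (z - lam k) 0) ^ (2:ℝ) :=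
    tsum_eq_sum fun k hk => by rw [ha0 k hk]; exact Real.zero_rpow (by norm_num)
  have t1 : ∑' k, lam k * max (z - lam k) 0 =
      ∑ k ∈ Finset.range N, lam k * max (z - lam k) 0 :=
    tsum_eq_sum fun k hk => by rw [ha0 k hk, mul_zero]
  have tρ : ∑' k, (max (z - lam k) 0) ^ ρ =
      ∑ k ∈ Finset.range N, (max (z - lam k) 0) ^ ρ :=
    tsum_eq_sum fun k hk => by rw [ha0 k hk]; exact Real.zero_rpow hρ0
  have tρ1 : ∑' k, lam k * (max (z - lam k) 0) ^ (ρ-1) =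
      ∑ k ∈ Finset.range N, lam k * (max (z - lam k) 0) ^ (ρ-1) :=
    tsum_eq_sum fun k hk => by rw [ha0 k hk, Real.zero_rpow hρ10, mul_zero]
  have hy := hyang z hz
  rw [t2, t1] at hy
  rw [tρ, tρ1]
  exact finite_riesz_aux (4 / (d : ℝ)) (by positivity) ρ hρ1 hρ2 (Finset.range N)
    lam (fun k => max (z - lam k) 0) hpos (fun k => le_max_right _ _)
    (fun j k h => hmono h)
    (fun j k h => max_le_max (by linarith [hmono h]) le_rfl) hy
end

section
/- Let d be a positive integer, ρ ≥ 2 a real number, and (λ_k)_{k≥1} a nondecreasing sequence of positive real numbers with λ_k → ∞ such that Z(t) = Σ_k e^{−λ_k t} < ∞ for every t > 0; set R_ρ(z) = Σ_k (z−λ_k)_+^ρ. Assume that the function z ↦ R_ρ(z)/z^{ρ+d/2} is nondecreasing on (0,∞) and that t^{d/2}·Z(t) → M as t → 0+, for some finite M. Then for every z₀ > 0: R_ρ(z₀)/z₀^{ρ+d/2} ≤ [Γ(ρ+1)/Γ(ρ+1+d/2)] · M. -/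
open MeasureTheory Real Filter Set

private lemma intOn_rpow_exp {s t : ℝ} (hs : -1 < s) (ht : 0 < t) :
    IntegrableOn (fun x : ℝ => x ^ s * Real.exp (-(t * x))) (Set.Ioi 0) := by
  have h := integrableOn_rpow_mul_exp_neg_mul_rpow (p := 1) (s := s) (b := t) hs zero_lt_one ht
  simp_rw [Real.rpow_one, neg_mul] at h
  exact h

private lemma int_rpow_exp {s t : ℝ} (hs : 0 < s + 1) (ht : 0 < t) :
    ∫ x in Set.Ioi (0:ℝ), x ^ s * Real.exp (-(t * x)) = (1/t) ^ (s+1) * Real.Gamma (s+1) := by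
  have h := integral_rpow_mul_exp_neg_mul_Ioi (a := s+1) (r := t) hs ht
  simp only [add_sub_cancel_right] at h
  exact h

private lemma F_int {ρ lam t : ℝ} (hρ : 0 < ρ) (ht : 0 < t) :
    Integrable (fun z : ℝ => (if lam ≤ z then (z - lam) ^ ρ else 0) * Real.exp (-(t * z))) ∧
    ∫ z : ℝ, (if lam ≤ z then (z - lam) ^ ρ else 0) * Real.exp (-(t * z)) =
      (1/t) ^ (ρ+1) * Real.Gamma (ρ+1) * Real.exp (-(lam * t)) := by
  set g : ℝ → ℝ := fun u => u ^ ρ * Real.exp (-(t * u)) * Real.exp (-(lam * t)) with hg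
  have hfeq : (fun z : ℝ => (if lam ≤ z then (z - lam) ^ ρ else 0) * Real.exp (-(t * z)))
      = fun z => (Set.Ioi (0:ℝ)).indicator g (z - lam) := by
    funext z
    rcases lt_trichotomy lam z with h|h|h
    · rw [if_pos h.le, Set.indicator_of_mem (by simp [h] : z - lam ∈ Set.Ioi (0:ℝ))]
      have : -(t*z) = -(t*(z-lam)) + -(lam*t) := by ring
      rw [hg, this, Real.exp_add]; ring
    · subst h
      rw [if_pos le_rfl, sub_self, Real.zero_rpow hρ.ne', zero_mul,
        Set.indicator_of_notMem (by simp)]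
    · rw [if_neg (not_le.2 h), zero_mul,
        Set.indicator_of_notMem (by simp [h.le] : z - lam ∉ Set.Ioi (0:ℝ))]
  have hind : Integrable ((Set.Ioi (0:ℝ)).indicator g) := by
    rw [integrable_indicator_iff measurableSet_Ioi]
    exact (intOn_rpow_exp (by linarith) ht).mul_const _
  have hcomp : Integrable (fun z : ℝ => (Set.Ioi (0:ℝ)).indicator g (z - lam)) := by
    simpa [sub_eq_add_neg] using hind.comp_add_right (-lam)
  constructor
  · rw [hfeq]; exact hcomp
  · rw [hfeq]
    calc ∫ z : ℝ, (Set.Ioi (0:ℝ)).indicator g (z - lam)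
        = ∫ z : ℝ, (Set.Ioi (0:ℝ)).indicator g z := by
          simpa [sub_eq_add_neg] using integral_add_right_eq_self ((Set.Ioi (0:ℝ)).indicator g) (-lam)
      _ = ∫ z in Set.Ioi (0:ℝ), g z := integral_indicator measurableSet_Ioi
      _ = (∫ z in Set.Ioi (0:ℝ), z ^ ρ * Real.exp (-(t * z))) * Real.exp (-(lam*t)) :=
          integral_mul_const _ _
      _ = (1/t) ^ (ρ+1) * Real.Gamma (ρ+1) * Real.exp (-(lam * t)) := by
          rw [int_rpow_exp (by linarith) ht]

/-- Berezin–Li–Yau from Kac, for `ρ ≥ 2`: if `z ↦ R_ρ(z)/z^{ρ+d/2}` is nondecreasing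
on `(0,∞)` and `t^{d/2} Z(t) → M` as `t → 0+`, then for every `z₀ > 0`,
`R_ρ(z₀)/z₀^{ρ+d/2} ≤ [Γ(ρ+1)/Γ(ρ+1+d/2)] M`. -/
theorem berezin_li_yau_from_kac (d : ℕ) (hd : 0 < d) (ρ : ℝ) (hρ : 2 ≤ ρ)
    (lam : ℕ → ℝ) (hmono : Monotone lam) (hpos : ∀ k, 0 < lam k)
    (htend : Tendsto lam atTop atTop)
    (hZ : ∀ t > (0 : ℝ), Summable fun k => Real.exp (-lam k * t))
    (M : ℝ)
    (hmonoR : MonotoneOn (fun z => rieszMean lam ρ z / z ^ (ρ + (d : ℝ) / 2))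
      (Ioi (0 : ℝ)))
    (hM : Tendsto (fun t => t ^ ((d : ℝ) / 2) * ∑' k, Real.exp (-lam k * t))
      (nhdsWithin 0 (Ioi (0 : ℝ))) (nhds M))
    (z₀ : ℝ) (hz₀ : 0 < z₀) :
    rieszMean lam ρ z₀ / z₀ ^ (ρ + (d : ℝ) / 2) ≤
      Gamma (ρ + 1) / Gamma (ρ + 1 + (d : ℝ) / 2) * M := by
  have hd2 : 0 < (d : ℝ) / 2 := by positivity
  set s : ℝ := ρ + (d : ℝ) / 2 with hs
  have hρ0 : (0:ℝ) < ρ := by linarith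
  have hs0 : (0:ℝ) < s := by rw [hs]; linarith
  set C : ℝ := rieszMean lam ρ z₀ / z₀ ^ s with hCdef
  have hsummite : ∀ z : ℝ, Summable (fun k => if lam k ≤ z then (z - lam k) ^ ρ else 0) := by
    intro z
    obtain ⟨N, hN⟩ := eventually_atTop.1 (htend.eventually (eventually_gt_atTop z))
    refine summable_of_ne_finset_zero (s := Finset.range N) (fun k hk => ?_)
    exact if_neg (not_le.2 (hN k (by simpa using hk)))
  have hitenn : ∀ z : ℝ, ∀ k, 0 ≤ (if lam k ≤ z then (z - lam k) ^ ρ else 0) := by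
    intro z k
    split
    · exact rpow_nonneg (by linarith [‹lam k ≤ z›]) _
    · exact le_rfl
  have hRnn : ∀ z, 0 ≤ rieszMean lam ρ z := fun z => tsum_nonneg (hitenn z)
  have hCnn : 0 ≤ C := div_nonneg (hRnn z₀) (rpow_nonneg hz₀.le s)
  -- key inequality
  have key : ∀ t : ℝ, t ∈ Ioi (0:ℝ) →
      C * (t ^ (s+1) * ∫ z in Ioi z₀, z ^ s * Real.exp (-(t*z))) ≤
      Gamma (ρ+1) * (t ^ ((d:ℝ)/2) * ∑' k, Real.exp (-lam k * t)) := by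
    intro t ht
    rw [mem_Ioi] at ht
    have hZt : Summable fun k => Real.exp (-lam k * t) := hZ t ht
    set Zt : ℝ := ∑' k, Real.exp (-lam k * t) with hZtdef
    have hZtnn : 0 ≤ Zt := tsum_nonneg fun k => (Real.exp_pos _).le
    have hIntLow : IntegrableOn (fun z => z ^ s * Real.exp (-(t*z))) (Ioi z₀) :=
      (intOn_rpow_exp (by linarith) ht).mono_set (Ioi_subset_Ioi hz₀.le)
    have hmain : C * ∫ z in Ioi z₀, z ^ s * Real.exp (-(t*z)) ≤
        (1/t) ^ (ρ+1) * Gamma (ρ+1) * Zt := by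
      have h1 : ENNReal.ofReal (∫ z in Ioi z₀, C * (z ^ s * Real.exp (-(t*z)))) =
          ∫⁻ z in Ioi z₀, ENNReal.ofReal (C * (z ^ s * Real.exp (-(t*z)))) :=
        ofReal_integral_eq_lintegral_ofReal (hIntLow.const_mul C)
          ((ae_restrict_iff' measurableSet_Ioi).2 (Eventually.of_forall fun z hz =>
            mul_nonneg hCnn (mul_nonneg
              (rpow_nonneg (le_of_lt (lt_trans hz₀ hz)) s) (Real.exp_pos _).le)))
      have h2 : (∫⁻ z in Ioi z₀, ENNReal.ofReal (C * (z ^ s * Real.exp (-(t*z))))) ≤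
          ∫⁻ z in Ioi z₀, ENNReal.ofReal (rieszMean lam ρ z * Real.exp (-(t*z))) := by
        refine lintegral_mono_ae ((ae_restrict_iff' measurableSet_Ioi).2
          (Eventually.of_forall fun z hz => ?_))
        rw [mem_Ioi] at hz
        have hz0 : (0:ℝ) < z := lt_trans hz₀ hz
        have hCz : C * z ^ s ≤ rieszMean lam ρ z := by
          have := hmonoR (mem_Ioi.2 hz₀) (mem_Ioi.2 hz0) hz.le
          exact (le_div_iff₀ (rpow_pos_of_pos hz0 s)).1 this
        exact ENNReal.ofReal_le_ofReal (by
          rw [← mul_assoc]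
          exact mul_le_mul_of_nonneg_right hCz (Real.exp_pos _).le)
      have h3 : (∫⁻ z in Ioi z₀, ENNReal.ofReal (rieszMean lam ρ z * Real.exp (-(t*z)))) ≤
          ∫⁻ z, ENNReal.ofReal (rieszMean lam ρ z * Real.exp (-(t*z))) :=
        setLIntegral_le_lintegral _ _
      have h4 : (∫⁻ z, ENNReal.ofReal (rieszMean lam ρ z * Real.exp (-(t*z)))) =
          ENNReal.ofReal ((1/t) ^ (ρ+1) * Gamma (ρ+1) * Zt) := by
        calc (∫⁻ z, ENNReal.ofReal (rieszMean lam ρ z * Real.exp (-(t*z))))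
            = ∫⁻ z, ∑' k, ENNReal.ofReal
                ((if lam k ≤ z then (z - lam k) ^ ρ else 0) * Real.exp (-(t*z))) := by
              refine lintegral_congr fun z => ?_
              rw [rieszMean, ← tsum_mul_right]
              exact ENNReal.ofReal_tsum_of_nonneg
                (fun k => mul_nonneg (hitenn z k) (Real.exp_pos _).le)
                ((hsummite z).mul_right _)
          _ = ∑' k, ∫⁻ z, ENNReal.ofReal
                ((if lam k ≤ z then (z - lam k) ^ ρ else 0) * Real.exp (-(t*z))) := by
              refine lintegral_tsum fun k => ?_
              refine (ENNReal.measurable_ofReal.comp ?_).aemeasurable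
              exact (Measurable.ite measurableSet_Ici
                ((measurable_id.sub_const _).pow_const _) measurable_const).mul
                ((measurable_const.mul measurable_id).neg.exp)
          _ = ∑' k, ENNReal.ofReal ((1/t) ^ (ρ+1) * Gamma (ρ+1) * Real.exp (-(lam k * t))) := by
              congr 1; funext k
              rw [← (F_int (lam := lam k) hρ0 ht).2,
                ← ofReal_integral_eq_lintegral_ofReal (F_int (lam := lam k) hρ0 ht).1
                  (Eventually.of_forall fun z =>
                    mul_nonneg (hitenn z k) (Real.exp_pos _).le)]
          _ = ENNReal.ofReal ((1/t) ^ (ρ+1) * Gamma (ρ+1) * Zt) := by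
              rw [← ENNReal.ofReal_tsum_of_nonneg (fun k => by positivity)
                (by simpa [neg_mul] using hZt.mul_left ((1/t) ^ (ρ+1) * Gamma (ρ+1)))]
              rw [tsum_mul_left, hZtdef]
              simp [neg_mul]
      have hcomb := ((h1 ▸ h2).trans h3).trans_eq h4
      have hle := (ENNReal.ofReal_le_ofReal_iff (by positivity)).1 hcomb
      rwa [integral_const_mul] at hle
    have e1 : t ^ (s+1) = t ^ (ρ+1) * t ^ ((d:ℝ)/2) := by
      rw [← rpow_add ht]; congr 1; rw [hs]; ring
    have e2 : t ^ (ρ+1) * ((1/t) ^ (ρ+1) * (Gamma (ρ+1) * Zt)) = Gamma (ρ+1) * Zt := by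
      rw [← mul_assoc, one_div, Real.inv_rpow ht.le,
        mul_inv_cancel₀ (rpow_pos_of_pos ht (ρ+1)).ne', one_mul]
    calc C * (t ^ (s+1) * ∫ z in Ioi z₀, z ^ s * Real.exp (-(t*z)))
        = t ^ ((d:ℝ)/2) * (t ^ (ρ+1) * (C * ∫ z in Ioi z₀, z ^ s * Real.exp (-(t*z)))) := by
          rw [e1]; ring
      _ ≤ t ^ ((d:ℝ)/2) * (t ^ (ρ+1) * ((1/t) ^ (ρ+1) * (Gamma (ρ+1) * Zt))) := by
          have h5 : C * ∫ z in Ioi z₀, z ^ s * Real.exp (-(t*z)) ≤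
              (1/t) ^ (ρ+1) * (Gamma (ρ+1) * Zt) := by rw [← mul_assoc]; exact hmain
          exact mul_le_mul_of_nonneg_left
            (mul_le_mul_of_nonneg_left h5 (rpow_nonneg ht.le (ρ+1)))
            (rpow_nonneg ht.le _)
      _ = Gamma (ρ+1) * (t ^ ((d:ℝ)/2) * Zt) := by rw [e2]; ring
  -- limit of the left side
  have hG : Tendsto (fun t => t ^ (s+1) * ∫ z in Ioi z₀, z ^ s * Real.exp (-(t*z)))
      (nhdsWithin 0 (Ioi (0:ℝ))) (nhds (Gamma (s+1))) := by
    have herr : Tendsto (fun t => t ^ (s+1) * ∫ z in Ioc 0 z₀, z ^ s * Real.exp (-(t*z)))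
        (nhdsWithin 0 (Ioi (0:ℝ))) (nhds 0) := by
      have hb : Tendsto (fun t : ℝ => t * (z₀ ^ s * z₀)) (nhdsWithin 0 (Ioi (0:ℝ))) (nhds 0) := by
        have : Tendsto (fun t : ℝ => t * (z₀ ^ s * z₀)) (nhds 0) (nhds 0) := by
          simpa using (continuous_mul_right (z₀ ^ s * z₀)).tendsto (0:ℝ)
        exact this.mono_left nhdsWithin_le_nhds
      refine squeeze_zero' ?_ ?_ hb
      · filter_upwards [self_mem_nhdsWithin] with t ht
        rw [mem_Ioi] at ht
        exact mul_nonneg (rpow_nonneg ht.le _)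
          (setIntegral_nonneg measurableSet_Ioc fun z hz => by
            have := hz.1; positivity)
      · filter_upwards [Ioc_mem_nhdsGT_of_mem (Set.mem_Ico.2 ⟨le_refl 0, zero_lt_one⟩)]
          with t ht
        obtain ⟨ht0, ht1⟩ := ht
        have hE : (∫ z in Ioc 0 z₀, z ^ s * Real.exp (-(t*z))) ≤ z₀ ^ s * z₀ := by
          have := norm_setIntegral_le_of_norm_le_const_ae' (μ := volume)
            (s := Ioc 0 z₀) (f := fun z => z ^ s * Real.exp (-(t*z)))
            (by rw [Real.volume_Ioc]; exact ENNReal.ofReal_lt_top)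
            (C := z₀ ^ s) (Eventually.of_forall fun z hz => ?_)
          · calc (∫ z in Ioc 0 z₀, z ^ s * Real.exp (-(t*z)))
                ≤ |∫ z in Ioc 0 z₀, z ^ s * Real.exp (-(t*z))| := le_abs_self _
              _ ≤ z₀ ^ s * (volume (Ioc (0:ℝ) z₀)).toReal := this
              _ = z₀ ^ s * z₀ := by
                  rw [Real.volume_Ioc, ENNReal.toReal_ofReal (by linarith)]
                  ring_nf
          · obtain ⟨hz0, hz1⟩ := hz
            rw [Real.norm_eq_abs, abs_of_nonneg (by positivity)]
            calc z ^ s * Real.exp (-(t*z)) ≤ z ^ s * 1 := by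
                  exact mul_le_mul_of_nonneg_left
                    (Real.exp_le_one_iff.2 (by nlinarith)) (rpow_nonneg hz0.le _)
              _ ≤ z₀ ^ s := by
                  rw [mul_one]; exact rpow_le_rpow hz0.le hz1 hs0.le
        have hts : t ^ (s+1) ≤ t := by
          calc t ^ (s+1) ≤ t ^ (1:ℝ) :=
                rpow_le_rpow_of_exponent_ge ht0 ht1 (by linarith)
            _ = t := rpow_one t
        calc t ^ (s+1) * ∫ z in Ioc 0 z₀, z ^ s * Real.exp (-(t*z))
            ≤ t ^ (s+1) * (z₀ ^ s * z₀) :=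
              mul_le_mul_of_nonneg_left hE (rpow_nonneg ht0.le _)
          _ ≤ t * (z₀ ^ s * z₀) := mul_le_mul_of_nonneg_right hts (by positivity)
    have hGeq : ∀ᶠ t in nhdsWithin 0 (Ioi (0:ℝ)),
        Gamma (s+1) - t ^ (s+1) * ∫ z in Ioc 0 z₀, z ^ s * Real.exp (-(t*z))
        = t ^ (s+1) * ∫ z in Ioi z₀, z ^ s * Real.exp (-(t*z)) := by
      filter_upwards [self_mem_nhdsWithin] with t ht
      rw [mem_Ioi] at ht
      have hIoc : IntegrableOn (fun z => z ^ s * Real.exp (-(t*z))) (Ioc 0 z₀) :=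
        (intOn_rpow_exp (by linarith) ht).mono_set Ioc_subset_Ioi_self
      have hIoi : IntegrableOn (fun z => z ^ s * Real.exp (-(t*z))) (Ioi z₀) :=
        (intOn_rpow_exp (by linarith) ht).mono_set (Ioi_subset_Ioi hz₀.le)
      have hsplit : (∫ z in Ioc 0 z₀, z ^ s * Real.exp (-(t*z))) +
          (∫ z in Ioi z₀, z ^ s * Real.exp (-(t*z))) =
          ∫ z in Ioi (0:ℝ), z ^ s * Real.exp (-(t*z)) := by
        rw [← setIntegral_union (Ioc_disjoint_Ioi le_rfl) measurableSet_Ioi hIoc hIoi,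
          Ioc_union_Ioi_eq_Ioi hz₀.le]
      have hval : ∫ z in Ioi (0:ℝ), z ^ s * Real.exp (-(t*z)) = (1/t) ^ (s+1) * Gamma (s+1) :=
        int_rpow_exp (by linarith) ht
      have hcancel : t ^ (s+1) * (1/t) ^ (s+1) = 1 := by
        rw [one_div, Real.inv_rpow ht.le, mul_inv_cancel₀ (rpow_pos_of_pos ht (s+1)).ne']
      have : (∫ z in Ioi z₀, z ^ s * Real.exp (-(t*z))) =
          (1/t) ^ (s+1) * Gamma (s+1) - ∫ z in Ioc 0 z₀, z ^ s * Real.exp (-(t*z)) := by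
        rw [← hval, ← hsplit]; ring
      rw [this, mul_sub, ← mul_assoc, hcancel, one_mul]
    refine Tendsto.congr' hGeq ?_
    have := tendsto_const_nhds.sub herr (f := fun _ : ℝ => Gamma (s+1))
    simpa using this
  have hlim1 : Tendsto (fun t => C * (t ^ (s+1) * ∫ z in Ioi z₀, z ^ s * Real.exp (-(t*z))))
      (nhdsWithin 0 (Ioi (0:ℝ))) (nhds (C * Gamma (s+1))) := tendsto_const_nhds.mul hG
  have hlim2 : Tendsto (fun t => Gamma (ρ+1) * (t ^ ((d:ℝ)/2) * ∑' k, Real.exp (-lam k * t)))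
      (nhdsWithin 0 (Ioi (0:ℝ))) (nhds (Gamma (ρ+1) * M)) := tendsto_const_nhds.mul hM
  have hfin : C * Gamma (s+1) ≤ Gamma (ρ+1) * M :=
    le_of_tendsto_of_tendsto hlim1 hlim2
      (eventually_nhdsWithin_of_forall key)
  have hΓs : Gamma (s+1) = Gamma (ρ + 1 + (d:ℝ)/2) := by
    congr 1; rw [hs]; ring
  have hΓpos : 0 < Gamma (ρ + 1 + (d:ℝ)/2) := Gamma_pos_of_pos (by linarith)
  rw [hΓs] at hfin
  have : C ≤ Gamma (ρ+1) * M / Gamma (ρ + 1 + (d:ℝ)/2) := (le_div_iff₀ hΓpos).2 hfin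
  calc rieszMean lam ρ z₀ / z₀ ^ (ρ + (d:ℝ)/2) = C := by rw [hCdef, hs]
    _ ≤ Gamma (ρ+1) * M / Gamma (ρ + 1 + (d:ℝ)/2) := this
    _ = Gamma (ρ+1) / Gamma (ρ + 1 + (d:ℝ)/2) * M := by ring
end

section
/- Let d be a positive integer, σ > 0, and (λ_k)_{k≥1} a nondecreasing sequence of positive real numbers with λ_k → ∞; set R_ρ(z) = Σ_k (z−λ_k)_+^ρ. Assume the modified Yang inequality: for all z ≥ 0, Σ_k (z−λ_k)_+^2 ≤ (4σ/d) Σ_k λ_k (z−λ_k)_+. Then for every real ρ ≥ 2 and every z ≥ 0: R_ρ(z) ≤ [ρ/(ρ + d/(2σ))] · z · R_{ρ−1}(z), and consequently the function z ↦ R_ρ(z)/z^{ρ+d/(2σ)} is nondecreasing on (0,∞). -/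
open MeasureTheory Real Filter Set

section AuxLemmas

open intervalIntegral

private lemma srml_rpow_mul_self (t c : ℝ) (ht : 0 ≤ t) (hc : -1 < c) :
    t ^ c * t = t ^ (c+1) := by
  rcases eq_or_lt_of_le ht with h | h
  · rw [← h, mul_zero, Real.zero_rpow (by linarith : c+1 ≠ 0)]
  · rw [← Real.rpow_add_one h.ne']

private lemma srml_hasDerivAt_maxpow {p : ℝ} (hp : 1 < p) (x : ℝ) :
    HasDerivAt (fun y => (max y 0) ^ p) (p * (max x 0) ^ (p - 1)) x := by
  rcases lt_trichotomy x 0 with hx | hx | hx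
  · have h0 : (max x 0 : ℝ) = 0 := max_eq_right hx.le
    rw [h0, Real.zero_rpow (by linarith), mul_zero]
    have : (fun y : ℝ => (max y 0) ^ p) =ᶠ[nhds x] fun _ => (0:ℝ) := by
      filter_upwards [eventually_lt_nhds hx] with y hy
      rw [max_eq_right hy.le, Real.zero_rpow (by positivity)]
    exact (hasDerivAt_const x 0).congr_of_eventuallyEq this
  · subst hx
    rw [max_self, Real.zero_rpow (by linarith), mul_zero]
    rw [hasDerivAt_iff_tendsto_slope]
    have hb : Tendsto (fun y : ℝ => |y| ^ (p - 1)) (nhdsWithin 0 {(0:ℝ)}ᶜ) (nhds 0) := by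
      have hc : ContinuousAt (fun y : ℝ => |y| ^ (p - 1)) 0 := by
        exact (Real.continuousAt_rpow_const _ _ (Or.inr (by linarith))).comp
          continuous_abs.continuousAt
      have := hc.tendsto.mono_left (nhdsWithin_le_nhds (s := {(0:ℝ)}ᶜ))
      simpa [abs_zero, Real.zero_rpow (show p - 1 ≠ 0 by linarith)] using this
    apply squeeze_zero_norm _ hb
    intro y
    simp only [slope_def_field, max_self, Real.zero_rpow (show p ≠ 0 by linarith)]
    rcases le_or_gt y 0 with hy | hy
    · rw [max_eq_right hy, Real.zero_rpow (show p ≠ 0 by linarith)]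
      simp [div_eq_mul_inv]
      positivity
    · rw [max_eq_left hy.le]
      have : y ^ p = y ^ (p-1) * y := by
        rw [← Real.rpow_add_one hy.ne' (p-1)]; ring_nf
      rw [sub_zero, sub_zero, this, mul_div_assoc, div_self hy.ne', mul_one]
      rw [Real.norm_eq_abs, abs_of_nonneg (by positivity), abs_of_nonneg hy.le]
  · have h0 : (max x 0 : ℝ) = x := max_eq_left hx.le
    rw [h0]
    have : (fun y : ℝ => (max y 0) ^ p) =ᶠ[nhds x] fun y => y ^ p := by
      filter_upwards [eventually_gt_nhds hx] with y hy
      rw [max_eq_left hy.le]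
    exact (Real.hasDerivAt_rpow_const (Or.inl hx.ne')).congr_of_eventuallyEq this

variable {c z lam : ℝ}

private lemma srml_beta1 (hc : -1 < c) {b : ℝ} (hb : 0 ≤ b) :
    ∫ t in (0:ℝ)..b, t ^ c * (b - t) = b ^ (c+2) / ((c+1)*(c+2)) := by
  have key : ∫ t in (0:ℝ)..b, t ^ c * (b - t) = ∫ t in (0:ℝ)..b, (b * t ^ c - t ^ (c+1)) := by
    apply integral_congr
    intro t ht
    rw [uIcc_of_le hb] at ht
    simp only
    rw [mul_sub, ← srml_rpow_mul_self t c ht.1 hc]; ring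
  rw [key, integral_sub ((intervalIntegrable_rpow' hc).const_mul b)
      (intervalIntegrable_rpow' (by linarith)),
    intervalIntegral.integral_const_mul, integral_rpow (Or.inl hc),
    integral_rpow (Or.inl (by linarith : (-1:ℝ) < c+1)),
    Real.zero_rpow (by linarith), Real.zero_rpow (by linarith)]
  rcases eq_or_lt_of_le hb with h | h
  · rw [← h, Real.zero_rpow (by linarith), Real.zero_rpow (by linarith),
      Real.zero_rpow (by linarith)]
    ring
  · have e1 : b * b ^ (c+1) = b ^ (c+2) := by
      rw [mul_comm, ← Real.rpow_add_one h.ne']; ring_nf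
    have h1 : c+1 ≠ 0 := by linarith
    have h2 : c+2 ≠ 0 := by linarith
    rw [show c+1+1 = c+2 by ring, sub_zero, sub_zero, ← mul_div_assoc, e1]
    field_simp
    ring

private lemma srml_beta2 (hc : -1 < c) {b : ℝ} (hb : 0 ≤ b) :
    ∫ t in (0:ℝ)..b, t ^ c * (b - t)^2 = b ^ (c+3) * 2 / ((c+1)*(c+2)*(c+3)) := by
  have key : ∫ t in (0:ℝ)..b, t ^ c * (b - t)^2
      = ∫ t in (0:ℝ)..b, (b^2 * t ^ c - 2*b * t ^ (c+1) + t ^ (c+2)) := by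
    apply integral_congr
    intro t ht
    rw [uIcc_of_le hb] at ht
    simp only
    have e1 : t ^ (c+1) = t ^ c * t := (srml_rpow_mul_self t c ht.1 hc).symm
    have e2 : t ^ (c+2) = t ^ (c+1) * t := by
      rw [srml_rpow_mul_self t (c+1) ht.1 (by linarith)]; ring_nf
    rw [e2, e1]; ring
  have i0 : IntervalIntegrable (fun t : ℝ => t ^ c) volume 0 b := intervalIntegrable_rpow' hc
  have i1 : IntervalIntegrable (fun t : ℝ => t ^ (c+1)) volume 0 b :=
    intervalIntegrable_rpow' (by linarith)
  have i2 : IntervalIntegrable (fun t : ℝ => t ^ (c+2)) volume 0 b :=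
    intervalIntegrable_rpow' (by linarith)
  rw [key, integral_add ((i0.const_mul _).sub (i1.const_mul _)) i2,
    integral_sub (i0.const_mul _) (i1.const_mul _),
    intervalIntegral.integral_const_mul, intervalIntegral.integral_const_mul,
    integral_rpow (Or.inl hc), integral_rpow (Or.inl (by linarith : (-1:ℝ) < c+1)),
    integral_rpow (Or.inl (by linarith : (-1:ℝ) < c+2)),
    Real.zero_rpow (by linarith), Real.zero_rpow (by linarith), Real.zero_rpow (by linarith)]
  rcases eq_or_lt_of_le hb with h | h
  · rw [← h, Real.zero_rpow (by linarith), Real.zero_rpow (by linarith),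
      Real.zero_rpow (by linarith), Real.zero_rpow (by linarith)]
    ring
  · have e1 : b * b ^ (c+1) = b ^ (c+2) := by
      rw [mul_comm, ← Real.rpow_add_one h.ne']; ring_nf
    have e2 : b^2 * b ^ (c+1) = b ^ (c+3) := by
      rw [show b^2 = b*b by ring, mul_assoc, e1, mul_comm, ← Real.rpow_add_one h.ne']; ring_nf
    have e3 : b * b ^ (c+2) = b ^ (c+3) := by
      rw [mul_comm, ← Real.rpow_add_one h.ne']; ring_nf
    have h1 : c+1 ≠ 0 := by linarith
    have h2 : c+2 ≠ 0 := by linarith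
    have h3 : c+3 ≠ 0 := by linarith
    rw [show c+1+1 = c+2 by ring, show c+2+1 = c+3 by ring, sub_zero, sub_zero, sub_zero]
    rw [← mul_div_assoc, ← mul_div_assoc, e2, show 2*b*b^(c+2) = 2*(b*b^(c+2)) by ring, e3]
    field_simp
    ring

private lemma srml_key1 (hc : -1 < c) (h0 : 0 ≤ lam) (hlz : lam ≤ z) :
    ∫ s in (0:ℝ)..z, (z-s)^c * max (s-lam) 0 = (z-lam)^(c+2)/((c+1)*(c+2)) := by
  have hfun : (fun s : ℝ => (z-s)^c * max (s-lam) 0)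
      = fun s => (fun t => t ^ c * max ((z-lam) - t) 0) (z - s) := by
    funext s; simp only; ring_nf
  rw [hfun, integral_comp_sub_left (fun t => t ^ c * max ((z-lam) - t) 0) z, sub_self, sub_zero]
  set b := z - lam with hb
  have hb0 : 0 ≤ b := by simp [hb]; linarith
  have hbz : b ≤ z := by simp [hb]; linarith
  have cmax : Continuous fun t : ℝ => max (b - t) 0 :=
    (continuous_const.sub continuous_id).max continuous_const
  have i1 : IntervalIntegrable (fun t : ℝ => t ^ c * max (b - t) 0) volume 0 b :=
    (intervalIntegrable_rpow' hc).mul_continuousOn cmax.continuousOn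
  have i2 : IntervalIntegrable (fun t : ℝ => t ^ c * max (b - t) 0) volume b z :=
    (intervalIntegrable_rpow' hc).mul_continuousOn cmax.continuousOn
  rw [← integral_add_adjacent_intervals i1 i2]
  have e1 : ∫ t in (0:ℝ)..b, t ^ c * max (b - t) 0 = ∫ t in (0:ℝ)..b, t ^ c * (b - t) := by
    apply integral_congr
    intro t ht
    rw [uIcc_of_le hb0] at ht
    simp only
    rw [max_eq_left (by linarith [ht.2])]
  have e2 : ∫ t in b..z, t ^ c * max (b - t) 0 = 0 := by
    have heq : EqOn (fun t : ℝ => t ^ c * max (b - t) 0) (fun _ => (0:ℝ)) (uIcc b z) := by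
      intro t ht
      rw [uIcc_of_le hbz] at ht
      simp only
      rw [max_eq_right (by linarith [ht.1]), mul_zero]
    rw [integral_congr heq]; simp
  rw [e1, e2, add_zero, srml_beta1 hc hb0]

private lemma srml_key2 (hc : -1 < c) (h0 : 0 ≤ lam) (hlz : lam ≤ z) :
    ∫ s in (0:ℝ)..z, (z-s)^c * (max (s-lam) 0)^2 = (z-lam)^(c+3)*2/((c+1)*(c+2)*(c+3)) := by
  have hfun : (fun s : ℝ => (z-s)^c * (max (s-lam) 0)^2)
      = fun s => (fun t => t ^ c * (max ((z-lam) - t) 0)^2) (z - s) := by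
    funext s; simp only; ring_nf
  rw [hfun, integral_comp_sub_left (fun t => t ^ c * (max ((z-lam) - t) 0)^2) z,
    sub_self, sub_zero]
  set b := z - lam with hb
  have hb0 : 0 ≤ b := by simp [hb]; linarith
  have hbz : b ≤ z := by simp [hb]; linarith
  have cmax : Continuous fun t : ℝ => (max (b - t) 0)^2 :=
    ((continuous_const.sub continuous_id).max continuous_const).pow 2
  have i1 : IntervalIntegrable (fun t : ℝ => t ^ c * (max (b - t) 0)^2) volume 0 b :=
    (intervalIntegrable_rpow' hc).mul_continuousOn cmax.continuousOn
  have i2 : IntervalIntegrable (fun t : ℝ => t ^ c * (max (b - t) 0)^2) volume b z :=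
    (intervalIntegrable_rpow' hc).mul_continuousOn cmax.continuousOn
  rw [← integral_add_adjacent_intervals i1 i2]
  have e1 : ∫ t in (0:ℝ)..b, t ^ c * (max (b - t) 0)^2
      = ∫ t in (0:ℝ)..b, t ^ c * (b - t)^2 := by
    apply integral_congr
    intro t ht
    rw [uIcc_of_le hb0] at ht
    simp only
    rw [max_eq_left (by linarith [ht.2])]
  have e2 : ∫ t in b..z, t ^ c * (max (b - t) 0)^2 = 0 := by
    have heq : EqOn (fun t : ℝ => t ^ c * (max (b - t) 0)^2) (fun _ => (0:ℝ)) (uIcc b z) := by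
      intro t ht
      rw [uIcc_of_le hbz] at ht
      simp only
      rw [max_eq_right (by linarith [ht.1])]
      simp
    rw [integral_congr heq]; simp
  rw [e1, e2, add_zero, srml_beta2 hc hb0]

/-- Core summed inequality obtained by integrating the Yang inequality
against the weight `(z-s)^(ρ-3)`. -/
private lemma srml_core (ρ z κ : ℝ) (hρ2 : 2 ≤ ρ) (hz : 0 ≤ z) (lam : ℕ → ℝ)
    (hpos : ∀ k, 0 < lam k)
    (S : Finset ℕ) (hSin : ∀ k ∈ S, lam k ≤ z)
    (hyangS : ∀ s ∈ Icc (0:ℝ) z,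
      κ * ∑ k ∈ S, (max (s - lam k) 0)^2 ≤ 2 * ∑ k ∈ S, lam k * max (s - lam k) 0) :
    κ * ∑ k ∈ S, (z - lam k) ^ ρ ≤ ρ * ∑ k ∈ S, lam k * (z - lam k) ^ (ρ - 1) := by
  rcases eq_or_lt_of_le hρ2 with h2 | h2
  · subst h2
    have := hyangS z ⟨hz, le_refl z⟩
    calc κ * ∑ k ∈ S, (z - lam k) ^ (2:ℝ)
        = κ * ∑ k ∈ S, (max (z - lam k) 0)^2 := by
          congr 1
          apply Finset.sum_congr rfl
          intro k hk
          rw [max_eq_left (by linarith [hSin k hk]), Real.rpow_two]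
      _ ≤ 2 * ∑ k ∈ S, lam k * max (z - lam k) 0 := this
      _ = 2 * ∑ k ∈ S, lam k * (z - lam k) ^ ((2:ℝ) - 1) := by
          congr 1
          apply Finset.sum_congr rfl
          intro k hk
          rw [max_eq_left (by linarith [hSin k hk])]
          norm_num
  · set c : ℝ := ρ - 3 with hcdef
    have hc : -1 < c := by rw [hcdef]; linarith
    have hbase : IntervalIntegrable (fun s : ℝ => (z - s) ^ c) volume 0 z := by
      have h := (intervalIntegrable_rpow' (a := z) (b := 0) hc).comp_sub_left z
      simpa using h
    have csum1 : Continuous fun s : ℝ => κ * ∑ k ∈ S, (max (s - lam k) 0)^2 :=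
      continuous_const.mul (continuous_finset_sum _ fun k _ =>
        ((continuous_id.sub continuous_const).max continuous_const).pow 2)
    have csum2 : Continuous fun s : ℝ => 2 * ∑ k ∈ S, lam k * max (s - lam k) 0 :=
      continuous_const.mul (continuous_finset_sum _ fun k _ =>
        continuous_const.mul ((continuous_id.sub continuous_const).max continuous_const))
    have iF : IntervalIntegrable
        (fun s : ℝ => (z-s)^c * (κ * ∑ k ∈ S, (max (s - lam k) 0)^2)) volume 0 z :=
      hbase.mul_continuousOn csum1.continuousOn
    have iG : IntervalIntegrable
        (fun s : ℝ => (z-s)^c * (2 * ∑ k ∈ S, lam k * max (s - lam k) 0)) volume 0 z :=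
      hbase.mul_continuousOn csum2.continuousOn
    have hFG : ∫ s in (0:ℝ)..z, (z-s)^c * (κ * ∑ k ∈ S, (max (s - lam k) 0)^2)
        ≤ ∫ s in (0:ℝ)..z, (z-s)^c * (2 * ∑ k ∈ S, lam k * max (s - lam k) 0) := by
      apply integral_mono_on hz iF iG
      intro s hs
      exact mul_le_mul_of_nonneg_left (hyangS s hs)
        (Real.rpow_nonneg (by linarith [hs.2]) c)
    have hFsum : ∀ s : ℝ, (z-s)^c * (κ * ∑ k ∈ S, (max (s - lam k) 0)^2)
        = ∑ k ∈ S, κ * ((z-s)^c * (max (s - lam k) 0)^2) := by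
      intro s
      rw [Finset.mul_sum, Finset.mul_sum]
      exact Finset.sum_congr rfl fun k _ => by ring
    have hGsum : ∀ s : ℝ, (z-s)^c * (2 * ∑ k ∈ S, lam k * max (s - lam k) 0)
        = ∑ k ∈ S, 2 * lam k * ((z-s)^c * max (s - lam k) 0) := by
      intro s
      rw [Finset.mul_sum, Finset.mul_sum]
      exact Finset.sum_congr rfl fun k _ => by ring
    have hFval : ∫ s in (0:ℝ)..z, (z-s)^c * (κ * ∑ k ∈ S, (max (s - lam k) 0)^2)
        = ∑ k ∈ S, κ * ((z - lam k)^(c+3)*2/((c+1)*(c+2)*(c+3))) := by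
      rw [show (fun s : ℝ => (z-s)^c * (κ * ∑ k ∈ S, (max (s - lam k) 0)^2))
          = fun s => ∑ k ∈ S, κ * ((z-s)^c * (max (s - lam k) 0)^2) from funext hFsum]
      have ik : ∀ k ∈ S, IntervalIntegrable
          (fun s : ℝ => κ * ((z-s)^c * (max (s - lam k) 0)^2)) volume 0 z := fun k _ =>
        (hbase.mul_continuousOn
          ((((continuous_id.sub continuous_const).max continuous_const).pow 2).continuousOn)).const_mul κ
      rw [intervalIntegral.integral_finset_sum ik]
      apply Finset.sum_congr rfl
      intro k hk
      rw [intervalIntegral.integral_const_mul, srml_key2 hc (hpos k).le (hSin k hk)]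
    have hGval : ∫ s in (0:ℝ)..z, (z-s)^c * (2 * ∑ k ∈ S, lam k * max (s - lam k) 0)
        = ∑ k ∈ S, 2 * lam k * ((z - lam k)^(c+2)/((c+1)*(c+2))) := by
      rw [show (fun s : ℝ => (z-s)^c * (2 * ∑ k ∈ S, lam k * max (s - lam k) 0))
          = fun s => ∑ k ∈ S, 2 * lam k * ((z-s)^c * max (s - lam k) 0) from funext hGsum]
      have ik : ∀ k ∈ S, IntervalIntegrable
          (fun s : ℝ => 2 * lam k * ((z-s)^c * max (s - lam k) 0)) volume 0 z := fun k _ =>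
        (hbase.mul_continuousOn
          (((continuous_id.sub continuous_const).max continuous_const).continuousOn)).const_mul
          (2 * lam k)
      rw [intervalIntegral.integral_finset_sum ik]
      apply Finset.sum_congr rfl
      intro k hk
      rw [intervalIntegral.integral_const_mul, srml_key1 hc (hpos k).le (hSin k hk)]
    rw [hFval, hGval] at hFG
    have hXY : (κ * ∑ k ∈ S, (z - lam k) ^ ρ) * (2/((c+1)*(c+2)*(c+3)))
        ≤ (∑ k ∈ S, lam k * (z - lam k) ^ (ρ-1)) * (2/((c+1)*(c+2))) := by
      calc (κ * ∑ k ∈ S, (z - lam k) ^ ρ) * (2/((c+1)*(c+2)*(c+3)))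
          = ∑ k ∈ S, κ * ((z - lam k)^(c+3)*2/((c+1)*(c+2)*(c+3))) := by
            rw [Finset.mul_sum, Finset.sum_mul, show c+3 = ρ by rw [hcdef]; ring]
            exact Finset.sum_congr rfl fun k _ => by ring
        _ ≤ ∑ k ∈ S, 2 * lam k * ((z - lam k)^(c+2)/((c+1)*(c+2))) := hFG
        _ = (∑ k ∈ S, lam k * (z - lam k) ^ (ρ-1)) * (2/((c+1)*(c+2))) := by
            rw [Finset.sum_mul, show c+2 = ρ-1 by rw [hcdef]; ring]
            exact Finset.sum_congr rfl fun k _ => by ring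
    have h1 : (0:ℝ) < c+1 := by rw [hcdef]; linarith
    have h2' : (0:ℝ) < c+2 := by rw [hcdef]; linarith
    have h3 : (0:ℝ) < c+3 := by rw [hcdef]; linarith
    have hρc : ρ = c + 3 := by rw [hcdef]; ring
    have := mul_le_mul_of_nonneg_right hXY
      (le_of_lt (by positivity : (0:ℝ) < ((c+1)*(c+2)*(c+3))/2))
    calc κ * ∑ k ∈ S, (z - lam k) ^ ρ
        = (κ * ∑ k ∈ S, (z - lam k) ^ ρ) * (2/((c+1)*(c+2)*(c+3))) * (((c+1)*(c+2)*(c+3))/2) := by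
          field_simp
      _ ≤ (∑ k ∈ S, lam k * (z - lam k) ^ (ρ-1)) * (2/((c+1)*(c+2))) * (((c+1)*(c+2)*(c+3))/2) :=
          this
      _ = (c+3) * ∑ k ∈ S, lam k * (z - lam k) ^ (ρ-1) := by
          field_simp
      _ = ρ * ∑ k ∈ S, lam k * (z - lam k) ^ (ρ-1) := by rw [← hρc]

end AuxLemmas

/-- Schrödinger version, `ρ ≥ 2`: under the modified Yang inequality
`Σ_k (z-λ_k)_+² ≤ (4σ/d) Σ_k λ_k (z-λ_k)_+`, for every `ρ ≥ 2` and `z ≥ 0`,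
`R_ρ(z) ≤ [ρ/(ρ+d/(2σ))] z R_{ρ-1}(z)`, and consequently
`z ↦ R_ρ(z)/z^{ρ+d/(2σ)}` is nondecreasing on `(0,∞)`. -/
theorem schrodinger_riesz_mean_large_rho (d : ℕ) (hd : 0 < d) (σ : ℝ) (hσ : 0 < σ)
    (lam : ℕ → ℝ) (hmono : Monotone lam) (hpos : ∀ k, 0 < lam k)
    (htend : Tendsto lam atTop atTop)
    (hyang : ∀ z ≥ (0 : ℝ),
      ∑' k, (max (z - lam k) 0) ^ (2 : ℝ) ≤
        4 * σ / (d : ℝ) * ∑' k, lam k * max (z - lam k) 0)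
    (ρ : ℝ) (hρ : 2 ≤ ρ) :
    (∀ z ≥ (0 : ℝ),
        rieszMean lam ρ z ≤
          ρ / (ρ + (d : ℝ) / (2 * σ)) * (z * rieszMean lam (ρ - 1) z)) ∧
      MonotoneOn (fun z => rieszMean lam ρ z / z ^ (ρ + (d : ℝ) / (2 * σ)))
        (Ioi (0 : ℝ)) := by
  have hd0 : (0:ℝ) < (d:ℝ) := by exact_mod_cast hd
  set κ : ℝ := (d : ℝ) / (2 * σ) with hκdef
  have hκpos : 0 < κ := by positivity
  have hρpos : (0:ℝ) < ρ := by linarith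
  have hρ1pos : (0:ℝ) < ρ - 1 := by linarith
  -- Part 1
  have part1 : ∀ z ≥ (0 : ℝ),
      rieszMean lam ρ z ≤ ρ / (ρ + κ) * (z * rieszMean lam (ρ - 1) z) := by
    intro z hz
    obtain ⟨N, hN⟩ := (htend.eventually (eventually_gt_atTop z)).exists_forall_of_atTop
    set S : Finset ℕ := (Finset.range N).filter (fun k => lam k ≤ z) with hSdef
    have hSin : ∀ k ∈ S, lam k ≤ z := fun k hk => (Finset.mem_filter.1 hk).2
    have hSout : ∀ k ∉ S, z < lam k := by
      intro k hk
      by_cases hkN : k < N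
      · by_contra h
        exact hk (Finset.mem_filter.2 ⟨Finset.mem_range.2 hkN, not_lt.1 h⟩)
      · exact hN k (not_lt.1 hkN)
    have hR : ∀ p : ℝ, p ≠ 0 → rieszMean lam p z = ∑ k ∈ S, (z - lam k) ^ p := by
      intro p hp
      unfold rieszMean
      rw [tsum_eq_sum (s := S) (fun k hk => by rw [if_neg (not_le.2 (hSout k hk))])]
      exact Finset.sum_congr rfl fun k hk => by rw [if_pos (hSin k hk)]
    have hyangS : ∀ s ∈ Icc (0:ℝ) z,
        κ * ∑ k ∈ S, (max (s - lam k) 0)^2 ≤ 2 * ∑ k ∈ S, lam k * max (s - lam k) 0 := by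
      intro s hs
      have h1 := hyang s hs.1
      have e1 : ∑' k, (max (s - lam k) 0) ^ (2:ℝ) = ∑ k ∈ S, (max (s - lam k) 0)^2 := by
        rw [tsum_eq_sum (s := S) (fun k hk => by
          rw [max_eq_right (by linarith [hSout k hk, hs.2]), Real.zero_rpow two_ne_zero])]
        exact Finset.sum_congr rfl fun k _ => Real.rpow_two _
      have e2 : ∑' k, lam k * max (s - lam k) 0 = ∑ k ∈ S, lam k * max (s - lam k) 0 := by
        rw [tsum_eq_sum (s := S) (fun k hk => by
          rw [max_eq_right (by linarith [hSout k hk, hs.2]), mul_zero])]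
      rw [e1, e2] at h1
      have hfac : κ * (4 * σ / d) = 2 := by
        rw [hκdef]; field_simp; ring
      calc κ * ∑ k ∈ S, (max (s - lam k) 0)^2
          ≤ κ * (4 * σ / d * ∑ k ∈ S, lam k * max (s - lam k) 0) :=
            mul_le_mul_of_nonneg_left h1 hκpos.le
        _ = 2 * ∑ k ∈ S, lam k * max (s - lam k) 0 := by rw [← mul_assoc, hfac]
    have hcore := srml_core ρ z κ hρ hz lam hpos S hSin hyangS
    have hpt : ∀ k ∈ S,
        z * (z - lam k) ^ (ρ-1) = (z - lam k) ^ ρ + lam k * (z - lam k) ^ (ρ-1) := by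
      intro k hk
      rcases eq_or_lt_of_le (hSin k hk) with h | h
      · rw [h, sub_self]
        simp [Real.zero_rpow (show ρ ≠ 0 by linarith),
          Real.zero_rpow (show ρ - 1 ≠ 0 by linarith)]
      · have hzl : (0:ℝ) < z - lam k := by linarith
        have hsplit : (z - lam k) ^ ρ = (z - lam k) ^ (ρ-1) * (z - lam k) := by
          rw [← Real.rpow_add_one hzl.ne' (ρ-1)]; ring_nf
        rw [hsplit]; ring
    have hsum : z * rieszMean lam (ρ-1) z
        = rieszMean lam ρ z + ∑ k ∈ S, lam k * (z - lam k) ^ (ρ-1) := by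
      rw [hR ρ (by linarith), hR (ρ-1) (by linarith), Finset.mul_sum, ← Finset.sum_add_distrib]
      exact Finset.sum_congr rfl hpt
    have hRρ : rieszMean lam ρ z = ∑ k ∈ S, (z - lam k) ^ ρ := hR ρ (by linarith)
    have hepos : (0:ℝ) < ρ + κ := by linarith
    rw [div_mul_eq_mul_div, le_div_iff₀ hepos, hsum, hRρ]
    nlinarith [hcore]
  refine ⟨part1, ?_⟩
  intro z1 hz1 z2 hz2 h12
  simp only [mem_Ioi] at hz1 hz2
  obtain ⟨N, hN⟩ := (htend.eventually (eventually_gt_atTop z2)).exists_forall_of_atTop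
  set S : Finset ℕ := (Finset.range N).filter (fun k => lam k ≤ z2) with hSdef
  have hSin : ∀ k ∈ S, lam k ≤ z2 := fun k hk => (Finset.mem_filter.1 hk).2
  have hSout : ∀ k ∉ S, z2 < lam k := by
    intro k hk
    by_cases hkN : k < N
    · by_contra h
      exact hk (Finset.mem_filter.2 ⟨Finset.mem_range.2 hkN, not_lt.1 h⟩)
    · exact hN k (not_lt.1 hkN)
  set e : ℝ := ρ + κ with hedef
  have hepos : (0:ℝ) < e := by rw [hedef]; linarith
  have hQR : ∀ p : ℝ, p ≠ 0 → ∀ t : ℝ, t ≤ z2 →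
      rieszMean lam p t = ∑ k ∈ S, (max (t - lam k) 0) ^ p := by
    intro p hp t ht
    unfold rieszMean
    rw [tsum_eq_sum (s := S)
      (fun k hk => if_neg (not_le.2 (lt_of_le_of_lt ht (hSout k hk))))]
    apply Finset.sum_congr rfl
    intro k hk
    by_cases hkt : lam k ≤ t
    · rw [if_pos hkt, max_eq_left (by linarith)]
    · rw [if_neg hkt, max_eq_right (by linarith [not_le.1 hkt]), Real.zero_rpow hp]
  have hG : ∀ t : ℝ, HasDerivAt (fun y => ∑ k ∈ S, (max (y - lam k) 0) ^ ρ)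
      (ρ * ∑ k ∈ S, (max (t - lam k) 0) ^ (ρ-1)) t := by
    intro t
    have hterm : ∀ k ∈ S, HasDerivAt (fun y : ℝ => (max (y - lam k) 0) ^ ρ)
        (ρ * (max (t - lam k) 0) ^ (ρ-1)) t := by
      intro k _
      have h1 := (srml_hasDerivAt_maxpow (by linarith : (1:ℝ) < ρ) (t - lam k)).comp t
        ((hasDerivAt_id t).sub_const (lam k))
      simpa [Function.comp_def] using h1
    have h2 := HasDerivAt.fun_sum hterm
    rw [Finset.mul_sum]
    exact h2
  have hFd : ∀ t : ℝ, 0 < t → HasDerivAt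
      (fun y => (∑ k ∈ S, (max (y - lam k) 0) ^ ρ) / y ^ e)
      (((ρ * ∑ k ∈ S, (max (t - lam k) 0) ^ (ρ-1)) * t ^ e
        - (∑ k ∈ S, (max (t - lam k) 0) ^ ρ) * (e * t ^ (e-1))) / (t ^ e)^2) t := by
    intro t ht
    exact (hG t).div (Real.hasDerivAt_rpow_const (Or.inl ht.ne'))
      (Real.rpow_pos_of_pos ht e).ne'
  have hDnn : ∀ t : ℝ, z1 ≤ t → t ≤ z2 →
      0 ≤ ((ρ * ∑ k ∈ S, (max (t - lam k) 0) ^ (ρ-1)) * t ^ e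
        - (∑ k ∈ S, (max (t - lam k) 0) ^ ρ) * (e * t ^ (e-1))) / (t ^ e)^2 := by
    intro t ht1 ht2
    have htpos : 0 < t := lt_of_lt_of_le hz1 ht1
    have hp1 := part1 t (by linarith)
    rw [hQR ρ (by linarith) t ht2, hQR (ρ-1) (by linarith) t ht2] at hp1
    have hkey : e * ∑ k ∈ S, (max (t - lam k) 0) ^ ρ
        ≤ ρ * (t * ∑ k ∈ S, (max (t - lam k) 0) ^ (ρ-1)) := by
      calc e * ∑ k ∈ S, (max (t - lam k) 0) ^ ρ
          ≤ e * (ρ / e * (t * ∑ k ∈ S, (max (t - lam k) 0) ^ (ρ-1))) :=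
            mul_le_mul_of_nonneg_left hp1 hepos.le
        _ = ρ * (t * ∑ k ∈ S, (max (t - lam k) 0) ^ (ρ-1)) := by
            field_simp
    apply div_nonneg _ (sq_nonneg _)
    have hte : t ^ e = t ^ (e-1) * t := by
      rw [← Real.rpow_add_one htpos.ne' (e-1)]; ring_nf
    have h0 : (0:ℝ) ≤ t ^ (e-1) := (Real.rpow_pos_of_pos htpos _).le
    calc (0:ℝ) ≤ t ^ (e-1) * (ρ * (t * ∑ k ∈ S, (max (t - lam k) 0) ^ (ρ-1))
          - e * ∑ k ∈ S, (max (t - lam k) 0) ^ ρ) := mul_nonneg h0 (by linarith)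
      _ = (ρ * ∑ k ∈ S, (max (t - lam k) 0) ^ (ρ-1)) * t ^ e
          - (∑ k ∈ S, (max (t - lam k) 0) ^ ρ) * (e * t ^ (e-1)) := by
          rw [hte]; ring
  have hmonoF : MonotoneOn (fun y => (∑ k ∈ S, (max (y - lam k) 0) ^ ρ) / y ^ e)
      (Icc z1 z2) := by
    apply monotoneOn_of_deriv_nonneg (convex_Icc z1 z2)
    · intro t ht
      exact ((hFd t (lt_of_lt_of_le hz1 ht.1)).continuousAt).continuousWithinAt
    · rw [interior_Icc]
      intro t ht
      exact ((hFd t (lt_of_lt_of_le hz1 ht.1.le)).differentiableAt).differentiableWithinAt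
    · rw [interior_Icc]
      intro t ht
      rw [(hFd t (lt_of_lt_of_le hz1 ht.1.le)).deriv]
      exact hDnn t ht.1.le ht.2.le
  have h1q := hQR ρ (by linarith : ρ ≠ 0) z1 h12
  have h2q := hQR ρ (by linarith : ρ ≠ 0) z2 le_rfl
  show rieszMean lam ρ z1 / z1 ^ e ≤ rieszMean lam ρ z2 / z2 ^ e
  rw [h1q, h2q]
  exact hmonoF ⟨le_rfl, h12⟩ ⟨h12, le_rfl⟩ h12
end

section
/- Let d be a positive integer, σ > 0, and (λ_k)_{k≥1} a nondecreasing sequence of positive real numbers with λ_k → ∞; set R_ρ(z) = Σ_k (z−λ_k)_+^ρ. Assume the modified Yang inequality: for all z ≥ 0, Σ_k (z−λ_k)_+^2 ≤ (4σ/d) Σ_k λ_k (z−λ_k)_+. Then for every real ρ with 1 < ρ ≤ 2 and every z ≥ 0: R_ρ(z) ≤ [1/(1 + d/(4σ))] · z · R_{ρ−1}(z), and consequently the function z ↦ R_ρ(z)/z^{ρ + ρd/(4σ)} is nondecreasing on (0,∞). -/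
open MeasureTheory Real Filter Set

lemma ramp_if {p : ℝ} (hp : p ≠ 0) (t u : ℝ) :
    (if u ≤ t then (t - u) ^ p else 0) = max (t - u) 0 ^ p := by
  rcases le_or_gt u t with h | h
  · rw [if_pos h, max_eq_left (by linarith)]
  · rw [if_neg (not_le.mpr h), max_eq_right (by linarith), Real.zero_rpow hp]

lemma cheb (s : Finset ℕ) (a b m : ℕ → ℝ)
    (h : ∀ i ∈ s, ∀ j ∈ s, (m i - m j) * (a i * b j - a j * b i) ≤ 0) :
    (∑ i ∈ s, m i * a i) * ∑ j ∈ s, b j ≤ (∑ i ∈ s, m i * b i) * ∑ j ∈ s, a j := by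
  have key : ∑ i ∈ s, ∑ j ∈ s, (m i - m j) * (a i * b j - a j * b i) ≤ 0 :=
    Finset.sum_nonpos fun i hi => Finset.sum_nonpos fun j hj => h i hi j hj
  have expand : ∑ i ∈ s, ∑ j ∈ s, (m i - m j) * (a i * b j - a j * b i)
      = 2 * ((∑ i ∈ s, m i * a i) * ∑ j ∈ s, b j
          - (∑ i ∈ s, m i * b i) * ∑ j ∈ s, a j) := by
    have inner : ∀ i, ∑ j ∈ s, (m i - m j) * (a i * b j - a j * b i)
        = (m i * a i) * (∑ j ∈ s, b j) - (m i * b i) * (∑ j ∈ s, a j)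
          - a i * (∑ j ∈ s, m j * b j) + b i * (∑ j ∈ s, m j * a j) := by
      intro i
      rw [Finset.mul_sum, Finset.mul_sum, Finset.mul_sum, Finset.mul_sum,
        ← Finset.sum_sub_distrib, ← Finset.sum_sub_distrib, ← Finset.sum_add_distrib]
      exact Finset.sum_congr rfl fun j _ => by ring
    rw [Finset.sum_congr rfl fun i _ => inner i]
    rw [Finset.sum_add_distrib, Finset.sum_sub_distrib, Finset.sum_sub_distrib,
      ← Finset.sum_mul, ← Finset.sum_mul, ← Finset.sum_mul, ← Finset.sum_mul]
    ring
  linarith [expand ▸ key]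

lemma riesz_part1 (d : ℕ) (hd : 0 < d) (σ : ℝ) (hσ : 0 < σ)
    (lam : ℕ → ℝ) (hmono : Monotone lam) (hpos : ∀ k, 0 < lam k)
    (htend : Tendsto lam atTop atTop)
    (hyang : ∀ z ≥ (0 : ℝ),
      ∑' k, (max (z - lam k) 0) ^ (2 : ℝ) ≤
        4 * σ / (d : ℝ) * ∑' k, lam k * max (z - lam k) 0)
    (ρ : ℝ) (hρ1 : 1 < ρ) (hρ2 : ρ ≤ 2) (z : ℝ) (hz : 0 ≤ z) :
    rieszMean lam ρ z ≤ 1 / (1 + (d : ℝ) / (4 * σ)) * (z * rieszMean lam (ρ - 1) z) := by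
  have hρ0 : ρ ≠ 0 := ne_of_gt (by linarith)
  have hρ10 : ρ - 1 ≠ 0 := ne_of_gt (by linarith)
  have hd0 : (0:ℝ) < (d:ℝ) := Nat.cast_pos.mpr hd
  obtain ⟨N, hN⟩ := Filter.eventually_atTop.mp (Filter.tendsto_atTop.mp htend (z + 1))
  set c : ℝ := 4 * σ / d with hc_def
  have hc : 0 < c := by positivity
  set s : Finset ℕ := (Finset.range N).filter fun k => lam k < z with hs_def
  have hmem : ∀ k ∈ s, lam k < z := fun k hk => (Finset.mem_filter.mp hk).2
  have hout : ∀ k ∉ s, z - lam k ≤ 0 := by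
    intro k hk
    by_contra hcon
    push_neg at hcon
    have hkz : lam k < z := by linarith
    have hkN : k < N := by
      by_contra hk2
      push_neg at hk2
      have := hN k hk2
      linarith
    exact hk (Finset.mem_filter.mpr ⟨Finset.mem_range.mpr hkN, hkz⟩)
  have hmax0 : ∀ k ∉ s, max (z - lam k) 0 = 0 := fun k hk => max_eq_right (hout k hk)
  have hmaxs : ∀ k ∈ s, max (z - lam k) 0 = z - lam k :=
    fun k hk => max_eq_left (by have := hmem k hk; linarith)
  have hxpos : ∀ k ∈ s, 0 < z - lam k := fun k hk => by have := hmem k hk; linarith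
  have hRconv : ∀ p : ℝ, p ≠ 0 → rieszMean lam p z = ∑ k ∈ s, (z - lam k) ^ p := by
    intro p hp
    unfold rieszMean
    rw [tsum_eq_sum (s := s) (fun k hk => by
      rw [ramp_if hp, hmax0 k hk, Real.zero_rpow hp])]
    exact Finset.sum_congr rfl fun k hk => if_pos (le_of_lt (hmem k hk))
  have hY1 : ∑' k, (max (z - lam k) 0) ^ (2:ℝ) = ∑ k ∈ s, (z - lam k) ^ (2:ℝ) := by
    rw [tsum_eq_sum (s := s) (fun k hk => by rw [hmax0 k hk, Real.zero_rpow two_ne_zero])]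
    exact Finset.sum_congr rfl fun k hk => by rw [hmaxs k hk]
  have hY2 : ∑' k, lam k * max (z - lam k) 0 = ∑ k ∈ s, lam k * (z - lam k) := by
    rw [tsum_eq_sum (s := s) (fun k hk => by rw [hmax0 k hk, mul_zero])]
    exact Finset.sum_congr rfl fun k hk => by rw [hmaxs k hk]
  rcases Finset.eq_empty_or_nonempty s with hse | hsne
  · rw [hRconv ρ hρ0, hRconv (ρ-1) hρ10, hse]
    simp only [Finset.sum_empty, mul_zero]
    norm_num
  set a : ℕ → ℝ := fun k => (z - lam k) ^ (2:ℝ) with ha_def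
  set b : ℕ → ℝ := fun k => c * (lam k * (z - lam k)) with hb_def
  set mm : ℕ → ℝ := fun k => (z - lam k) ^ (ρ - 2) with hm_def
  have hsq : ∀ x : ℝ, x ^ (2:ℝ) = x * x := by
    intro x
    rw [show (2:ℝ) = ((2:ℕ):ℝ) by norm_num, Real.rpow_natCast]
    ring
  have key : ∀ u ∈ s, ∀ v ∈ s, lam u ≤ lam v →
      (mm u - mm v) * (a u * b v - a v * b u) ≤ 0 := by
    intro u hu v hv huv
    have hxu := hxpos u hu
    have hxv := hxpos v hv
    have hlu := hpos u
    have hlv := hpos v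
    have hm : mm u ≤ mm v :=
      Real.rpow_le_rpow_of_nonpos hxv (by linarith) (by linarith)
    have h2 : 0 ≤ a u * b v - a v * b u := by
      have e : a u * b v - a v * b u
          = c * (z - lam u) * (z - lam v) * (z * (lam v - lam u)) := by
        simp only [ha_def, hb_def, hsq]
        ring
      rw [e]
      have : 0 ≤ lam v - lam u := by linarith
      positivity
    exact mul_nonpos_of_nonpos_of_nonneg (by linarith) h2
  have hsign : ∀ i ∈ s, ∀ j ∈ s, (mm i - mm j) * (a i * b j - a j * b i) ≤ 0 := by
    intro i hi j hj
    rcases le_total (lam i) (lam j) with h | h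
    · exact key i hi j hj h
    · have h1 := key j hj i hi h
      nlinarith [h1]
  have hab : ∑ k ∈ s, a k ≤ ∑ k ∈ s, b k := by
    have h := hyang z hz
    rw [hY1, hY2] at h
    calc ∑ k ∈ s, a k = ∑ k ∈ s, (z - lam k) ^ (2:ℝ) := rfl
      _ ≤ c * ∑ k ∈ s, lam k * (z - lam k) := h
      _ = ∑ k ∈ s, b k := Finset.mul_sum _ _ _
  have hcheb := cheb s a b mm hsign
  have hbpos : 0 < ∑ k ∈ s, b k :=
    Finset.sum_pos (fun k hk => by
      have h1 := hxpos k hk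
      have h2 := hpos k
      positivity) hsne
  have hanon : 0 ≤ ∑ k ∈ s, a k :=
    Finset.sum_nonneg fun k hk => Real.rpow_nonneg (le_of_lt (hxpos k hk)) _
  have hmbnon : 0 ≤ ∑ k ∈ s, mm k * b k :=
    Finset.sum_nonneg fun k hk => by
      have h1 := hxpos k hk
      have h2 := hpos k
      have h3 : 0 ≤ mm k := Real.rpow_nonneg (le_of_lt h1) _
      positivity
  have hma_le : ∑ k ∈ s, mm k * a k ≤ ∑ k ∈ s, mm k * b k := by
    have h1 : (∑ k ∈ s, mm k * a k) * ∑ k ∈ s, b k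
        ≤ (∑ k ∈ s, mm k * b k) * ∑ k ∈ s, b k := by
      calc (∑ k ∈ s, mm k * a k) * ∑ k ∈ s, b k
          ≤ (∑ k ∈ s, mm k * b k) * ∑ k ∈ s, a k := hcheb
        _ ≤ (∑ k ∈ s, mm k * b k) * ∑ k ∈ s, b k := by
            exact mul_le_mul_of_nonneg_left hab hmbnon
    exact le_of_mul_le_mul_right h1 hbpos
  have hma : ∑ k ∈ s, mm k * a k = ∑ k ∈ s, (z - lam k) ^ ρ :=
    Finset.sum_congr rfl fun k hk => by
      have hx := hxpos k hk
      rw [hm_def, ha_def]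
      rw [← Real.rpow_add hx]
      norm_num
  have hmb : ∑ k ∈ s, mm k * b k
      = c * (z * (∑ k ∈ s, (z - lam k) ^ (ρ-1)) - ∑ k ∈ s, (z - lam k) ^ ρ) := by
    have e : ∀ k ∈ s, mm k * b k
        = c * (z * (z - lam k) ^ (ρ-1) - (z - lam k) ^ ρ) := by
      intro k hk
      have hx := hxpos k hk
      have e1 : (z - lam k) ^ (ρ-2) * (z - lam k) = (z - lam k) ^ (ρ-1) := by
        nth_rewrite 2 [← Real.rpow_one (z - lam k)]
        rw [← Real.rpow_add hx]
        congr 1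
        ring
      have e2 : (z - lam k) ^ (ρ-1) * (z - lam k) = (z - lam k) ^ ρ := by
        nth_rewrite 2 [← Real.rpow_one (z - lam k)]
        rw [← Real.rpow_add hx]
        congr 1
        ring
      have hlam : lam k = z - (z - lam k) := by ring
      calc mm k * b k = c * ((z - lam k) ^ (ρ-2) * (z - lam k)) * lam k := by
            rw [hm_def, hb_def]; ring
        _ = c * (z - lam k) ^ (ρ-1) * (z - (z - lam k)) := by rw [e1, ← hlam]
        _ = c * (z * (z - lam k) ^ (ρ-1) - (z - lam k) ^ (ρ-1) * (z - lam k)) := by ring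
        _ = c * (z * (z - lam k) ^ (ρ-1) - (z - lam k) ^ ρ) := by rw [e2]
    rw [Finset.sum_congr rfl e]
    rw [← Finset.mul_sum, Finset.sum_sub_distrib, ← Finset.mul_sum]
  rw [hma, hmb] at hma_le
  rw [hRconv ρ hρ0, hRconv (ρ-1) hρ10]
  set S := ∑ k ∈ s, (z - lam k) ^ ρ
  set T := ∑ k ∈ s, (z - lam k) ^ (ρ-1)
  have hkey : 1 / (1 + (d:ℝ) / (4*σ)) = c / (1 + c) := by
    rw [hc_def]
    field_simp
    ring
  rw [hkey]
  rw [div_mul_eq_mul_div, le_div_iff₀ (by linarith)]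
  nlinarith [hma_le]


lemma hasDerivAt_rampPow {p : ℝ} (hp : 1 < p) (t : ℝ) :
    HasDerivAt (fun s : ℝ => max s 0 ^ p) (p * max t 0 ^ (p - 1)) t := by
  have hp0 : p ≠ 0 := by linarith
  have hp1 : p - 1 ≠ 0 := by intro h; nlinarith [h]
  rcases lt_trichotomy t 0 with ht | ht | ht
  · -- t < 0 : function vanishes near t
    have hmax : max t 0 = 0 := max_eq_right ht.le
    have : HasDerivAt (fun _ : ℝ => (0 : ℝ)) 0 t := hasDerivAt_const t 0
    have heq : (fun s : ℝ => max s 0 ^ p) =ᶠ[nhds t] fun _ => (0 : ℝ) := by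
      filter_upwards [Iio_mem_nhds ht] with s hs
      rw [max_eq_right (le_of_lt hs), Real.zero_rpow hp0]
    rw [hmax, Real.zero_rpow hp1, mul_zero]
    exact this.congr_of_eventuallyEq heq
  · -- t = 0 : slope argument
    subst ht
    have hval : max (0:ℝ) 0 ^ (p - 1) = 0 := by
      rw [max_self, Real.zero_rpow hp1]
    rw [hval, mul_zero]
    rw [hasDerivAt_iff_tendsto_slope]
    have hbound : ∀ s : ℝ, |slope (fun s : ℝ => max s 0 ^ p) 0 s| ≤ |s| ^ (p - 1) := by
      intro s
      rcases le_or_gt s 0 with hs | hs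
      · have : max s 0 = 0 := max_eq_right hs
        simp [slope, this, Real.zero_rpow hp0, max_self]
        positivity
      · have h1 : max s 0 = s := max_eq_left hs.le
        have h2 : max (0:ℝ) 0 ^ p = 0 := by rw [max_self, Real.zero_rpow hp0]
        rw [slope_def_field]
        rw [h1, h2, sub_zero, sub_zero, div_eq_mul_inv, ← Real.rpow_neg_one s,
          ← Real.rpow_add hs, abs_of_pos (Real.rpow_pos_of_pos hs _),
          abs_of_pos hs]
        norm_num [sub_eq_add_neg]
    have hg : Tendsto (fun s : ℝ => |s| ^ (p - 1)) (nhds 0) (nhds 0) := by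
      have hc : ContinuousAt (fun x : ℝ => x ^ (p - 1)) 0 :=
        Real.continuousAt_rpow_const 0 (p - 1) (Or.inr (by linarith))
      have h2 : ContinuousAt (fun s : ℝ => |s| ^ (p - 1)) 0 := by
        have hc' : ContinuousAt (fun x : ℝ => x ^ (p - 1)) |(0:ℝ)| := by
          simpa [abs_zero] using hc
        exact hc'.comp continuous_abs.continuousAt
      simpa [Real.zero_rpow hp1] using h2.tendsto
    refine squeeze_zero_norm (fun s => ?_) (hg.mono_left nhdsWithin_le_nhds)
    simpa using hbound s
  · -- t > 0
    have hmax : max t 0 = t := max_eq_left ht.le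
    have h : HasDerivAt (fun s : ℝ => s ^ p) (p * t ^ (p - 1)) t :=
      Real.hasDerivAt_rpow_const (Or.inl (ne_of_gt ht))
    have heq : (fun s : ℝ => max s 0 ^ p) =ᶠ[nhds t] fun s => s ^ p := by
      filter_upwards [Ioi_mem_nhds ht] with s hs
      rw [max_eq_left (le_of_lt hs)]
    rw [hmax]
    exact h.congr_of_eventuallyEq heq



/-- Schrödinger version, `1 < ρ ≤ 2`: under the modified Yang inequality
`Σ_k (z-λ_k)_+² ≤ (4σ/d) Σ_k λ_k (z-λ_k)_+`, for every `1 < ρ ≤ 2` and `z ≥ 0`,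
`R_ρ(z) ≤ [1/(1+d/(4σ))] z R_{ρ-1}(z)`, and consequently
`z ↦ R_ρ(z)/z^{ρ+ρd/(4σ)}` is nondecreasing on `(0,∞)`. -/
theorem schrodinger_riesz_mean_small_rho (d : ℕ) (hd : 0 < d) (σ : ℝ) (hσ : 0 < σ)
    (lam : ℕ → ℝ) (hmono : Monotone lam) (hpos : ∀ k, 0 < lam k)
    (htend : Tendsto lam atTop atTop)
    (hyang : ∀ z ≥ (0 : ℝ),
      ∑' k, (max (z - lam k) 0) ^ (2 : ℝ) ≤
        4 * σ / (d : ℝ) * ∑' k, lam k * max (z - lam k) 0)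
    (ρ : ℝ) (hρ1 : 1 < ρ) (hρ2 : ρ ≤ 2) :
    (∀ z ≥ (0 : ℝ),
        rieszMean lam ρ z ≤
          1 / (1 + (d : ℝ) / (4 * σ)) * (z * rieszMean lam (ρ - 1) z)) ∧
      MonotoneOn (fun z => rieszMean lam ρ z / z ^ (ρ + ρ * (d : ℝ) / (4 * σ)))
        (Ioi (0 : ℝ)) := by
  have hpart1 : ∀ z ≥ (0:ℝ), rieszMean lam ρ z ≤
      1 / (1 + (d : ℝ) / (4 * σ)) * (z * rieszMean lam (ρ - 1) z) :=
    fun z hz => riesz_part1 d hd σ hσ lam hmono hpos htend hyang ρ hρ1 hρ2 z hz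
  refine ⟨hpart1, ?_⟩
  set γ : ℝ := ρ + ρ * (d:ℝ) / (4 * σ) with hγ_def
  intro z1 hz1 z2 hz2 h12
  rw [mem_Ioi] at hz1 hz2
  have hρ0 : ρ ≠ 0 := ne_of_gt (by linarith)
  have hρ10 : ρ - 1 ≠ 0 := ne_of_gt (by linarith)
  have hd0 : (0:ℝ) < (d:ℝ) := Nat.cast_pos.mpr hd
  have hD : (0:ℝ) < (d:ℝ)/(4*σ) := by positivity
  obtain ⟨N, hN⟩ := Filter.eventually_atTop.mp (Filter.tendsto_atTop.mp htend (z2 + 1))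
  set F : ℝ → ℝ := fun z => ∑ k ∈ Finset.range N, max (z - lam k) 0 ^ ρ with hF_def
  set G : ℝ → ℝ := fun z => ∑ k ∈ Finset.range N, max (z - lam k) 0 ^ (ρ-1) with hG_def
  have hconv : ∀ p : ℝ, p ≠ 0 → ∀ z, z ≤ z2 →
      rieszMean lam p z = ∑ k ∈ Finset.range N, max (z - lam k) 0 ^ p := by
    intro p hp z hzz
    unfold rieszMean
    rw [tsum_congr (fun k => ramp_if hp z (lam k))]
    refine tsum_eq_sum ?_
    intro k hk
    have hNk : N ≤ k := le_of_not_gt fun h => hk (Finset.mem_range.mpr h)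
    have h1 := hN k hNk
    have hm : max (z - lam k) 0 = 0 := max_eq_right (by linarith)
    rw [hm, Real.zero_rpow hp]
  have hFr : ∀ z, z ≤ z2 → rieszMean lam ρ z = F z := fun z hzz => hconv ρ hρ0 z hzz
  have hGr : ∀ z, z ≤ z2 → rieszMean lam (ρ-1) z = G z := fun z hzz => hconv (ρ-1) hρ10 z hzz
  have hF' : ∀ z : ℝ, HasDerivAt F (ρ * G z) z := by
    intro z
    have h1 : ∀ k ∈ Finset.range N,
        HasDerivAt (fun w : ℝ => max (w - lam k) 0 ^ ρ)
          (ρ * max (z - lam k) 0 ^ (ρ-1)) z := by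
      intro k _
      have := (hasDerivAt_rampPow hρ1 (z - lam k)).comp z
        ((hasDerivAt_id z).sub_const (lam k))
      rw [mul_one] at this; exact this
    have h2 := HasDerivAt.fun_sum h1
    rw [hG_def]
    simpa [Finset.mul_sum] using h2
  set q : ℝ → ℝ := fun z => F z / z ^ γ with hq_def
  have hq' : ∀ z : ℝ, 0 < z → HasDerivAt q
      ((ρ * G z * z ^ γ - F z * (γ * z ^ (γ-1))) / (z ^ γ)^2) z := by
    intro z hz
    have hder : HasDerivAt (fun z : ℝ => z ^ γ) (γ * z ^ (γ-1)) z :=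
      Real.hasDerivAt_rpow_const (Or.inl (ne_of_gt hz))
    exact (hF' z).div hder (ne_of_gt (Real.rpow_pos_of_pos hz γ))
  have hmono2 : MonotoneOn q (Icc z1 z2) := by
    apply monotoneOn_of_deriv_nonneg (convex_Icc z1 z2)
    · intro z hzI
      exact ((hq' z (lt_of_lt_of_le hz1 hzI.1)).continuousAt).continuousWithinAt
    · intro z hzI
      rw [interior_Icc] at hzI
      exact ((hq' z (lt_trans hz1 hzI.1)).differentiableAt).differentiableWithinAt
    · intro z hzI
      rw [interior_Icc] at hzI
      obtain ⟨hza, hzb⟩ := hzI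
      have hz0 : 0 < z := lt_trans hz1 hza
      rw [(hq' z hz0).deriv]
      apply div_nonneg _ (sq_nonneg _)
      have hp1 := hpart1 z (le_of_lt hz0)
      rw [hFr z (le_of_lt hzb), hGr z (le_of_lt hzb)] at hp1
      have h1 : (0:ℝ) < 1 + (d:ℝ)/(4*σ) := by linarith
      have h2 : γ = ρ * (1 + (d:ℝ)/(4*σ)) := by rw [hγ_def]; ring
      have hkey : γ * F z ≤ ρ * (z * G z) := by
        calc γ * F z ≤ γ * (1/(1+(d:ℝ)/(4*σ)) * (z * G z)) := by
              apply mul_le_mul_of_nonneg_left hp1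
              rw [h2]; positivity
          _ = ρ * (z * G z) := by rw [h2]; field_simp
      have hzg : z ^ γ = z ^ (γ-1) * z := by
        rw [← Real.rpow_add_one (ne_of_gt hz0) (γ-1)]
        congr 1
        ring
      have hpow1 : (0:ℝ) ≤ z ^ (γ-1) := le_of_lt (Real.rpow_pos_of_pos hz0 _)
      have hmul := mul_le_mul_of_nonneg_left hkey hpow1
      rw [hzg]
      nlinarith [hmul]
  have hfin := hmono2 (Set.mem_Icc.mpr ⟨le_refl z1, h12⟩) (Set.mem_Icc.mpr ⟨h12, le_refl z2⟩) h12
  show rieszMean lam ρ z1 / z1 ^ γ ≤ rieszMean lam ρ z2 / z2 ^ γ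
  rw [hFr z1 h12, hFr z2 (le_refl z2)]
  exact hfin
end
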